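/- arXiv:2507.00035 — 14 statements merged into one kernel-verified Lean document; each statement's English description precedes it below -/
import Mathlib

section
/- Let K be a nonempty subset of a metric space (X,d) and let T, f, g : K → K be three self-maps such that the closure of T(K) is contained in f(K) ∩ g(K). Suppose there is a monotonically increasing continuous function ψ : [0,∞) → [0,∞) with ψ(t) < t for all t > 0 such that for all x, y ∈ K, d(Tx,Ty) ≤ ψ( min{ max{ d(fx,gy), d(Tx,fx), d(Ty,gy), (1/2)[d(Tx,gy) + d(Ty,fx)] }, max{ d(fy,gx), d(Tx,gx), d(Ty,fy), (1/2)[d(Tx,fy) + d(Ty,gx)] } } ). If at least one of the sets closure(T(K)), f(K), g(K) is a complete metric subspace, and both pairs (T,f) and (T,g) are weakly compatible, then there exists a unique point z ∈ K with Tz = z, fz = z and gz = z; that is, F(T) ∩ F(f) ∩ F(g) is a singleton. -/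
/-!
Pick a Jungck sequence `g x₁ = T x₀, f x₂ = T x₁, g x₃ = T x₂, …` in `K`, which exists because
`T K ⊆ f K ∩ g K`, and put `y = T ∘ x`. The contractive condition compares `y (p+1)` with
`y (q+1)` whenever `p + q` is odd. For consecutive terms it shows that `d(yₙ, yₙ₊₁)` decreases
to a fixed point of `ψ`, hence to `0`. Once these steps are small, a ball of radius `ε/2`
around a late term is invariant under the sequence, so `y` is Cauchy. Completeness of one of
the three sets gives a limit `z ∈ closure (T K)`, so `z = f u = g v`. Passing to the limit in
the contractive condition (continuity of `ψ` and `ψ t < t`) gives `T u = z = T v`; weak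
compatibility makes `z` a coincidence point of all three maps, and a last limit gives `T z = z`.
-/
open Filter Topology Set

section ContractionBound

variable {X : Type*} [PseudoMetricSpace X]

/-- `contractionBound (f x) (g y) (T x) (T y)` is the first term of the `min` in the
contractive condition. -/
noncomputable def contractionBound (a b a' b' : X) : ℝ :=
  max (max (dist a b) (dist a' a)) (max (dist b' b) ((dist a' b + dist b' a) / 2))

lemma contractionBound_nonneg (a b a' b' : X) : 0 ≤ contractionBound a b a' b' :=
  dist_nonneg.trans <| (le_max_left _ _).trans (le_max_left _ _)

lemma contractionBound_comm (a b a' b' : X) :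
    contractionBound b a b' a' = contractionBound a b a' b' := by
  simp only [contractionBound, dist_comm b a, add_comm (dist b' a), max_max_max_comm]

lemma contractionBound_diag (a b : X) : contractionBound a b a b = dist a b := by
  simp [contractionBound, dist_comm b a]

lemma contractionBound_self_left (a b : X) : contractionBound a a b a = dist b a := by
  simp [contractionBound]

lemma contractionBound_self_right (a b : X) : contractionBound a a a b = dist a b := by
  rw [← contractionBound_comm, contractionBound_self_left, dist_comm]

lemma contractionBound_le_max_dist (a b c : X) :
    contractionBound b a c b ≤ max (dist a b) (dist b c) := by
  have hca : dist c a ≤ dist b c + dist a b := by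
    linarith [dist_triangle_right c a b, dist_comm a b, dist_comm b c]
  simp only [contractionBound, dist_self, add_zero, dist_comm b a, dist_comm c b]
  refine max_le (max_le (le_max_left _ _) (le_max_right _ _)) (max_le (le_max_left _ _) ?_)
  linarith [le_max_left (dist a b) (dist b c), le_max_right (dist a b) (dist b c)]

lemma contractionBound_le_of_dist_le {a p p' q q' : X} {ρ δ : ℝ} (hp : dist p a ≤ δ)
    (hp' : dist p' a ≤ δ) (hq : dist q a ≤ ρ) (hq' : dist q q' ≤ δ) :
    contractionBound p q p' q' ≤ ρ + 2 * δ := by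
  have hδ : 0 ≤ δ := dist_nonneg.trans hp
  have hρ : 0 ≤ ρ := dist_nonneg.trans hq
  have hq'a : dist q' a ≤ δ + ρ := by linarith [dist_triangle q' q a, dist_comm q q']
  refine max_le (max_le ?_ ?_) (max_le ?_ ?_)
  · linarith [dist_triangle_right p q a]
  · linarith [dist_triangle_right p' p a]
  · linarith [dist_comm q q']
  · linarith [dist_triangle_right p' q a, dist_triangle_right q' p a]

lemma Filter.Tendsto.contractionBound {ι : Type*} {l : Filter ι} {a b a' b' : ι → X}
    {a₀ b₀ a₀' b₀' : X} (ha : Tendsto a l (𝓝 a₀)) (hb : Tendsto b l (𝓝 b₀))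
    (ha' : Tendsto a' l (𝓝 a₀')) (hb' : Tendsto b' l (𝓝 b₀')) :
    Tendsto (fun i => contractionBound (a i) (b i) (a' i) (b' i)) l
      (𝓝 (contractionBound a₀ b₀ a₀' b₀')) :=
  ((ha.dist hb).max (ha'.dist ha)).max
    ((hb'.dist hb).max (((ha'.dist hb).add (hb'.dist ha)).div_const 2))

end ContractionBound

section Comparison

variable {ψ : ℝ → ℝ}

lemma eq_zero_of_le_apply (hψlt : ∀ t > 0, ψ t < t) {t : ℝ} (ht : 0 ≤ t) (h : t ≤ ψ t) :
    t = 0 := by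
  by_contra hne
  exact (h.trans_lt (hψlt t (ht.lt_of_ne' hne))).false

lemma le_of_le_apply_max (hψlt : ∀ t > 0, ψ t < t) {s t : ℝ} (hs : 0 ≤ s)
    (h : t ≤ ψ (max s t)) : t ≤ s := by
  by_contra! hst
  rw [max_eq_right hst.le] at h
  have ht0 := eq_zero_of_le_apply hψlt (hs.trans hst.le) h
  linarith

lemma exists_pos_apply_add_lt_sub (hψcont : ContinuousOn ψ (Ici 0)) (hψlt : ∀ t > 0, ψ t < t)
    {c : ℝ} (hc : 0 < c) : ∃ δ > 0, ψ (c + δ) < c - δ := by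
  have hcont : ContinuousAt ψ c := hψcont.continuousAt (Ici_mem_nhds hc)
  have hlim : Tendsto (fun δ => ψ (c + δ) + δ) (𝓝 0) (𝓝 (ψ c + 0)) := by
    refine (hcont.tendsto.comp ?_).add tendsto_id
    simpa using (tendsto_const_nhds (x := c)).add (tendsto_id (x := 𝓝 (0 : ℝ)))
  have hev : ∀ᶠ δ in 𝓝[>] 0, ψ (c + δ) + δ < c :=
    nhdsWithin_le_nhds <| hlim.eventually (gt_mem_nhds (by simpa using hψlt c hc))
  obtain ⟨δ, hδ, hδ0⟩ := (hev.and self_mem_nhdsWithin).exists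
  exact ⟨δ, hδ0, by linarith⟩

lemma tendsto_zero_of_le_apply (hψcont : ContinuousOn ψ (Ici 0)) (hψlt : ∀ t > 0, ψ t < t)
    {u : ℕ → ℝ} (hu0 : ∀ n, 0 ≤ u n) (hanti : Antitone u) (hu : ∀ n, u (n + 1) ≤ ψ (u n)) :
    Tendsto u atTop (𝓝 0) := by
  have hbdd : BddBelow (range u) := ⟨0, by rintro _ ⟨n, rfl⟩; exact hu0 n⟩
  have hlim := tendsto_atTop_ciInf hanti hbdd
  have hr : 0 ≤ ⨅ n, u n := le_ciInf hu0
  have hψlim : Tendsto (fun n => ψ (u n)) atTop (𝓝 (ψ (⨅ n, u n))) :=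
    (hψcont _ hr).tendsto.comp (tendsto_nhdsWithin_iff.2 ⟨hlim, .of_forall hu0⟩)
  have hfix : (⨅ n, u n) ≤ ψ (⨅ n, u n) :=
    le_of_tendsto_of_tendsto' ((tendsto_add_atTop_iff_nat 1).2 hlim) hψlim hu
  rwa [eq_zero_of_le_apply hψlt hr hfix] at hlim

end Comparison

section OddContraction

variable {X : Type*} [PseudoMetricSpace X] {ψ : ℝ → ℝ} {y : ℕ → X}

lemma tendsto_dist_succ_of_odd_contraction (hψmono : MonotoneOn ψ (Ici 0))
    (hψcont : ContinuousOn ψ (Ici 0)) (hψlt : ∀ t > 0, ψ t < t)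
    (hy : ∀ p q, Odd (p + q) → dist (y (p + 1)) (y (q + 1)) ≤
      ψ (contractionBound (y p) (y q) (y (p + 1)) (y (q + 1)))) :
    Tendsto (fun n => dist (y n) (y (n + 1))) atTop (𝓝 0) := by
  have hstep : ∀ n, dist (y (n + 1)) (y (n + 2)) ≤
      ψ (max (dist (y n) (y (n + 1))) (dist (y (n + 1)) (y (n + 2)))) := fun n =>
    calc dist (y (n + 1)) (y (n + 2)) = dist (y (n + 1 + 1)) (y (n + 1)) := dist_comm _ _
      _ ≤ ψ (contractionBound (y (n + 1)) (y n) (y (n + 1 + 1)) (y (n + 1))) :=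
          hy (n + 1) n ⟨n, by omega⟩
      _ ≤ _ := hψmono (contractionBound_nonneg _ _ _ _) (le_max_of_le_left dist_nonneg)
          (contractionBound_le_max_dist _ _ _)
  have hanti n : dist (y (n + 1)) (y (n + 2)) ≤ dist (y n) (y (n + 1)) :=
    le_of_le_apply_max hψlt dist_nonneg (hstep n)
  refine tendsto_zero_of_le_apply hψcont hψlt (fun _ => dist_nonneg)
    (antitone_nat_of_succ_le hanti) fun n => ?_
  simpa only [max_eq_left (hanti n)] using hstep n

lemma cauchySeq_of_odd_contraction (hψmono : MonotoneOn ψ (Ici 0))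
    (hψcont : ContinuousOn ψ (Ici 0)) (hψlt : ∀ t > 0, ψ t < t)
    (hy : ∀ p q, Odd (p + q) → dist (y (p + 1)) (y (q + 1)) ≤
      ψ (contractionBound (y p) (y q) (y (p + 1)) (y (q + 1)))) :
    CauchySeq y := by
  refine Metric.cauchySeq_iff'.2 fun ε hε => ?_
  obtain ⟨δ, hδ, hψδ⟩ := exists_pos_apply_add_lt_sub hψcont hψlt (half_pos hε)
  obtain ⟨M, hM⟩ := ((tendsto_dist_succ_of_odd_contraction hψmono hψcont hψlt hy).eventually
    (ge_mem_nhds (half_pos hδ))).exists_forall_of_atTop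
  have hball k : dist (y (M + 1 + k)) (y (M + 1)) ≤ ε / 2 := by
    induction k with
    | zero => rw [add_zero, dist_self]; positivity
    | succ k ih =>
      obtain ⟨p, hp, hpk⟩ : ∃ p, (p = M ∨ p = M + 1) ∧ Odd (p + (M + 1 + k)) := by
        rcases Nat.even_or_odd (M + (M + 1 + k)) with h | h
        · exact ⟨M + 1, .inr rfl, by rw [add_right_comm]; exact h.add_one⟩
        · exact ⟨M, .inl rfl, h⟩
      have hnear : dist (y p) (y (M + 1)) ≤ δ / 2 ∧ dist (y (p + 1)) (y (M + 1)) ≤ δ / 2 := by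
        rcases hp with rfl | rfl
        · exact ⟨hM p le_rfl, by rw [dist_self]; positivity⟩
        · exact ⟨by rw [dist_self]; positivity, by rw [dist_comm]; exact hM _ (by omega)⟩
      have hbound : contractionBound (y p) (y (M + 1 + k)) (y (p + 1)) (y (M + 1 + k + 1)) ≤
          ε / 2 + δ :=
        (contractionBound_le_of_dist_le hnear.1 hnear.2 ih (hM _ (by omega))).trans_eq (by ring)
      calc dist (y (M + 1 + (k + 1))) (y (M + 1))
          ≤ dist (y (p + 1)) (y (M + 1 + k + 1)) + dist (y (p + 1)) (y (M + 1)) :=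
            dist_triangle_left _ _ _
        _ ≤ ψ (ε / 2 + δ) + δ / 2 :=
            add_le_add ((hy p _ hpk).trans (hψmono (contractionBound_nonneg _ _ _ _)
              (mem_Ici.2 (by positivity)) hbound)) hnear.2
        _ ≤ ε / 2 := by linarith
  refine ⟨M + 1, fun n hn => ?_⟩
  obtain ⟨k, rfl⟩ := Nat.exists_eq_add_of_le hn
  exact (hball k).trans_lt (half_lt_self hε)

end OddContraction

lemma dist_le_apply_contractionBound_of_tendsto {X : Type*} [PseudoMetricSpace X]
    {ψ : ℝ → ℝ} (hψcont : ContinuousOn ψ (Ici 0)) {ι : Type*} {l : Filter ι} [l.NeBot]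
    {a b a' b' : ι → X} {a₀ b₀ a₀' b₀' : X}
    (ha : Tendsto a l (𝓝 a₀)) (hb : Tendsto b l (𝓝 b₀)) (ha' : Tendsto a' l (𝓝 a₀'))
    (hb' : Tendsto b' l (𝓝 b₀'))
    (h : ∀ i, dist (a' i) (b' i) ≤ ψ (contractionBound (a i) (b i) (a' i) (b' i))) :
    dist a₀' b₀' ≤ ψ (contractionBound a₀ b₀ a₀' b₀') :=
  le_of_tendsto_of_tendsto' (ha'.dist hb')
    ((hψcont _ (contractionBound_nonneg _ _ _ _)).tendsto.comp <| tendsto_nhdsWithin_iff.2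
      ⟨ha.contractionBound hb ha' hb', .of_forall fun _ => contractionBound_nonneg _ _ _ _⟩) h

lemma eq_of_dist_le_apply {X : Type*} [MetricSpace X] {ψ : ℝ → ℝ} (hψlt : ∀ t > 0, ψ t < t)
    {a b : X} (h : dist a b ≤ ψ (dist a b)) : a = b :=
  dist_eq_zero.1 (eq_zero_of_le_apply hψlt dist_nonneg h)

lemma CauchySeq.exists_tendsto_of_subseq_mem {X : Type*} [UniformSpace X] {u : ℕ → X}
    (hu : CauchySeq u) {φ : ℕ → ℕ} (hφ : Tendsto φ atTop atTop) {s : Set X} (hs : IsComplete s)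
    (h : ∀ n, u (φ n) ∈ s) : ∃ z, Tendsto u atTop (𝓝 z) := by
  obtain ⟨z, -, hz⟩ := cauchySeq_tendsto_of_isComplete hs h (hu.comp_tendsto hφ)
  exact ⟨z, tendsto_nhds_of_cauchySeq_of_subseq hu hφ hz⟩

section JungckSeq

variable {X : Type*}

structure IsJungckSeq (K : Set X) (T f g : X → X) (x : ℕ → X) : Prop where
  mem : ∀ n, x n ∈ K
  apply_even : ∀ n, Even n → g (x (n + 1)) = T (x n)
  apply_odd : ∀ n, Odd n → f (x (n + 1)) = T (x n)

lemma exists_isJungckSeq {K : Set X} {T f g : X → X} {x₀ : X} (hx₀ : x₀ ∈ K)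
    (hf : T '' K ⊆ f '' K) (hg : T '' K ⊆ g '' K) : ∃ x, IsJungckSeq K T f g x := by
  have hstep : ∀ n : ℕ, ∀ a ∈ K, ∃ b ∈ K, (if Even n then g else f) b = T a := by
    intro n a ha
    split_ifs
    · exact hg ⟨a, ha, rfl⟩
    · exact hf ⟨a, ha, rfl⟩
  choose! S hSK hS using hstep
  let x : ℕ → X := fun n => Nat.rec x₀ S n
  have hxK : ∀ n, x n ∈ K := fun n => Nat.rec hx₀ (fun n ih => hSK n _ ih) n
  refine ⟨x, hxK, fun n hn => ?_, fun n hn => ?_⟩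
  · simpa [hn] using hS n _ (hxK n)
  · simpa [Nat.not_even_iff_odd.2 hn] using hS n _ (hxK n)

namespace IsJungckSeq

variable {K : Set X} {T f g : X → X} {x : ℕ → X}

lemma exists_tendsto [UniformSpace X] (hx : IsJungckSeq K T f g x) (hy : CauchySeq (T ∘ x))
    (hcomplete : IsComplete (closure (T '' K)) ∨ IsComplete (f '' K) ∨ IsComplete (g '' K)) :
    ∃ z, Tendsto (T ∘ x) atTop (𝓝 z) := by
  have h2 := strictMono_mul_left_of_pos (two_pos (α := ℕ))
  rcases hcomplete with hC | hC | hC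
  · exact hy.exists_tendsto_of_subseq_mem tendsto_id hC fun n =>
      subset_closure ⟨x n, hx.mem n, rfl⟩
  · exact hy.exists_tendsto_of_subseq_mem (h2.add_const 1).tendsto_atTop hC fun n =>
      ⟨x (2 * n + 1 + 1), hx.mem _, hx.apply_odd _ (odd_two_mul_add_one n)⟩
  · exact hy.exists_tendsto_of_subseq_mem h2.tendsto_atTop hC fun n =>
      ⟨x (2 * n + 1), hx.mem _, hx.apply_even _ (even_two_mul n)⟩

variable [PseudoMetricSpace X] {ψ : ℝ → ℝ}

lemma odd_contraction (hx : IsJungckSeq K T f g x)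
    (hkey : ∀ a ∈ K, ∀ b ∈ K, dist (T a) (T b) ≤ ψ (contractionBound (f a) (g b) (T a) (T b)))
    (p q : ℕ) (hpq : Odd (p + q)) :
    dist (T (x (p + 1))) (T (x (q + 1))) ≤
      ψ (contractionBound (T (x p)) (T (x q)) (T (x (p + 1))) (T (x (q + 1)))) := by
  have key p q (hp : Odd p) (hq : Even q) :
      dist (T (x (p + 1))) (T (x (q + 1))) ≤
        ψ (contractionBound (T (x p)) (T (x q)) (T (x (p + 1))) (T (x (q + 1)))) := by
    simpa only [hx.apply_odd p hp, hx.apply_even q hq] using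
      hkey _ (hx.mem (p + 1)) _ (hx.mem (q + 1))
  rcases Nat.even_or_odd p with hp | hp
  · rw [dist_comm, ← contractionBound_comm]
    exact key q p ((Nat.odd_add'.1 hpq).2 hp) hp
  · exact key p q hp ((Nat.odd_add.1 hpq).1 hp)

lemma dist_le_apply_left (hx : IsJungckSeq K T f g x) (hψcont : ContinuousOn ψ (Ici 0))
    (hkey : ∀ a ∈ K, ∀ b ∈ K, dist (T a) (T b) ≤ ψ (contractionBound (f a) (g b) (T a) (T b)))
    {z : X} (hz : Tendsto (T ∘ x) atTop (𝓝 z)) {a : X} (ha : a ∈ K) :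
    dist (T a) z ≤ ψ (contractionBound (f a) z (T a) z) := by
  have h2 := strictMono_mul_left_of_pos (two_pos (α := ℕ))
  refine dist_le_apply_contractionBound_of_tendsto hψcont tendsto_const_nhds
    (hz.comp h2.tendsto_atTop) tendsto_const_nhds (hz.comp (h2.add_const 1).tendsto_atTop)
    fun n => ?_
  simpa only [Function.comp_apply, hx.apply_even _ (even_two_mul n)] using
    hkey a ha _ (hx.mem (2 * n + 1))

lemma dist_le_apply_right (hx : IsJungckSeq K T f g x) (hψcont : ContinuousOn ψ (Ici 0))
    (hkey : ∀ a ∈ K, ∀ b ∈ K, dist (T a) (T b) ≤ ψ (contractionBound (f a) (g b) (T a) (T b)))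
    {z : X} (hz : Tendsto (T ∘ x) atTop (𝓝 z)) {b : X} (hb : b ∈ K) :
    dist z (T b) ≤ ψ (contractionBound z (g b) z (T b)) := by
  have h2 := strictMono_mul_left_of_pos (two_pos (α := ℕ))
  refine dist_le_apply_contractionBound_of_tendsto hψcont (hz.comp (h2.add_const 1).tendsto_atTop)
    tendsto_const_nhds (hz.comp ((h2.add_const 1).add_const 1).tendsto_atTop) tendsto_const_nhds
    fun n => ?_
  simpa only [Function.comp_apply, hx.apply_odd _ (odd_two_mul_add_one n)] using
    hkey _ (hx.mem (2 * n + 1 + 1)) b hb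

end IsJungckSeq

end JungckSeq

theorem common_fixed_point_three_maps_general
    {X : Type*} [MetricSpace X] (K : Set X) (hK : K.Nonempty)
    (T f g : X → X)
    (hf : Set.MapsTo f K K)
    (hsub : closure (T '' K) ⊆ f '' K ∩ g '' K)
    (ψ : ℝ → ℝ)
    (hψmono : MonotoneOn ψ (Set.Ici 0))
    (hψcont : ContinuousOn ψ (Set.Ici 0))
    (hψlt : ∀ t > (0 : ℝ), ψ t < t)
    (hcontr : ∀ x ∈ K, ∀ y ∈ K,
      dist (T x) (T y) ≤ ψ (min
        (max (max (dist (f x) (g y)) (dist (T x) (f x)))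
          (max (dist (T y) (g y)) ((dist (T x) (g y) + dist (T y) (f x)) / 2)))
        (max (max (dist (f y) (g x)) (dist (T x) (g x)))
          (max (dist (T y) (f y)) ((dist (T x) (f y) + dist (T y) (g x)) / 2)))))
    (hcomplete : IsComplete (closure (T '' K)) ∨ IsComplete (f '' K) ∨ IsComplete (g '' K))
    (hwcf : ∀ x ∈ K, T x = f x → T (f x) = f (T x))
    (hwcg : ∀ x ∈ K, T x = g x → T (g x) = g (T x)) :
    ∃! z, z ∈ K ∧ T z = z ∧ f z = z ∧ g z = z := by
  have hkey a (ha : a ∈ K) b (hb : b ∈ K) :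
      dist (T a) (T b) ≤ ψ (contractionBound (f a) (g b) (T a) (T b)) :=
    (hcontr a ha b hb).trans <|
      hψmono (mem_Ici.2 (by positivity)) (contractionBound_nonneg _ _ _ _) (min_le_left _ _)
  obtain ⟨x₀, hx₀⟩ := hK
  have hTK : T '' K ⊆ f '' K ∩ g '' K := subset_closure.trans hsub
  obtain ⟨x, hx⟩ := exists_isJungckSeq hx₀ (fun _ h => (hTK h).1) (fun _ h => (hTK h).2)
  obtain ⟨z, hz⟩ := hx.exists_tendsto
    (cauchySeq_of_odd_contraction hψmono hψcont hψlt (hx.odd_contraction hkey)) hcomplete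
  obtain ⟨⟨u, hu, huz⟩, ⟨v, hv, hvz⟩⟩ :=
    hsub (mem_closure_of_tendsto hz (.of_forall fun n => ⟨x n, hx.mem n, rfl⟩))
  have hTu : T u = z := eq_of_dist_le_apply hψlt <| by
    simpa only [huz, contractionBound_self_left] using hx.dist_le_apply_left hψcont hkey hz hu
  have hTv : T v = z := Eq.symm <| eq_of_dist_le_apply hψlt <| by
    simpa only [hvz, contractionBound_self_right] using hx.dist_le_apply_right hψcont hkey hz hv
  have hzK : z ∈ K := huz ▸ hf hu
  have hfz : T z = f z := by simpa only [huz, hTu] using hwcf u hu (hTu.trans huz.symm)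
  have hgz : T z = g z := by simpa only [hvz, hTv] using hwcg v hv (hTv.trans hvz.symm)
  have hTz : T z = z := eq_of_dist_le_apply hψlt <| by
    simpa only [← hfz, contractionBound_diag] using hx.dist_le_apply_left hψcont hkey hz hzK
  refine ⟨z, ⟨hzK, hTz, hfz ▸ hTz, hgz ▸ hTz⟩, fun w ⟨hw, hTw, hfw, _⟩ => ?_⟩
  refine eq_of_dist_le_apply hψlt ?_
  simpa only [hTw, hfw, ← hgz, hTz, contractionBound_diag] using hkey w hw z hzK

/-- **Main Theorem.** Common fixed point for three weakly compatible self-maps of a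
subset `K` of a metric space, under a `ψ`-contractive condition, assuming one of
`closure (T '' K)`, `f '' K`, `g '' K` is complete. -/
theorem common_fixed_point_three_maps
    {X : Type*} [MetricSpace X] (K : Set X) (hK : K.Nonempty)
    (T f g : X → X)
    (hT : Set.MapsTo T K K) (hf : Set.MapsTo f K K) (hg : Set.MapsTo g K K)
    (hsub : closure (T '' K) ⊆ f '' K ∩ g '' K)
    (ψ : ℝ → ℝ)
    (hψmono : MonotoneOn ψ (Set.Ici 0))
    (hψcont : ContinuousOn ψ (Set.Ici 0))
    (hψnonneg : ∀ t ≥ (0 : ℝ), 0 ≤ ψ t)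
    (hψlt : ∀ t > (0 : ℝ), ψ t < t)
    (hcontr : ∀ x ∈ K, ∀ y ∈ K,
      dist (T x) (T y) ≤ ψ (min
        (max (max (dist (f x) (g y)) (dist (T x) (f x)))
          (max (dist (T y) (g y)) ((dist (T x) (g y) + dist (T y) (f x)) / 2)))
        (max (max (dist (f y) (g x)) (dist (T x) (g x)))
          (max (dist (T y) (f y)) ((dist (T x) (f y) + dist (T y) (g x)) / 2)))))
    (hcomplete : IsComplete (closure (T '' K)) ∨ IsComplete (f '' K) ∨ IsComplete (g '' K))
    (hwcf : ∀ x ∈ K, T x = f x → T (f x) = f (T x))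
    (hwcg : ∀ x ∈ K, T x = g x → T (g x) = g (T x)) :
    ∃! z, z ∈ K ∧ T z = z ∧ f z = z ∧ g z = z :=
  common_fixed_point_three_maps_general K hK T f g hf hsub ψ hψmono hψcont hψlt hcontr hcomplete
    hwcf hwcg
end

section
/- Let K be a nonempty subset of a metric space (X,d) and let T, f, g : K → K be three self-maps such that the closure of T(K) is contained in f(K) ∩ g(K). Suppose there is an upper semicontinuous function φ : [0,∞) → [0,∞) with φ(t) < t for all t > 0 such that for all x, y ∈ K, d(Tx,Ty) ≤ φ( min{ max{ d(fx,gy), d(Tx,fx), d(Ty,gy), (1/2)[d(Tx,gy) + d(Ty,fx)] }, max{ d(fy,gx), d(Tx,gx), d(Ty,fy), (1/2)[d(Tx,fy) + d(Ty,gx)] } } ). If at least one of the sets closure(T(K)), f(K), g(K) is a complete metric subspace, and both pairs (T,f) and (T,g) are weakly compatible, then F(T) ∩ F(f) ∩ F(g) is a singleton. -/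
/-!
Since `T(K) ⊆ f(K) ∩ g(K)`, there is a sequence `xₙ` in `K` with `g x_{n+1} = T xₙ` for even `n`
and `f x_{n+1} = T xₙ` for odd `n`. For `yₙ = T xₙ` and indices `i, j` of opposite parity, the
contractive condition at `(x_{i+1}, x_{j+1})` bounds `d(y_{i+1}, y_{j+1})` by `t` and by `φ(t)`,
where `t` is at most a maximum of distances among `y_i, y_{i+1}, y_j, y_{j+1}`. As `φ(t) < t`, the
distances `d(yₙ, y_{n+1})` decrease, and upper semicontinuity of `φ` forces their limit to be `0`;
likewise for the limit `ε` of the distances `d(y_{m_k}, y_k)`, where `(yₙ)` first leaves the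
`ε`-ball around `y_k`, which would exist if `(yₙ)` were not Cauchy. So `yₙ → z = f u = g v`; the
same limit argument gives `T u = T v = z`, weak compatibility gives `T z = f z = g z`, and the
contractive condition at `(z, v)` gives `T z = z`, and at two common fixed points shows they
coincide.
-/

open Filter Topology

section ControlFunction

variable {φ : ℝ → ℝ}

theorem nonpos_of_le_apply_self (hφlt : ∀ t > 0, φ t < t) {t : ℝ} (h : t ≤ φ t) : t ≤ 0 := by
  by_contra! ht
  exact lt_irrefl t (h.trans_lt (hφlt t ht))

theorem nonpos_of_tendsto_of_le_apply {ι : Type*} {l : Filter ι} [l.NeBot]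
    (hφusc : UpperSemicontinuousOn φ (Set.Ici 0)) (hφlt : ∀ t > 0, φ t < t)
    {d t s : ι → ℝ} {c : ℝ} (hd : Tendsto d l (𝓝 c)) (hs : Tendsto s l (𝓝 c))
    (hdφ : ∀ i, d i ≤ φ (t i)) (hdt : ∀ i, d i ≤ t i) (hts : ∀ i, t i ≤ s i) : c ≤ 0 := by
  by_contra! hc
  have ht : Tendsto t l (𝓝 c) := tendsto_of_tendsto_of_tendsto_of_le_of_le hd hs hdt hts
  obtain ⟨r, hφr, hrc⟩ := exists_between (hφlt c hc)
  have hφc : ∀ᶠ u in 𝓝 c, φ u < r := by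
    simpa only [nhdsWithin_eq_nhds.2 (Ici_mem_nhds hc)] using hφusc c hc.le r hφr
  obtain ⟨i, hφi, hdi⟩ := ((ht.eventually hφc).and (hd.eventually (eventually_gt_nhds hrc))).exists
  linarith [hdφ i]

theorem tendsto_zero_of_exists_le_apply (hφusc : UpperSemicontinuousOn φ (Set.Ici 0))
    (hφlt : ∀ t > 0, φ t < t) {D : ℕ → ℝ} (hD : ∀ n, 0 ≤ D n)
    (h : ∀ n, ∃ t ≤ max (D n) (D (n + 1)), D (n + 1) ≤ φ t ∧ D (n + 1) ≤ t) :
    Tendsto D atTop (𝓝 0) := by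
  choose t htD hDφ hDt using h
  have hanti : Antitone D := by
    refine antitone_nat_of_succ_le fun n => by_contra fun hlt => ?_
    have htn : t n ≤ D (n + 1) := (htD n).trans_eq (max_eq_right (not_le.1 hlt).le)
    have := nonpos_of_le_apply_self hφlt (htn.trans (hDφ n))
    linarith [hDt n, hD n, not_le.1 hlt]
  have hc := tendsto_atTop_ciInf hanti ⟨0, Set.forall_mem_range.2 hD⟩
  have hc₀ : 0 ≤ ⨅ n, D n := ge_of_tendsto' hc hD
  have hc₁ : ⨅ n, D n ≤ 0 := nonpos_of_tendsto_of_le_apply hφusc hφlt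
    (hc.comp (tendsto_add_atTop_nat 1)) hc hDφ hDt
    fun n => (htD n).trans_eq (max_eq_left (hanti n.le_succ))
  rwa [le_antisymm hc₁ hc₀] at hc

end ControlFunction

section PseudoMetric

variable {X : Type*} [PseudoMetricSpace X]

theorem exists_tendsto_dist_of_not_cauchySeq {y : ℕ → X}
    (hD : Tendsto (fun n => dist (y n) (y (n + 1))) atTop (𝓝 0)) (hy : ¬CauchySeq y) :
    ∃ ε > 0, ∃ m : ℕ → ℕ, (∀ k, k ≤ m k) ∧
      Tendsto (fun k => dist (y (m k)) (y k)) atTop (𝓝 ε) := by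
  rw [Metric.cauchySeq_iff'] at hy
  push Not at hy
  obtain ⟨ε, hε, hfar⟩ := hy
  have hexit : ∀ k, ∃ p, dist (y (k + p)) (y k) < ε ∧ ε ≤ dist (y (k + p + 1)) (y k) := by
    intro k
    obtain ⟨n, hkn, hn⟩ := hfar k
    simpa only [not_le, ← add_assoc] using Nat.exists_not_and_succ_of_not_zero_of_exists
      (p := fun p => ε ≤ dist (y (k + p)) (y k)) (by simpa using hε)
      ⟨n - k, by rwa [Nat.add_sub_cancel' hkn]⟩
  choose p hp hp' using hexit
  refine ⟨ε, hε, fun k => k + p k + 1,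
    fun k => (Nat.le_add_right k (p k)).trans (Nat.le_succ _), ?_⟩
  have hle : ∀ k, dist (y (k + p k + 1)) (y k) ≤ ε + dist (y (k + p k)) (y (k + p k + 1)) :=
    fun k => by linarith [dist_triangle_left (y (k + p k + 1)) (y k) (y (k + p k)), hp k]
  refine tendsto_of_tendsto_of_tendsto_of_le_of_le tendsto_const_nhds ?_ hp' hle
  simpa using tendsto_const_nhds.add
    (hD.comp (tendsto_atTop_mono (fun k => Nat.le_add_right k (p k)) tendsto_id))

noncomputable def ciricBound {α : Type*} (T f g : α → X) (a b : α) : ℝ :=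
  max (max (dist (f a) (g b)) (dist (T a) (f a)))
    (max (dist (T b) (g b)) ((dist (T a) (g b) + dist (T b) (f a)) / 2))

theorem ciricBound_comm {α : Type*} (T f : α → X) (a b : α) :
    ciricBound T f f a b = ciricBound T f f b a := by
  rw [ciricBound, ciricBound, dist_comm (f a), add_comm (dist (T a) (f b)), max_max_max_comm]

theorem dist_le_three_mul_ciricBound {α : Type*} (T f g : α → X) (a b : α) :
    dist (T a) (T b) ≤ 3 * ciricBound T f g a b := by
  have h₁ : dist (f a) (g b) ≤ ciricBound T f g a b := le_max_of_le_left (le_max_left _ _)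
  have h₂ : dist (T a) (f a) ≤ ciricBound T f g a b := le_max_of_le_left (le_max_right _ _)
  have h₃ : dist (T b) (g b) ≤ ciricBound T f g a b := le_max_of_le_right (le_max_left _ _)
  linarith [dist_triangle4 (T a) (f a) (g b) (T b), dist_comm (g b) (T b)]

theorem ciricBound_succ_le (y : ℕ → X) (n : ℕ) :
    ciricBound (fun n => y (n + 1)) y y n (n + 1) ≤
      max (dist (y n) (y (n + 1))) (dist (y (n + 1)) (y (n + 2))) := by
  have h₁ := le_max_left (dist (y n) (y (n + 1))) (dist (y (n + 1)) (y (n + 2)))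
  have h₂ := le_max_right (dist (y n) (y (n + 1))) (dist (y (n + 1)) (y (n + 2)))
  have htri := dist_triangle (y (n + 2)) (y (n + 1)) (y n)
  simp only [ciricBound, dist_self, zero_add, dist_comm (y (n + 1)) (y n),
    dist_comm (y (n + 1 + 1)) (y (n + 1))] at htri ⊢
  exact max_le (max_le h₁ h₁) (max_le h₂ (by linarith))

theorem ciricBound_le (y : ℕ → X) (i j : ℕ) :
    ciricBound (fun n => y (n + 1)) y y i j ≤
      dist (y i) (y j) + dist (y i) (y (i + 1)) + dist (y j) (y (j + 1)) := by
  have h₁ := dist_triangle (y (i + 1)) (y i) (y j)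
  have h₂ := dist_triangle (y (j + 1)) (y j) (y i)
  have hi : 0 ≤ dist (y i) (y (i + 1)) := dist_nonneg
  have hj : 0 ≤ dist (y j) (y (j + 1)) := dist_nonneg
  have hij : 0 ≤ dist (y i) (y j) := dist_nonneg
  simp only [ciricBound, dist_comm (y (i + 1)) (y i), dist_comm (y (j + 1)) (y j),
    dist_comm (y j) (y i)] at h₁ h₂ ⊢
  refine max_le (max_le ?_ ?_) (max_le ?_ ?_) <;> linarith

variable {φ : ℝ → ℝ}

theorem cauchySeq_of_forall_odd_add (hφusc : UpperSemicontinuousOn φ (Set.Ici 0))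
    (hφlt : ∀ t > 0, φ t < t) {y : ℕ → X}
    (h : ∀ i j, Odd (i + j) → ∃ t ≤ ciricBound (fun n => y (n + 1)) y y i j,
      dist (y (i + 1)) (y (j + 1)) ≤ φ t ∧ dist (y (i + 1)) (y (j + 1)) ≤ t) :
    CauchySeq y := by
  set D : ℕ → ℝ := fun n => dist (y n) (y (n + 1))
  have hD : Tendsto D atTop (𝓝 0) := by
    refine tendsto_zero_of_exists_le_apply hφusc hφlt (fun n => dist_nonneg) fun n => ?_
    obtain ⟨t, ht, hφt, hdt⟩ := h n (n + 1) (by simp)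
    exact ⟨t, ht.trans (ciricBound_succ_le y n), hφt, hdt⟩
  by_contra hy
  obtain ⟨ε, hε, m, hkm, hm⟩ := exists_tendsto_dist_of_not_cauchySeq hD hy
  -- shift `m k` by at most one to make `i k + k` odd; this perturbs distances by terms of `D`
  set i : ℕ → ℕ := fun k => if Odd (m k + k) then m k else m k + 1
  have hodd : ∀ k, Odd (i k + k) := fun k => by
    by_cases hk : Odd (m k + k)
    · simpa only [i, if_pos hk] using hk
    · simpa only [i, if_neg hk, add_right_comm _ 1, Nat.odd_add_one] using hk
  have hDi : Tendsto (fun k => D (i k)) atTop (𝓝 0) := by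
    refine hD.comp (tendsto_atTop_mono (fun k => (hkm k).trans ?_) tendsto_id)
    by_cases hk : Odd (m k + k) <;> simp [i, hk]
  have he : Tendsto (fun k => dist (y (i k)) (y k)) atTop (𝓝 ε) := by
    refine hm.congr_dist (squeeze_zero (fun _ => dist_nonneg) (fun k => ?_)
      (hD.comp (tendsto_atTop_mono hkm tendsto_id)))
    by_cases hk : Odd (m k + k)
    · simp only [i, if_pos hk, dist_self]
      exact dist_nonneg
    · simp only [i, if_neg hk]
      exact dist_dist_dist_le_left (y (m k)) (y (m k + 1)) (y k)
  have hd : Tendsto (fun k => dist (y (i k + 1)) (y (k + 1))) atTop (𝓝 ε) :=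
    he.congr_dist (squeeze_zero (fun _ => dist_nonneg) (fun k => dist_dist_dist_le _ _ _ _)
      (by simpa using hDi.add hD))
  choose t ht hφt hdt using fun k => h (i k) k (hodd k)
  have hs : Tendsto (fun k => dist (y (i k)) (y k) + D (i k) + D k) atTop (𝓝 ε) := by
    simpa using (he.add hDi).add hD
  exact hε.not_ge (nonpos_of_tendsto_of_le_apply hφusc hφlt hd hs hφt hdt
    fun k => (ht k).trans (ciricBound_le y _ _))

end PseudoMetric

theorem exists_seq_mem_of_forall_exists {α : Type*} {K : Set α} (hK : K.Nonempty)
    {R : ℕ → α → α → Prop} (h : ∀ n, ∀ a ∈ K, ∃ b ∈ K, R n a b) :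
    ∃ x : ℕ → α, (∀ n, x n ∈ K) ∧ ∀ n, R n (x n) (x (n + 1)) := by
  obtain ⟨x₀, hx₀⟩ := hK
  choose F hFK hFR using h
  let x : ℕ → K := fun n => Nat.rec ⟨x₀, hx₀⟩ (fun n a => ⟨F n a a.2, hFK n a a.2⟩) n
  refine ⟨fun n => (x n).1, fun n => (x n).2, fun n => ?_⟩
  exact hFR n (x n).1 (x n).2

theorem exists_seq_alternating {X : Type*} {K : Set X} {T f g : X → X} (hK : K.Nonempty)
    (hsub : T '' K ⊆ f '' K ∩ g '' K) :
    ∃ x : ℕ → X, (∀ n, x n ∈ K) ∧ (∀ n, Odd n → f (x (n + 1)) = T (x n)) ∧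
      ∀ n, Even n → g (x (n + 1)) = T (x n) := by
  obtain ⟨x, hxK, hx⟩ := exists_seq_mem_of_forall_exists hK
    (R := fun n a b => (Odd n → f b = T a) ∧ (Even n → g b = T a)) fun n a ha => by
      obtain ⟨⟨b, hb, hfb⟩, ⟨c, hc, hgc⟩⟩ := hsub ⟨a, ha, rfl⟩
      rcases Nat.even_or_odd n with hn | hn
      · exact ⟨c, hc, fun h => absurd h (Nat.not_odd_iff_even.2 hn), fun _ => hgc⟩
      · exact ⟨b, hb, fun _ => hfb, fun h => absurd hn (Nat.not_odd_iff_even.2 h)⟩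
  exact ⟨x, hxK, fun n => (hx n).1, fun n => (hx n).2⟩

section Contraction

variable {X : Type*} [PseudoMetricSpace X] {φ : ℝ → ℝ} {K : Set X} {T f g : X → X}

/-- The paper's second maximum is `ciricBound T g f x y` up to the order in `dist (g x) (f y)`. -/
def IsCiricContraction (φ : ℝ → ℝ) (K : Set X) (T f g : X → X) : Prop :=
  ∀ x ∈ K, ∀ y ∈ K, dist (T x) (T y) ≤ φ (min (ciricBound T f g x y) (ciricBound T g f x y))

namespace IsCiricContraction

theorem symm (h : IsCiricContraction φ K T f g) : IsCiricContraction φ K T g f :=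
  fun x hx y hy => min_comm (ciricBound T f g x y) _ ▸ h x hx y hy

/-- A positive bound `t` is handled by `φ t < t`; a zero bound forces `T x = T y` by the triangle
inequality, whatever `φ 0` is. -/
theorem dist_le (h : IsCiricContraction φ K T f g) (hφlt : ∀ t > 0, φ t < t) {x y : X}
    (hx : x ∈ K) (hy : y ∈ K) :
    dist (T x) (T y) ≤ min (ciricBound T f g x y) (ciricBound T g f x y) := by
  rcases le_or_gt (min (ciricBound T f g x y) (ciricBound T g f x y)) 0 with ht | ht
  · have h₁ := dist_le_three_mul_ciricBound T f g x y
    have h₂ := dist_le_three_mul_ciricBound T g f x y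
    rcases min_cases (ciricBound T f g x y) (ciricBound T g f x y) with ⟨he, -⟩ | ⟨he, -⟩ <;>
      rw [he] at ht ⊢ <;> linarith
  · exact (h x hx y hy).trans (hφlt _ ht).le

theorem cauchySeq (h : IsCiricContraction φ K T f g)
    (hφusc : UpperSemicontinuousOn φ (Set.Ici 0)) (hφlt : ∀ t > 0, φ t < t) {x : ℕ → X}
    (hx : ∀ n, x n ∈ K) (hfx : ∀ n, Odd n → f (x (n + 1)) = T (x n))
    (hgx : ∀ n, Even n → g (x (n + 1)) = T (x n)) :
    CauchySeq fun n => T (x n) := by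
  have key : ∀ i j, Odd i → Even j →
      ∃ t ≤ ciricBound (fun n => T (x (n + 1))) (fun n => T (x n)) (fun n => T (x n)) i j,
        dist (T (x (i + 1))) (T (x (j + 1))) ≤ φ t ∧
          dist (T (x (i + 1))) (T (x (j + 1))) ≤ t := by
    intro i j hi hj
    refine ⟨_, (min_le_left _ _).trans_eq ?_, h _ (hx _) _ (hx _), h.dist_le hφlt (hx _) (hx _)⟩
    simp only [ciricBound, hfx i hi, hgx j hj]
  refine cauchySeq_of_forall_odd_add hφusc hφlt fun i j hij => ?_
  rcases Nat.even_or_odd i with hi | hi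
  · obtain ⟨t, ht, hφt, hdt⟩ := key j i ((Nat.odd_add'.1 hij).2 hi) hi
    rw [dist_comm] at hφt hdt
    exact ⟨t, ht.trans_eq (ciricBound_comm _ _ _ _), hφt, hdt⟩
  · exact key i j hi ((Nat.odd_add.1 hij).1 hi)

end IsCiricContraction

end Contraction

section MetricContraction

variable {X : Type*} [MetricSpace X] {φ : ℝ → ℝ} {K : Set X} {T f g : X → X}

namespace IsCiricContraction

theorem apply_eq_apply (h : IsCiricContraction φ K T f g) (hφlt : ∀ t > 0, φ t < t) {p q : X}
    (hp : p ∈ K) (hq : q ∈ K) (hfp : f p = T p) (hgq : g q = T q) : T p = T q := by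
  have hB : ciricBound T f g p q = dist (T p) (T q) := by
    rw [ciricBound, hfp, hgq, dist_self, dist_self, dist_comm (T q) (T p), add_self_div_two,
      max_eq_left dist_nonneg, max_eq_right dist_nonneg, max_self]
  have htd := (min_le_left (ciricBound T f g p q) (ciricBound T g f p q)).trans_eq hB
  exact dist_le_zero.1 ((h.dist_le hφlt hp hq).trans
    (nonpos_of_le_apply_self hφlt (htd.trans (h p hp q hq))))

theorem apply_eq_of_tendsto (h : IsCiricContraction φ K T f g)
    (hφusc : UpperSemicontinuousOn φ (Set.Ici 0)) (hφlt : ∀ t > 0, φ t < t)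
    {ι : Type*} {l : Filter ι} [l.NeBot] {a : ι → X} {b z : X} (ha : ∀ i, a i ∈ K) (hb : b ∈ K)
    (hTa : Tendsto (fun i => T (a i)) l (𝓝 z)) (hfa : Tendsto (fun i => f (a i)) l (𝓝 z))
    (hgb : g b = z) : T b = z := by
  have hs : Tendsto (fun i => ciricBound T f g (a i) b) l (𝓝 (dist (T b) z)) := by
    have hz := tendsto_const_nhds (x := z) (f := l)
    have := ((hfa.dist hz).max (hTa.dist hfa)).max ((tendsto_const_nhds (x := dist (T b) z)).max
      (((hTa.dist hz).add ((tendsto_const_nhds (x := T b)).dist hfa)).div_const 2))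
    rw [dist_self, zero_add, max_self, max_eq_left (half_le_self dist_nonneg),
      max_eq_right dist_nonneg] at this
    simpa only [ciricBound, hgb] using this
  have hd : Tendsto (fun i => dist (T (a i)) (T b)) l (𝓝 (dist (T b) z)) := by
    simpa only [dist_comm z] using hTa.dist (tendsto_const_nhds (x := T b))
  exact dist_le_zero.1 (nonpos_of_tendsto_of_le_apply hφusc hφlt hd hs (fun i => h _ (ha i) b hb)
    (fun i => h.dist_le hφlt (ha i) hb) fun i => min_le_left _ _)

theorem apply_eq_of_tendsto_seq (h : IsCiricContraction φ K T f g)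
    (hφusc : UpperSemicontinuousOn φ (Set.Ici 0)) (hφlt : ∀ t > 0, φ t < t) {x : ℕ → X}
    (hx : ∀ n, x n ∈ K) (hfx : ∀ n, Odd n → f (x (n + 1)) = T (x n))
    (hgx : ∀ n, Even n → g (x (n + 1)) = T (x n)) {z u v : X}
    (hz : Tendsto (fun n => T (x n)) atTop (𝓝 z)) (hu : u ∈ K) (hfu : f u = z) (hv : v ∈ K)
    (hgv : g v = z) : T u = z ∧ T v = z := by
  have hodd : Tendsto (fun k => 2 * k + 1) atTop atTop :=
    tendsto_atTop_mono (fun k => show k ≤ _ by omega) tendsto_id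
  have heven : Tendsto (fun k => 2 * k) atTop atTop :=
    tendsto_atTop_mono (fun k => show k ≤ _ by omega) tendsto_id
  refine ⟨h.symm.apply_eq_of_tendsto hφusc hφlt (fun k => hx (2 * k + 1)) hu (hz.comp hodd)
    ((hz.comp heven).congr fun k => (hgx _ (even_two_mul k)).symm) hfu,
    h.apply_eq_of_tendsto hφusc hφlt (fun k => hx (2 * k + 1 + 1)) hv
      (hz.comp ((tendsto_add_atTop_nat 1).comp hodd))
      ((hz.comp hodd).congr fun k => (hfx _ (odd_two_mul_add_one k)).symm) hgv⟩

end IsCiricContraction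

end MetricContraction

theorem common_fixed_point_three_maps_usc_general
    {X : Type*} [MetricSpace X] (K : Set X) (hK : K.Nonempty)
    (T f g : X → X)
    (hf : Set.MapsTo f K K)
    (hsub : closure (T '' K) ⊆ f '' K ∩ g '' K)
    (φ : ℝ → ℝ)
    (hφusc : UpperSemicontinuousOn φ (Set.Ici 0))
    (hφlt : ∀ t > (0 : ℝ), φ t < t)
    (hcontr : ∀ x ∈ K, ∀ y ∈ K,
      dist (T x) (T y) ≤ φ (min
        (max (max (dist (f x) (g y)) (dist (T x) (f x)))
          (max (dist (T y) (g y)) ((dist (T x) (g y) + dist (T y) (f x)) / 2)))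
        (max (max (dist (f y) (g x)) (dist (T x) (g x)))
          (max (dist (T y) (f y)) ((dist (T x) (f y) + dist (T y) (g x)) / 2)))))
    (hcomplete : IsComplete (closure (T '' K)) ∨ IsComplete (f '' K) ∨ IsComplete (g '' K))
    (hwcf : ∀ x ∈ K, T x = f x → T (f x) = f (T x))
    (hwcg : ∀ x ∈ K, T x = g x → T (g x) = g (T x)) :
    ∃! z, z ∈ K ∧ T z = z ∧ f z = z ∧ g z = z := by
  have hφ : IsCiricContraction φ K T f g := fun x hx y hy => by
    simpa only [ciricBound, dist_comm (g x) (f y)] using hcontr x hx y hy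
  obtain ⟨x, hxK, hfx, hgx⟩ := exists_seq_alternating hK (subset_closure.trans hsub)
  have hyK : ∀ n, T (x n) ∈ closure (T '' K) := fun n => subset_closure ⟨x n, hxK n, rfl⟩
  obtain ⟨S, hS, hyS⟩ : ∃ S, IsComplete S ∧ ∀ n, T (x n) ∈ S := by
    rcases hcomplete with h | h | h
    exacts [⟨_, h, hyK⟩, ⟨_, h, fun n => (hsub (hyK n)).1⟩, ⟨_, h, fun n => (hsub (hyK n)).2⟩]
  obtain ⟨z, -, hz⟩ :=
    cauchySeq_tendsto_of_isComplete hS hyS (hφ.cauchySeq hφusc hφlt hxK hfx hgx)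
  obtain ⟨⟨u, hu, hfu⟩, ⟨v, hv, hgv⟩⟩ := hsub (isClosed_closure.mem_of_tendsto hz (.of_forall hyK))
  obtain ⟨hTu, hTv⟩ := hφ.apply_eq_of_tendsto_seq hφusc hφlt hxK hfx hgx hz hu hfu hv hgv
  have hfz : T z = f z := by simpa only [hfu, hTu] using hwcf u hu (hTu.trans hfu.symm)
  have hgz : T z = g z := by simpa only [hgv, hTv] using hwcg v hv (hTv.trans hgv.symm)
  have hzK : z ∈ K := hfu ▸ hf hu
  have hTz : T z = z := (hφ.apply_eq_apply hφlt hzK hv hfz.symm (hgv.trans hTv.symm)).trans hTv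
  refine ⟨z, ⟨hzK, hTz, hfz.symm.trans hTz, hgz.symm.trans hTz⟩, ?_⟩
  rintro w ⟨hw, hTw, hfw, -⟩
  exact hTw.symm.trans ((hφ.apply_eq_apply hφlt hw hzK (hfw.trans hTw.symm) hgz.symm).trans hTz)

/-- Corollary: the main common fixed point theorem with the control function `φ`
only assumed upper semicontinuous. -/
theorem common_fixed_point_three_maps_usc
    {X : Type*} [MetricSpace X] (K : Set X) (hK : K.Nonempty)
    (T f g : X → X)
    (hT : Set.MapsTo T K K) (hf : Set.MapsTo f K K) (hg : Set.MapsTo g K K)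
    (hsub : closure (T '' K) ⊆ f '' K ∩ g '' K)
    (φ : ℝ → ℝ)
    (hφusc : UpperSemicontinuousOn φ (Set.Ici 0))
    (hφnonneg : ∀ t ≥ (0 : ℝ), 0 ≤ φ t)
    (hφlt : ∀ t > (0 : ℝ), φ t < t)
    (hcontr : ∀ x ∈ K, ∀ y ∈ K,
      dist (T x) (T y) ≤ φ (min
        (max (max (dist (f x) (g y)) (dist (T x) (f x)))
          (max (dist (T y) (g y)) ((dist (T x) (g y) + dist (T y) (f x)) / 2)))
        (max (max (dist (f y) (g x)) (dist (T x) (g x)))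
          (max (dist (T y) (f y)) ((dist (T x) (f y) + dist (T y) (g x)) / 2)))))
    (hcomplete : IsComplete (closure (T '' K)) ∨ IsComplete (f '' K) ∨ IsComplete (g '' K))
    (hwcf : ∀ x ∈ K, T x = f x → T (f x) = f (T x))
    (hwcg : ∀ x ∈ K, T x = g x → T (g x) = g (T x)) :
    ∃! z, z ∈ K ∧ T z = z ∧ f z = z ∧ g z = z :=
  common_fixed_point_three_maps_usc_general K hK T f g hf hsub φ hφusc hφlt hcontr hcomplete hwcf
    hwcg
end

section
/- Let K be a nonempty subset of a metric space (X,d), let T, f : K → K be self-maps, and let m be a positive integer. Suppose there is a monotonically increasing continuous function φ : [0,∞) → [0,∞) with φ(t) < t for all t > 0 such that for all x, y ∈ K, d(T^m x, T^m y) ≤ φ( max{ d(fx,fy), d(T^m x, fx), d(T^m y, fy), (1/2)[d(T^m x, fy) + d(fx, T^m y)] } ), and that the closure of T^m(K) is contained in f(K). If either closure(T^m(K)) or f(K) is a complete metric subspace and the pair (T^m, f) is weakly compatible, then T^m and f have a unique common fixed point z in K. Moreover, if in addition T and f commute at every point of F(T^m) ∩ F(f), then z is also the unique common fixed point of T and f.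 -/
/-!
Write `S = T^[m]`. Since `S(K) ⊆ f(K)`, Jungck's iteration picks `xₙ₊₁ ∈ K` with `f xₙ₊₁ = S xₙ`.
The contraction makes the gaps `d(yₙ, yₙ₊₁)` of `yₙ = S xₙ` decrease to `0`, and continuity of `φ`
at `ε` together with `φ ε < ε` keeps all later `yₙ` within slightly more than `ε` of `y_N` once the
gaps are small, so `(yₙ)` is Cauchy; its limit `z = f u` satisfies `S u = z`. At two coincidence
points `x, y` of `S` and `f` the contraction reads `d(S x, S y) ≤ φ (d(S x, S y))`, forcing
`S x = S y`. Weak compatibility makes `z` a coincidence point, so `S z = S u = z`, and the same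
argument gives uniqueness. Finally, when `T` commutes with `f` at `z`, `T z` is again a common fixed
point of `S` and `f`, hence `T z = z`.
-/

open Filter Topology Set

section

variable {α X : Type*} [MetricSpace X] {φ : ℝ → ℝ}

noncomputable def jungckMax (S f : α → X) (x y : α) : ℝ :=
  max (max (dist (f x) (f y)) (dist (S x) (f x)))
    (max (dist (S y) (f y)) ((dist (S x) (f y) + dist (f x) (S y)) / 2))

def IsJungckPhiContraction (φ : ℝ → ℝ) (S f : α → X) (s : Set α) : Prop :=
  ∀ x ∈ s, ∀ y ∈ s, dist (S x) (S y) ≤ φ (jungckMax S f x y)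

lemma jungckMax_nonneg {S f : α → X} {x y : α} : 0 ≤ jungckMax S f x y :=
  le_max_of_le_left (le_max_of_le_left dist_nonneg)

lemma eq_zero_of_le_apply_s3 (hφlt : ∀ t > (0 : ℝ), φ t < t) {c : ℝ} (hc : 0 ≤ c)
    (hle : c ≤ φ c) : c = 0 :=
  hc.eq_or_lt.elim Eq.symm fun hpos => absurd hle (hφlt c hpos).not_ge

lemma le_apply_of_tendsto (hφcont : ContinuousOn φ (Ici 0)) {a b : ℕ → ℝ} {c d : ℝ}
    (ha : Tendsto a atTop (𝓝 c)) (ha0 : ∀ n, 0 ≤ a n) (hb : Tendsto b atTop (𝓝 d))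
    (hle : ∀ n, b n ≤ φ (a n)) : d ≤ φ c := by
  have hc : 0 ≤ c := ge_of_tendsto' ha ha0
  have hφa : Tendsto (fun n => φ (a n)) atTop (𝓝 (φ c)) :=
    (hφcont c hc).tendsto.comp (tendsto_nhdsWithin_of_tendsto_nhds_of_eventually_within _ ha
      (Eventually.of_forall ha0))
  exact le_of_tendsto_of_tendsto' hb hφa hle

lemma exists_apply_add_two_mul_le (hφcont : ContinuousOn φ (Ici 0)) {ε : ℝ} (hε : 0 < ε)
    (hlt : φ ε < ε) : ∃ δ, 0 < δ ∧ δ < ε ∧ φ (ε + 2 * δ) ≤ ε - δ := by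
  have hφε : ContinuousAt φ ε := hφcont.continuousAt (Ici_mem_nhds hε)
  have hlim : Tendsto (fun δ => φ (ε + 2 * δ) + δ) (𝓝 0) (𝓝 (φ ε + 0)) := by
    have hshift : Tendsto (fun δ : ℝ => ε + 2 * δ) (𝓝 0) (𝓝 ε) := by
      simpa using (tendsto_const_nhds (x := ε)).add ((tendsto_id (x := 𝓝 (0 : ℝ))).const_mul 2)
    exact (hφε.tendsto.comp hshift).add tendsto_id
  rw [add_zero] at hlim
  obtain ⟨δ, hδ, ⟨hδ0, hδε⟩⟩ := (((hlim.eventually (gt_mem_nhds hlt)).filter_mono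
    nhdsWithin_le_nhds).and (Ioo_mem_nhdsGT hε)).exists
  exact ⟨δ, hδ0, hδε, by linarith⟩

lemma exists_seq_apply_succ_eq {β : Type*} {S f : α → β} {K : Set α} (hsub : S '' K ⊆ f '' K)
    {x₀ : α} (hx₀ : x₀ ∈ K) : ∃ x : ℕ → α, (∀ n, x n ∈ K) ∧ ∀ n, f (x (n + 1)) = S (x n) := by
  have hpre : ∀ v : K, ∃ w : K, f w = S v := fun v => by
    obtain ⟨w, hw, hfw⟩ := hsub (mem_image_of_mem S v.2)
    exact ⟨⟨w, hw⟩, hfw⟩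
  choose g hg using hpre
  exact ⟨fun n => g^[n] ⟨x₀, hx₀⟩, fun n => (g^[n] _).2,
    fun n => by simp only [Function.iterate_succ_apply', hg]⟩

lemma exists_tendsto_of_isComplete {s t : Set X} (hst : closure s ⊆ t)
    (hc : IsComplete (closure s) ∨ IsComplete t) {y : ℕ → X} (hy : ∀ n, y n ∈ s)
    (hcauchy : CauchySeq y) : ∃ z ∈ t, Tendsto y atTop (𝓝 z) := by
  rcases hc with hc | hc
  · obtain ⟨z, hz, hlim⟩ :=
      cauchySeq_tendsto_of_isComplete hc (fun n => subset_closure (hy n)) hcauchy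
    exact ⟨z, hst hz, hlim⟩
  · exact cauchySeq_tendsto_of_isComplete hc (fun n => hst (subset_closure (hy n))) hcauchy

namespace IsJungckPhiContraction

lemma comp {β : Type*} {S f : α → X} {s : Set α} {g : β → α} {t : Set β}
    (h : IsJungckPhiContraction φ S f s) (hg : MapsTo g t s) :
    IsJungckPhiContraction φ (S ∘ g) (f ∘ g) t :=
  fun _ hx _ hy => h _ (hg hx) _ (hg hy)

lemma eq_of_coincidence {S f : α → X} {s : Set α} (h : IsJungckPhiContraction φ S f s)
    (hφlt : ∀ t > (0 : ℝ), φ t < t) {x y : α} (hx : x ∈ s) (hy : y ∈ s) (hSx : S x = f x)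
    (hSy : S y = f y) : S x = S y := by
  have hM : jungckMax S f x y = dist (S x) (S y) := by
    simp only [jungckMax, ← hSx, ← hSy, dist_self, dist_nonneg, sup_of_le_left,
      add_self_div_two, sup_of_le_right, max_self]
  exact dist_eq_zero.1 (eq_zero_of_le_apply_s3 hφlt dist_nonneg (hM ▸ h x hx y hy))

lemma dist_succ_succ_le {y : ℕ → X} (hy : IsJungckPhiContraction φ (fun n => y (n + 1)) y univ)
    (hφmono : MonotoneOn φ (Ici 0)) (hφlt : ∀ t > (0 : ℝ), φ t < t) (n : ℕ) :
    dist (y (n + 1)) (y (n + 2)) ≤ dist (y n) (y (n + 1)) ∧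
      dist (y (n + 1)) (y (n + 2)) ≤ φ (dist (y n) (y (n + 1))) := by
  set d : ℕ → ℝ := fun n => dist (y n) (y (n + 1))
  have hM : jungckMax (fun n => y (n + 1)) y n (n + 1) ≤ max (d n) (d (n + 1)) := by
    have htri : dist (y n) (y (n + 2)) ≤ d n + d (n + 1) := dist_triangle _ _ _
    simp only [jungckMax, dist_self, zero_add, dist_comm (y (n + 1)) (y n),
      dist_comm (y (n + 2)) (y (n + 1)), max_self]
    refine max_le (le_max_left _ _) (max_le (le_max_right _ _) ?_)
    linarith [le_max_left (d n) (d (n + 1)), le_max_right (d n) (d (n + 1))]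
  have key : d (n + 1) ≤ φ (max (d n) (d (n + 1))) :=
    (hy n trivial (n + 1) trivial).trans (hφmono jungckMax_nonneg (jungckMax_nonneg.trans hM) hM)
  have hle : d (n + 1) ≤ d n := by
    by_contra! hlt
    rw [max_eq_right hlt.le] at key
    have := eq_zero_of_le_apply_s3 hφlt dist_nonneg key
    linarith [dist_nonneg (x := y n) (y := y (n + 1))]
  exact ⟨hle, by rwa [max_eq_left hle] at key⟩

lemma tendsto_dist_succ {y : ℕ → X}
    (hy : IsJungckPhiContraction φ (fun n => y (n + 1)) y univ) (hφmono : MonotoneOn φ (Ici 0))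
    (hφcont : ContinuousOn φ (Ici 0)) (hφlt : ∀ t > (0 : ℝ), φ t < t) :
    Tendsto (fun n => dist (y n) (y (n + 1))) atTop (𝓝 0) := by
  set d : ℕ → ℝ := fun n => dist (y n) (y (n + 1))
  have hanti : Antitone d := antitone_nat_of_succ_le fun n => (dist_succ_succ_le hy hφmono hφlt n).1
  have hlim : Tendsto d atTop (𝓝 (⨅ n, d n)) :=
    tendsto_atTop_ciInf hanti ⟨0, by rintro _ ⟨n, rfl⟩; exact dist_nonneg⟩
  have hle : (⨅ n, d n) ≤ φ (⨅ n, d n) :=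
    le_apply_of_tendsto hφcont hlim (fun _ => dist_nonneg) (hlim.comp (tendsto_add_atTop_nat 1))
      fun n => (dist_succ_succ_le hy hφmono hφlt n).2
  rwa [eq_zero_of_le_apply_s3 hφlt (le_ciInf fun _ => dist_nonneg) hle] at hlim

lemma dist_add_le_of_dist_succ_le {y : ℕ → X}
    (hy : IsJungckPhiContraction φ (fun n => y (n + 1)) y univ)
    (hφmono : MonotoneOn φ (Ici 0)) {N : ℕ} {ε δ : ℝ} (hε : 0 ≤ ε)
    (hgap : ∀ n ≥ N, dist (y n) (y (n + 1)) ≤ δ) (hφ : φ (ε + 2 * δ) ≤ ε - δ) (p : ℕ) :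
    dist (y (N + p)) (y N) ≤ ε + δ := by
  have hN : dist (y N) (y (N + 1)) ≤ δ := hgap N le_rfl
  have hδ : 0 ≤ δ := dist_nonneg.trans hN
  induction p with
  | zero => simpa using add_nonneg hε hδ
  | succ p ih =>
    have hNp : dist (y (N + p)) (y (N + p + 1)) ≤ δ := hgap (N + p) (Nat.le_add_right N p)
    have hM : jungckMax (fun n => y (n + 1)) y N (N + p) ≤ ε + 2 * δ := by
      have t1 := dist_triangle (y (N + 1)) (y N) (y (N + p))
      have t2 := dist_triangle (y N) (y (N + p)) (y (N + p + 1))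
      simp only [jungckMax, dist_comm (y (N + 1)) (y N), dist_comm (y (N + p + 1)) (y (N + p)),
        dist_comm (y (N + p)) (y N)] at t1 ih ⊢
      refine max_le (max_le ?_ ?_) (max_le ?_ ?_) <;> linarith
    have hstep : dist (y (N + 1)) (y (N + p + 1)) ≤ ε - δ :=
      (hy N trivial (N + p) trivial).trans
        ((hφmono jungckMax_nonneg (by positivity : (0 : ℝ) ≤ ε + 2 * δ) hM).trans hφ)
    calc dist (y (N + (p + 1))) (y N)
        ≤ dist (y (N + p + 1)) (y (N + 1)) + dist (y (N + 1)) (y N) := dist_triangle _ _ _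
      _ ≤ ε + δ := by rw [dist_comm (y (N + p + 1)), dist_comm (y (N + 1)) (y N)]; linarith

lemma cauchySeq {y : ℕ → X} (hy : IsJungckPhiContraction φ (fun n => y (n + 1)) y univ)
    (hφmono : MonotoneOn φ (Ici 0)) (hφcont : ContinuousOn φ (Ici 0))
    (hφlt : ∀ t > (0 : ℝ), φ t < t) : CauchySeq y := by
  refine Metric.cauchySeq_iff'.2 fun ε hε => ?_
  obtain ⟨δ, hδ, hδε, hφδ⟩ :=
    exists_apply_add_two_mul_le hφcont (half_pos hε) (hφlt _ (half_pos hε))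
  obtain ⟨N, hN⟩ := eventually_atTop.1
    ((tendsto_order.1 (tendsto_dist_succ hy hφmono hφcont hφlt)).2 δ hδ)
  refine ⟨N, fun n hn => ?_⟩
  obtain ⟨p, rfl⟩ := Nat.exists_eq_add_of_le hn
  have := dist_add_le_of_dist_succ_le hy hφmono (half_pos hε).le (fun n hn => (hN n hn).le) hφδ p
  linarith

lemma apply_eq_of_tendsto {S f : α → X} {K : Set α} (h : IsJungckPhiContraction φ S f K)
    (hφcont : ContinuousOn φ (Ici 0)) (hφlt : ∀ t > (0 : ℝ), φ t < t) {x : ℕ → α} {u : α}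
    (hx : ∀ n, x n ∈ K)
    (hSx : Tendsto (fun n => S (x n)) atTop (𝓝 (f u)))
    (hfx : Tendsto (fun n => f (x n)) atTop (𝓝 (f u))) (hu : u ∈ K) : S u = f u := by
  have hM : Tendsto (fun n => jungckMax S f (x n) u) atTop (𝓝 (dist (S u) (f u))) := by
    have hfu := tendsto_const_nhds (x := f u) (f := (atTop : Filter ℕ))
    have hSu := tendsto_const_nhds (x := S u) (f := (atTop : Filter ℕ))
    convert ((hfx.dist hfu).max (hSx.dist hfx)).max ((hSu.dist hfu).max
      (((hSx.dist hfu).add (hfx.dist hSu)).div_const 2)) using 2 <;>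
      simp [jungckMax, dist_comm (f u) (S u)]
  have hle : dist (f u) (S u) ≤ φ (dist (S u) (f u)) :=
    le_apply_of_tendsto hφcont hM (fun _ => jungckMax_nonneg) (hSx.dist tendsto_const_nhds)
      fun n => h _ (hx n) _ hu
  rw [dist_comm] at hle
  exact dist_eq_zero.1 (eq_zero_of_le_apply_s3 hφlt dist_nonneg hle)

theorem exists_common_fixedPoint {S f : X → X} {K : Set X}
    (h : IsJungckPhiContraction φ S f K)
    (hφmono : MonotoneOn φ (Ici 0)) (hφcont : ContinuousOn φ (Ici 0))
    (hφlt : ∀ t > (0 : ℝ), φ t < t) (hK : K.Nonempty) (hf : MapsTo f K K)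
    (hsub : closure (S '' K) ⊆ f '' K)
    (hcomplete : IsComplete (closure (S '' K)) ∨ IsComplete (f '' K))
    (hwc : ∀ x ∈ K, S x = f x → S (f x) = f (S x)) : ∃ z ∈ K, S z = z ∧ f z = z := by
  obtain ⟨x₀, hx₀⟩ := hK
  obtain ⟨x, hxK, hfx⟩ := exists_seq_apply_succ_eq (subset_closure.trans hsub) hx₀
  have hy : IsJungckPhiContraction φ (fun n => S (x (n + 1))) (fun n => S (x n)) univ :=
    funext hfx ▸ h.comp (g := fun n => x (n + 1)) fun n _ => hxK (n + 1)
  obtain ⟨_, ⟨u, huK, rfl⟩, hlim⟩ := exists_tendsto_of_isComplete hsub hcomplete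
    (fun n => mem_image_of_mem S (hxK n)) (hy.cauchySeq hφmono hφcont hφlt)
  have hSu : S u = f u := h.apply_eq_of_tendsto hφcont hφlt (fun n => hxK (n + 1))
    (hlim.comp (tendsto_add_atTop_nat 1)) (by simpa only [hfx] using hlim) huK
  have hSfu : S (f u) = f (f u) := by rw [hwc u huK hSu, hSu]
  have hfix : S (f u) = f u := (h.eq_of_coincidence hφlt (hf huK) huK hSfu hSu).trans hSu
  exact ⟨f u, hf huK, hfix, hSfu ▸ hfix⟩

end IsJungckPhiContraction

end

theorem common_fixed_point_iterate_general
    {X : Type*} [MetricSpace X] (K : Set X) (hK : K.Nonempty)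
    (T f : X → X) (m : ℕ)
    (hT : Set.MapsTo T K K) (hf : Set.MapsTo f K K)
    (hsub : closure (T^[m] '' K) ⊆ f '' K)
    (φ : ℝ → ℝ)
    (hφmono : MonotoneOn φ (Set.Ici 0))
    (hφcont : ContinuousOn φ (Set.Ici 0))
    (hφlt : ∀ t > (0 : ℝ), φ t < t)
    (hcontr : ∀ x ∈ K, ∀ y ∈ K,
      dist (T^[m] x) (T^[m] y) ≤ φ
        (max (max (dist (f x) (f y)) (dist (T^[m] x) (f x)))
          (max (dist (T^[m] y) (f y)) ((dist (T^[m] x) (f y) + dist (f x) (T^[m] y)) / 2))))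
    (hcomplete : IsComplete (closure (T^[m] '' K)) ∨ IsComplete (f '' K))
    (hwc : ∀ x ∈ K, T^[m] x = f x → T^[m] (f x) = f (T^[m] x)) :
    ∃ z, (z ∈ K ∧ T^[m] z = z ∧ f z = z) ∧
      (∀ w, w ∈ K ∧ T^[m] w = w ∧ f w = w → w = z) ∧
      ((∀ x ∈ K, T^[m] x = x → f x = x → T (f x) = f (T x)) →
        (T z = z ∧ f z = z ∧ ∀ w, w ∈ K ∧ T w = w ∧ f w = w → w = z)) := by
  have h : IsJungckPhiContraction φ T^[m] f K := hcontr
  obtain ⟨z, hzK, hSz, hfz⟩ :=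
    h.exists_common_fixedPoint hφmono hφcont hφlt hK hf hsub hcomplete hwc
  have huniq : ∀ w, w ∈ K ∧ T^[m] w = w ∧ f w = w → w = z := by
    rintro w ⟨hwK, hSw, hfw⟩
    have := h.eq_of_coincidence hφlt hwK hzK (hSw.trans hfw.symm) (hSz.trans hfz.symm)
    rwa [hSw, hSz] at this
  refine ⟨z, ⟨hzK, hSz, hfz⟩, huniq, fun hcomm => ⟨?_, hfz, ?_⟩⟩
  · have hSTz : T^[m] (T z) = T z := Function.IsFixedPt.map hSz (Function.Commute.self_iterate T m)
    exact huniq (T z) ⟨hT hzK, hSTz, by rw [← hcomm z hzK hSz hfz, hfz]⟩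
  · rintro w ⟨hwK, hTw, hfw⟩
    exact huniq w ⟨hwK, Function.iterate_fixed hTw m, hfw⟩

/-- Theorem on iterated mappings: `T^[m]` and `f` have a unique common fixed point `z`;
if in addition `T` and `f` commute on `F(T^[m]) ∩ F(f)`, then `z` is also the unique
common fixed point of `T` and `f`. -/
theorem common_fixed_point_iterate
    {X : Type*} [MetricSpace X] (K : Set X) (hK : K.Nonempty)
    (T f : X → X) (m : ℕ) (hm : 1 ≤ m)
    (hT : Set.MapsTo T K K) (hf : Set.MapsTo f K K)
    (hsub : closure (T^[m] '' K) ⊆ f '' K)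
    (φ : ℝ → ℝ)
    (hφmono : MonotoneOn φ (Set.Ici 0))
    (hφcont : ContinuousOn φ (Set.Ici 0))
    (hφnonneg : ∀ t ≥ (0 : ℝ), 0 ≤ φ t)
    (hφlt : ∀ t > (0 : ℝ), φ t < t)
    (hcontr : ∀ x ∈ K, ∀ y ∈ K,
      dist (T^[m] x) (T^[m] y) ≤ φ
        (max (max (dist (f x) (f y)) (dist (T^[m] x) (f x)))
          (max (dist (T^[m] y) (f y)) ((dist (T^[m] x) (f y) + dist (f x) (T^[m] y)) / 2))))
    (hcomplete : IsComplete (closure (T^[m] '' K)) ∨ IsComplete (f '' K))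
    (hwc : ∀ x ∈ K, T^[m] x = f x → T^[m] (f x) = f (T^[m] x)) :
    ∃ z, (z ∈ K ∧ T^[m] z = z ∧ f z = z) ∧
      (∀ w, w ∈ K ∧ T^[m] w = w ∧ f w = w → w = z) ∧
      ((∀ x ∈ K, T^[m] x = x → f x = x → T (f x) = f (T x)) →
        (T z = z ∧ f z = z ∧ ∀ w, w ∈ K ∧ T w = w ∧ f w = w → w = z)) :=
  common_fixed_point_iterate_general K hK T f m hT hf hsub φ hφmono hφcont hφlt hcontr hcomplete hwc
end

section
/- Let K be a nonempty subset of a metric space (X,d), let {T_n}_{n≥1} be a sequence of self-maps of K and let f be a self-map of K with the closure of T_1(K) contained in f(K). Suppose there is a monotonically increasing continuous function φ : [0,∞) → [0,∞) with φ(t) < t for all t > 0 such that for all x, y ∈ K and every index j ≥ 1, d(T_1 x, T_j y) ≤ φ( max{ d(fx,fy), d(T_1 x, fx), d(T_j y, fy), (1/2)[d(T_1 x, fy) + d(T_j y, fx)] } ). If either closure(T_1(K)) or f(K) is a complete metric subspace and the pair (T_1, f) is weakly compatible, then there exists a unique point z ∈ K such that fz = z and T_n z = z for every n ≥ 1. 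-/
open Filter Topology

lemma phi_fix_aux {φ : ℝ → ℝ} (hφlt : ∀ t > (0:ℝ), φ t < t) {c : ℝ} (hc : 0 ≤ c)
    (h : c ≤ φ c) : c = 0 := by
  rcases hc.lt_or_eq with h' | h'
  · exact absurd h (not_le.2 (hφlt c h'))
  · exact h'.symm

lemma phi_limit_aux {φ : ℝ → ℝ} (hφcont : ContinuousOn φ (Set.Ici 0))
    (hφlt : ∀ t > (0:ℝ), φ t < t) {c : ℝ} (hc : 0 ≤ c) {η : ℕ → ℝ}
    (hη : ∀ n, 0 ≤ η n) (hη0 : Tendsto η atTop (𝓝 0))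
    (h : ∀ n, c ≤ φ (c + η n) + η n) : c = 0 := by
  have h1 : Tendsto (fun n => c + η n) atTop (𝓝[Set.Ici 0] c) := by
    apply tendsto_nhdsWithin_of_tendsto_nhds_of_eventually_within
    · have : Tendsto (fun n : ℕ => c + η n) atTop (𝓝 (c + 0)) :=
        (tendsto_const_nhds.add hη0)
      simpa using this
    · exact Filter.Eventually.of_forall fun n => by
        have := hη n; simp only [Set.mem_Ici]; linarith
  have h2 : Tendsto (fun n => φ (c + η n) + η n) atTop (𝓝 (φ c + 0)) :=
    (((hφcont c hc).tendsto.comp h1).add hη0)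
  have h3 : c ≤ φ c + 0 := ge_of_tendsto' h2 h
  exact phi_fix_aux hφlt hc (by linarith)



/-- Theorem for a sequence of self-maps: if `T 1` and `f` satisfy the contractive
condition together with every `T j` (`j ≥ 1`), either `closure (T 1 '' K)` or `f '' K`
is complete and `(T 1, f)` is weakly compatible, then all the `T n` (`n ≥ 1`) and `f`
have a unique common fixed point. -/
theorem common_fixed_point_sequence
    {X : Type*} [MetricSpace X] (K : Set X) (hK : K.Nonempty)
    (T : ℕ → X → X) (f : X → X)
    (hT : ∀ n, 1 ≤ n → Set.MapsTo (T n) K K) (hf : Set.MapsTo f K K)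
    (hsub : closure (T 1 '' K) ⊆ f '' K)
    (φ : ℝ → ℝ)
    (hφmono : MonotoneOn φ (Set.Ici 0))
    (hφcont : ContinuousOn φ (Set.Ici 0))
    (hφnonneg : ∀ t ≥ (0 : ℝ), 0 ≤ φ t)
    (hφlt : ∀ t > (0 : ℝ), φ t < t)
    (hcontr : ∀ j, 1 ≤ j → ∀ x ∈ K, ∀ y ∈ K,
      dist (T 1 x) (T j y) ≤ φ
        (max (max (dist (f x) (f y)) (dist (T 1 x) (f x)))
          (max (dist (T j y) (f y)) ((dist (T 1 x) (f y) + dist (T j y) (f x)) / 2))))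
    (hcomplete : IsComplete (closure (T 1 '' K)) ∨ IsComplete (f '' K))
    (hwc : ∀ x ∈ K, T 1 x = f x → T 1 (f x) = f (T 1 x)) :
    ∃! z, z ∈ K ∧ f z = z ∧ ∀ n, 1 ≤ n → T n z = z := by
  classical
  obtain ⟨x0, hx0⟩ := hK
  have hmono : ∀ {A B : ℝ}, 0 ≤ A → A ≤ B → φ A ≤ φ B := by
    intro A B hA hAB
    exact hφmono hA (le_trans hA hAB) hAB
  have hstep : ∀ x : X, x ∈ K → ∃ p, p ∈ K ∧ f p = T 1 x := by
    intro x hx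
    obtain ⟨p, hp, he⟩ := hsub (subset_closure ⟨x, hx, rfl⟩)
    exact ⟨p, hp, he⟩
  let g : {p // p ∈ K} → {p // p ∈ K} := fun q =>
    ⟨(hstep (q : X) q.2).choose, (hstep (q : X) q.2).choose_spec.1⟩
  let xs : ℕ → {p // p ∈ K} := fun n => g^[n] ⟨x0, hx0⟩
  have hxsucc : ∀ n, xs (n+1) = g (xs n) := fun n => Function.iterate_succ_apply' g n _
  have hfy : ∀ n, f (xs (n+1) : X) = T 1 (xs n : X) := by
    intro n
    rw [hxsucc n]
    exact (hstep ((xs n : X)) (xs n).2).choose_spec.2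
  set y : ℕ → X := fun n => T 1 (xs n : X) with hy
  set a : ℕ → ℝ := fun n => dist (y n) (y (n+1)) with ha
  have ha0 : ∀ n, 0 ≤ a n := fun n => dist_nonneg
  -- key inequality
  have key : ∀ n, a (n+1) ≤ φ (a n) ∧ a (n+1) ≤ a n := by
    intro n
    have hc := hcontr 1 le_rfl (xs (n+1) : X) (xs (n+1)).2 (xs (n+2) : X) (xs (n+2)).2
    rw [hfy n, hfy (n+1)] at hc
    have hc' : a (n+1) ≤ φ (max (max (a n) (dist (y (n+1)) (y n)))
        (max (dist (y (n+2)) (y (n+1))) ((dist (y (n+1)) (y (n+1)) + dist (y (n+2)) (y n)) / 2))) := by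
      simp only [ha, hy]
      exact hc
    have hM : (max (max (a n) (dist (y (n+1)) (y n)))
        (max (dist (y (n+2)) (y (n+1))) ((dist (y (n+1)) (y (n+1)) + dist (y (n+2)) (y n)) / 2)))
        ≤ max (a n) (a (n+1)) := by
      have e1 : dist (y (n+1)) (y n) = a n := dist_comm _ _
      have e2 : dist (y (n+1)) (y (n+1)) = 0 := dist_self _
      have e3 : dist (y (n+2)) (y n) ≤ a (n+1) + a n := by
        have t := dist_triangle (y (n+2)) (y (n+1)) (y n)
        have e4 : dist (y (n+2)) (y (n+1)) = a (n+1) := dist_comm _ _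
        have e5 : dist (y (n+1)) (y n) = a n := dist_comm _ _
        linarith
      have l1 : a n ≤ max (a n) (a (n+1)) := le_max_left _ _
      have l2 : a (n+1) ≤ max (a n) (a (n+1)) := le_max_right _ _
      have e6 : dist (y (n+2)) (y (n+1)) = a (n+1) := dist_comm _ _
      apply max_le (max_le l1 (e1 ▸ l1)) (max_le (e6 ▸ l2) _)
      rw [e2]
      linarith
    have hMnn : 0 ≤ (max (max (a n) (dist (y (n+1)) (y n)))
        (max (dist (y (n+2)) (y (n+1))) ((dist (y (n+1)) (y (n+1)) + dist (y (n+2)) (y n)) / 2))) :=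
      le_trans (ha0 n) (le_trans (le_max_left _ _) (le_max_left _ _))
    have hkey : a (n+1) ≤ φ (max (a n) (a (n+1))) :=
      le_trans hc' (hmono hMnn hM)
    rcases le_total (a (n+1)) (a n) with h | h
    · rw [max_eq_left h] at hkey
      exact ⟨hkey, h⟩
    · rw [max_eq_right h] at hkey
      have h0 : a (n+1) = 0 := phi_fix_aux hφlt (ha0 _) hkey
      constructor
      · rw [h0]; exact hφnonneg _ (ha0 n)
      · rw [h0]; exact ha0 n
  have hanti : Antitone a := antitone_nat_of_succ_le fun n => (key n).2
  have hbdd : BddBelow (Set.range a) := ⟨0, by rintro _ ⟨n, rfl⟩; exact ha0 n⟩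
  have htendL : Tendsto a atTop (𝓝 (⨅ n, a n)) := tendsto_atTop_ciInf hanti hbdd
  have hL0 : (0:ℝ) ≤ ⨅ n, a n := le_ciInf fun n => ha0 n
  have hLa : ∀ n, (⨅ n, a n) ≤ a n := fun n => ciInf_le hbdd n
  have hLzero : (⨅ n, a n) = 0 := by
    apply phi_limit_aux hφcont hφlt hL0 (η := fun n => a n - ⨅ n, a n)
      (fun n => by show (0:ℝ) ≤ a n - ⨅ n, a n; linarith [hLa n])
    · have := htendL.sub (tendsto_const_nhds (x := ⨅ n, a n) (f := atTop (α := ℕ)))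
      simpa using this
    · intro n
      show (⨅ n, a n) ≤ φ ((⨅ n, a n) + (a n - ⨅ n, a n)) + (a n - ⨅ n, a n)
      have h1 : (⨅ n, a n) ≤ a (n+1) := hLa (n+1)
      have h2 : a (n+1) ≤ φ (a n) := (key n).1
      have h3 : (⨅ n, a n) + (a n - ⨅ n, a n) = a n := by ring
      rw [h3]
      linarith [hLa n]
  have haten : Tendsto a atTop (𝓝 0) := hLzero ▸ htendL
  -- Cauchy
  have hcauchy : CauchySeq y := by
    rw [Metric.cauchySeq_iff]
    by_contra hnc
    push_neg at hnc
    obtain ⟨ε, hε, hnc⟩ := hnc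
    have main : ∀ N, ε ≤ φ (ε + 2 * a N) + 2 * a N := by
      intro N
      obtain ⟨m, hm, n, hn, hd⟩ := hnc N
      have hmn : m ≠ n := by
        intro h
        subst h
        rw [dist_self] at hd
        linarith
      obtain ⟨n0, mb, hn0N, hlt, hdb⟩ :
          ∃ n0 mb, N ≤ n0 ∧ n0 < mb ∧ ε ≤ dist (y mb) (y n0) := by
        rcases lt_or_gt_of_ne hmn with h | h
        · exact ⟨m, n, hm, h, by rw [dist_comm]; exact hd⟩
        · exact ⟨n, m, hn, h, hd⟩
      have hex : ∃ k, n0 < k ∧ ε ≤ dist (y k) (y n0) := ⟨mb, hlt, hdb⟩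
      obtain ⟨m0, hm0gt, hm0d, hm0min⟩ :
          ∃ m0, n0 < m0 ∧ ε ≤ dist (y m0) (y n0) ∧
            ∀ k, n0 < k → k < m0 → dist (y k) (y n0) < ε := by
        refine ⟨Nat.find hex, (Nat.find_spec hex).1, (Nat.find_spec hex).2, ?_⟩
        intro k hk1 hk2
        have := Nat.find_min hex hk2
        push_neg at this
        exact this hk1
      obtain ⟨m1, rfl⟩ : ∃ m1, m0 = m1 + 1 := ⟨m0 - 1, by omega⟩
      have hm1n0 : n0 ≤ m1 := by omega
      have hdm1 : dist (y m1) (y n0) < ε := by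
        rcases eq_or_lt_of_le hm1n0 with h | h
        · rw [← h, dist_self]; exact hε
        · exact hm0min m1 h (by omega)
      have hDa : dist (y (m1+1)) (y n0) ≤ ε + a n0 := by
        have ht := dist_triangle (y (m1+1)) (y m1) (y n0)
        have e1 : dist (y (m1+1)) (y m1) = a m1 := dist_comm _ _
        have e2 : a m1 ≤ a n0 := hanti hm1n0
        linarith
      have hc := hcontr 1 le_rfl (xs (n0+1) : X) (xs (n0+1)).2 (xs (m1+2) : X) (xs (m1+2)).2
      rw [hfy n0, hfy (m1+1)] at hc
      have hc' : dist (y (n0+1)) (y (m1+2)) ≤ φ (max (max (dist (y n0) (y (m1+1)))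
          (dist (y (n0+1)) (y n0)))
          (max (dist (y (m1+2)) (y (m1+1)))
            ((dist (y (n0+1)) (y (m1+1)) + dist (y (m1+2)) (y n0)) / 2))) := by
        simp only [hy]
        exact hc
      have hεD : ε ≤ dist (y (m1+1)) (y n0) := hm0d
      have e4 : a (m1+1) ≤ a n0 := hanti (by omega)
      have hann : 0 ≤ a n0 := ha0 n0
      have hM : (max (max (dist (y n0) (y (m1+1))) (dist (y (n0+1)) (y n0)))
          (max (dist (y (m1+2)) (y (m1+1)))
            ((dist (y (n0+1)) (y (m1+1)) + dist (y (m1+2)) (y n0)) / 2))) ≤ ε + 2 * a n0 := by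
        have e1 : dist (y n0) (y (m1+1)) = dist (y (m1+1)) (y n0) := dist_comm _ _
        have e2 : dist (y (n0+1)) (y n0) = a n0 := dist_comm _ _
        have e3 : dist (y (m1+2)) (y (m1+1)) = a (m1+1) := dist_comm _ _
        have e5 : dist (y (n0+1)) (y (m1+1)) ≤ a n0 + dist (y (m1+1)) (y n0) := by
          have t := dist_triangle (y (n0+1)) (y n0) (y (m1+1))
          have t2 : dist (y n0) (y (m1+1)) = dist (y (m1+1)) (y n0) := dist_comm _ _
          have t3 : dist (y (n0+1)) (y n0) = a n0 := dist_comm _ _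
          linarith
        have e6 : dist (y (m1+2)) (y n0) ≤ a (m1+1) + dist (y (m1+1)) (y n0) := by
          have t := dist_triangle (y (m1+2)) (y (m1+1)) (y n0)
          have t2 : dist (y (m1+2)) (y (m1+1)) = a (m1+1) := dist_comm _ _
          linarith
        apply max_le (max_le _ _) (max_le _ _)
        · rw [e1]; linarith
        · rw [e2]; linarith
        · rw [e3]; linarith
        · linarith
      have hMnn : 0 ≤ (max (max (dist (y n0) (y (m1+1))) (dist (y (n0+1)) (y n0)))
          (max (dist (y (m1+2)) (y (m1+1)))
            ((dist (y (n0+1)) (y (m1+1)) + dist (y (m1+2)) (y n0)) / 2))) :=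
        le_trans dist_nonneg (le_trans (le_max_left _ _) (le_max_left _ _))
      have h7 : dist (y (n0+1)) (y (m1+2)) ≤ φ (ε + 2 * a n0) :=
        le_trans hc' (hmono hMnn hM)
      have h8 : dist (y (m1+1)) (y n0) ≤ a (m1+1) + dist (y (n0+1)) (y (m1+2)) + a n0 := by
        have t1 := dist_triangle (y (m1+1)) (y (m1+2)) (y n0)
        have t2 := dist_triangle (y (m1+2)) (y (n0+1)) (y n0)
        have e1 : dist (y (m1+1)) (y (m1+2)) = a (m1+1) := rfl
        have e2 : dist (y (n0+1)) (y n0) = a n0 := dist_comm _ _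
        have e3 : dist (y (m1+2)) (y (n0+1)) = dist (y (n0+1)) (y (m1+2)) := dist_comm _ _
        linarith
      have hfin : ε ≤ φ (ε + 2 * a n0) + 2 * a n0 := by linarith
      have haN : a n0 ≤ a N := hanti hn0N
      have hargnn : 0 ≤ ε + 2 * a n0 := by linarith
      have := hmono hargnn (show ε + 2 * a n0 ≤ ε + 2 * a N by linarith)
      linarith
    have := phi_limit_aux hφcont hφlt hε.le (η := fun N => 2 * a N)
      (fun n => by show (0:ℝ) ≤ 2 * a n; linarith [ha0 n])
      (by simpa using haten.const_mul 2) main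
    linarith
  -- limit
  have hys1 : ∀ n, y n ∈ closure (T 1 '' K) := fun n => subset_closure ⟨xs n, (xs n).2, rfl⟩
  have hys2 : ∀ n, y n ∈ f '' K := fun n => ⟨xs (n+1), (xs (n+1)).2, hfy n⟩
  obtain ⟨z, hzf, hlim⟩ : ∃ z, z ∈ f '' K ∧ Tendsto y atTop (𝓝 z) := by
    rcases hcomplete with h | h
    · obtain ⟨z, hz, hl⟩ := cauchySeq_tendsto_of_isComplete h hys1 hcauchy
      exact ⟨z, hsub hz, hl⟩
    · obtain ⟨z, hz, hl⟩ := cauchySeq_tendsto_of_isComplete h hys2 hcauchy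
      exact ⟨z, hz, hl⟩
  obtain ⟨p, hpK, hfp⟩ := hzf
  have hdistz : Tendsto (fun n => dist (y n) z) atTop (𝓝 0) :=
    tendsto_iff_dist_tendsto_zero.mp hlim
  -- T 1 p = z
  have hT1p : T 1 p = z := by
    rw [← dist_eq_zero]
    have hηnn : ∀ n, (0:ℝ) ≤ dist z (y n) + a n + dist (y (n+1)) z := fun n => by
      have h1 := dist_nonneg (x := z) (y := y n)
      have h2 := dist_nonneg (x := y (n+1)) (y := z)
      have h3 := ha0 n
      linarith
    have hη0 : Tendsto (fun n => dist z (y n) + a n + dist (y (n+1)) z) atTop (𝓝 0) := by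
      have h1 : Tendsto (fun n => dist z (y n)) atTop (𝓝 0) := by
        simpa [dist_comm] using hdistz
      have h2 : Tendsto (fun n => dist (y (n+1)) z) atTop (𝓝 0) := by
        have := hdistz.comp (tendsto_add_atTop_nat 1)
        simpa [Function.comp_def] using this
      have := (h1.add haten).add h2
      simpa using this
    have hmain : ∀ n, dist (T 1 p) z ≤
        φ (dist (T 1 p) z + (dist z (y n) + a n + dist (y (n+1)) z))
          + (dist z (y n) + a n + dist (y (n+1)) z) := by
      intro n
      have hco := hcontr 1 le_rfl p hpK (xs (n+1) : X) (xs (n+1)).2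
      rw [hfp, hfy n] at hco
      have hco' : dist (T 1 p) (y (n+1)) ≤ φ (max (max (dist z (y n)) (dist (T 1 p) z))
          (max (dist (y (n+1)) (y n)) ((dist (T 1 p) (y n) + dist (y (n+1)) z) / 2))) := by
        simp only [hy]
        exact hco
      have hccnn : (0:ℝ) ≤ dist (T 1 p) z := dist_nonneg
      have h1 := dist_nonneg (x := z) (y := y n)
      have h2 := dist_nonneg (x := y (n+1)) (y := z)
      have h3 := ha0 n
      have hM : (max (max (dist z (y n)) (dist (T 1 p) z))
          (max (dist (y (n+1)) (y n)) ((dist (T 1 p) (y n) + dist (y (n+1)) z) / 2)))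
          ≤ dist (T 1 p) z + (dist z (y n) + a n + dist (y (n+1)) z) := by
        have e1 : dist (y (n+1)) (y n) = a n := dist_comm _ _
        have e2 : dist (T 1 p) (y n) ≤ dist (T 1 p) z + dist z (y n) := dist_triangle _ z _
        apply max_le (max_le _ _) (max_le _ _)
        · linarith
        · linarith
        · rw [e1]; linarith
        · linarith
      have hMnn : 0 ≤ (max (max (dist z (y n)) (dist (T 1 p) z))
          (max (dist (y (n+1)) (y n)) ((dist (T 1 p) (y n) + dist (y (n+1)) z) / 2))) :=
        le_trans dist_nonneg (le_trans (le_max_left _ _) (le_max_left _ _))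
      have h7 : dist (T 1 p) (y (n+1)) ≤
          φ (dist (T 1 p) z + (dist z (y n) + a n + dist (y (n+1)) z)) :=
        le_trans hco' (hmono hMnn hM)
      have h8 : dist (T 1 p) z ≤ dist (T 1 p) (y (n+1)) + dist (y (n+1)) z :=
        dist_triangle _ _ _
      linarith
    exact phi_limit_aux hφcont hφlt dist_nonneg hηnn hη0 hmain
  have hzK : z ∈ K := hT1p ▸ hT 1 le_rfl hpK
  have hTfz : T 1 z = f z := by
    have := hwc p hpK (by rw [hT1p, hfp])
    rw [hfp, hT1p] at this
    exact this
  -- T 1 z = z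
  have hT1z : T 1 z = z := by
    have hco := hcontr 1 le_rfl z hzK p hpK
    rw [hfp, hT1p, ← hTfz] at hco
    have hM : (max (max (dist (T 1 z) z) (dist (T 1 z) (T 1 z)))
        (max (dist z z) ((dist (T 1 z) z + dist z (T 1 z)) / 2))) ≤ dist (T 1 z) z := by
      have e1 : dist (T 1 z) (T 1 z) = 0 := dist_self _
      have e2 : dist z z = 0 := dist_self _
      have e3 : dist z (T 1 z) = dist (T 1 z) z := dist_comm _ _
      have hcnn : (0:ℝ) ≤ dist (T 1 z) z := dist_nonneg
      apply max_le (max_le le_rfl _) (max_le _ _)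
      · rw [e1]; exact hcnn
      · rw [e2]; exact hcnn
      · rw [e3]; linarith
    have hMnn : 0 ≤ (max (max (dist (T 1 z) z) (dist (T 1 z) (T 1 z)))
        (max (dist z z) ((dist (T 1 z) z + dist z (T 1 z)) / 2))) :=
      le_trans dist_nonneg (le_trans (le_max_left _ _) (le_max_left _ _))
    have hle : dist (T 1 z) z ≤ φ (dist (T 1 z) z) := le_trans hco (hmono hMnn hM)
    exact eq_of_dist_eq_zero (phi_fix_aux hφlt dist_nonneg hle)
  have hfz : f z = z := by rw [← hTfz, hT1z]
  -- all T n z = z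
  have hTn : ∀ n, 1 ≤ n → T n z = z := by
    intro j hj
    have hco := hcontr j hj z hzK z hzK
    rw [hfz, hT1z] at hco
    have e0 : dist (T j z) z = dist z (T j z) := dist_comm _ _
    have hM : (max (max (dist z z) (dist z z))
        (max (dist (T j z) z) ((dist z z + dist (T j z) z) / 2))) ≤ dist z (T j z) := by
      have e2 : dist z z = 0 := dist_self _
      have hcnn : (0:ℝ) ≤ dist z (T j z) := dist_nonneg
      apply max_le (max_le _ _) (max_le _ _)
      · rw [e2]; exact hcnn
      · rw [e2]; exact hcnn
      · rw [e0]
      · rw [e2, e0]; linarith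
    have hMnn : 0 ≤ (max (max (dist z z) (dist z z))
        (max (dist (T j z) z) ((dist z z + dist (T j z) z) / 2))) :=
      le_trans dist_nonneg (le_trans (le_max_left _ _) (le_max_left _ _))
    have hle : dist z (T j z) ≤ φ (dist z (T j z)) := le_trans hco (hmono hMnn hM)
    exact (eq_of_dist_eq_zero (phi_fix_aux hφlt dist_nonneg hle)).symm
  refine ⟨z, ⟨hzK, hfz, hTn⟩, ?_⟩
  rintro w ⟨hwK, hfw, hTw⟩
  have hco := hcontr 1 le_rfl w hwK z hzK
  rw [hfz, hfw, hT1z, hTw 1 le_rfl] at hco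
  have hM : (max (max (dist w z) (dist w w)) (max (dist z z) ((dist w z + dist z w) / 2)))
      ≤ dist w z := by
    have e1 : dist w w = 0 := dist_self _
    have e2 : dist z z = 0 := dist_self _
    have e3 : dist z w = dist w z := dist_comm _ _
    have hcnn : (0:ℝ) ≤ dist w z := dist_nonneg
    apply max_le (max_le le_rfl _) (max_le _ _)
    · rw [e1]; exact hcnn
    · rw [e2]; exact hcnn
    · rw [e3]; linarith
  have hMnn : 0 ≤ (max (max (dist w z) (dist w w)) (max (dist z z) ((dist w z + dist z w) / 2))) :=
    le_trans dist_nonneg (le_trans (le_max_left _ _) (le_max_left _ _))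
  have hle : dist w z ≤ φ (dist w z) := le_trans hco (hmono hMnn hM)
  exact eq_of_dist_eq_zero (phi_fix_aux hφlt dist_nonneg hle)
end

section
/- Let K be a nonempty subset of a metric space (X,d) and let T, f, g : K → K be self-maps with T(K) ⊆ f(K) ∩ g(K). Suppose there is a monotonically increasing continuous function ψ : [0,∞) → [0,∞) with ψ(t) < t for all t > 0 such that for all x, y ∈ K, d(Tx,Ty) ≤ ψ( min{ max{ d(fx,gy), d(Tx,fx), d(Ty,gy), (1/2)[d(Tx,gy) + d(Ty,fx)] }, max{ d(fy,gx), d(Tx,gx), d(Ty,fy), (1/2)[d(Tx,fy) + d(Ty,gx)] } } ). If {x_n} is any sequence in K satisfying Tx_{2n} = f x_{2n+1} and T x_{2n+1} = g x_{2n+2} for all n ≥ 0, then the sequence {T x_n} is a Cauchy sequence. -/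
/-!
Along `y n = T (x n)`, the points `x (2a+1)`, `x (2b+2)` turn the contractive condition into
`d(y (m+1), y (n+1)) ≤ ψ (M m n)` whenever `m + n` is odd, with `M` the maximum in its first branch.
For `n = m + 1` this gives `d_{m+1} ≤ ψ d_m` for the consecutive distances, which therefore
decrease to a fixed point of `ψ`, i.e. to `0`. If `y` were not Cauchy, some `ε > 0` would be
exceeded arbitrarily far out; stopping at the first index `p` with `d(y s, y p) ≥ ε` and correcting
the parity by one step gives `d(y (m+1), y (n+1)) ≈ ε ≈ M m n`, hence `ε ≤ ψ ε` in the limit,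
contradicting `ψ t < t`.
-/

open Filter Topology Set

section Comparison

variable {ψ : ℝ → ℝ}

theorem apply_le_self_of_monotoneOn (hmono : MonotoneOn ψ (Ici 0)) (hlt : ∀ t > 0, ψ t < t)
    {t : ℝ} (ht : 0 ≤ t) : ψ t ≤ t := by
  rcases ht.eq_or_lt with rfl | ht
  · by_contra! h
    exact (hmono (mem_Ici.2 le_rfl) (mem_Ici.2 h.le) h.le).not_gt (hlt _ h)
  · exact (hlt t ht).le

theorem le_apply_of_le_apply_max (hlt : ∀ t > 0, ψ t < t) {u v : ℝ} (hu : 0 ≤ u)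
    (h : v ≤ ψ (max u v)) : v ≤ ψ u := by
  rcases le_total v u with hvu | huv
  · rwa [max_eq_left hvu] at h
  · rw [max_eq_right huv] at h
    rcases hu.trans huv |>.eq_or_lt with rfl | hv
    · rwa [le_antisymm huv hu]
    · exact absurd h (hlt v hv).not_ge

theorem tendsto_zero_of_le_apply_s5 (hmono : MonotoneOn ψ (Ici 0)) (hcont : ContinuousOn ψ (Ici 0))
    (hlt : ∀ t > 0, ψ t < t) {d : ℕ → ℝ} (hd : ∀ n, 0 ≤ d n) (h : ∀ n, d (n + 1) ≤ ψ (d n)) :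
    Tendsto d atTop (𝓝 0) := by
  have hanti : Antitone d :=
    antitone_nat_of_succ_le fun n => (h n).trans (apply_le_self_of_monotoneOn hmono hlt (hd n))
  have hlim := tendsto_atTop_ciInf hanti ⟨0, by rintro _ ⟨n, rfl⟩; exact hd n⟩
  set r := ⨅ n, d n
  have hr : 0 ≤ r := le_ciInf hd
  have hψlim : Tendsto (fun n => ψ (d n)) atTop (𝓝 (ψ r)) :=
    (hcont r hr).tendsto.comp (tendsto_nhdsWithin_iff.2 ⟨hlim, .of_forall hd⟩)
  have hrψ : r ≤ ψ r := le_of_tendsto_of_tendsto' (hlim.comp (tendsto_add_atTop_nat 1)) hψlim h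
  have hr0 : r = 0 := by
    by_contra hr0
    exact hrψ.not_gt (hlt r (hr.lt_of_ne' hr0))
  exact hr0 ▸ hlim

theorem le_apply_of_forall_le_apply_add (hcont : ContinuousOn ψ (Ici 0)) {ε : ℝ} (hε : 0 ≤ ε)
    (h : ∀ δ > 0, ε ≤ ψ (ε + δ) + δ) : ε ≤ ψ ε := by
  have hshift : Tendsto (fun δ => ε + δ) (𝓝[>] 0) (𝓝[Ici 0] ε) := by
    refine tendsto_nhdsWithin_iff.2 ⟨?_, eventually_nhdsWithin_of_forall fun δ hδ => ?_⟩
    · exact tendsto_nhdsWithin_of_tendsto_nhds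
        ((continuous_const.add continuous_id).tendsto' 0 ε (add_zero ε))
    · exact add_nonneg hε (le_of_lt hδ)
  have hlim : Tendsto (fun δ => ψ (ε + δ) + δ) (𝓝[>] 0) (𝓝 (ψ ε)) := by
    simpa using ((hcont ε hε).tendsto.comp hshift).add
      (tendsto_nhdsWithin_of_tendsto_nhds (tendsto_id (x := 𝓝 (0 : ℝ))))
  exact ge_of_tendsto hlim (eventually_nhdsWithin_of_forall h)

end Comparison

section Sequence

variable {X : Type*} [PseudoMetricSpace X]

/-- `M(x, y)` of the contractive condition read along a sequence: `y m`, `y (m + 1)`, `y n`,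
`y (n + 1)` play the roles of `f x`, `T x`, `g y`, `T y`. -/
noncomputable def contractiveBound (y : ℕ → X) (m n : ℕ) : ℝ :=
  max (max (dist (y m) (y n)) (dist (y (m + 1)) (y m)))
    (max (dist (y (n + 1)) (y n)) ((dist (y (m + 1)) (y n) + dist (y (n + 1)) (y m)) / 2))

variable {y : ℕ → X}

theorem contractiveBound_comm (m n : ℕ) : contractiveBound y m n = contractiveBound y n m := by
  simp only [contractiveBound, dist_comm (y m) (y n), add_comm (dist (y (m + 1)) (y n))]
  rw [max_max_max_comm, max_comm (dist (y n) (y m))]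

theorem contractiveBound_nonneg (m n : ℕ) : 0 ≤ contractiveBound y m n :=
  dist_nonneg.trans ((le_max_left _ _).trans (le_max_left _ _))

theorem contractiveBound_le_max_dist_succ (n : ℕ) :
    contractiveBound y n (n + 1) ≤ max (dist (y n) (y (n + 1))) (dist (y (n + 1)) (y (n + 2))) := by
  have htri := (dist_comm (y (n + 2)) (y n)).trans_le (dist_triangle (y n) (y (n + 1)) (y (n + 2)))
  unfold contractiveBound
  rw [show n + 1 + 1 = n + 2 from rfl]
  simp only [dist_self, dist_comm (y (n + 1)) (y n),
    dist_comm (y (n + 2)) (y (n + 1)), zero_add]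
  refine max_le (max_le (le_max_left _ _) (le_max_left _ _)) (max_le (le_max_right _ _) ?_)
  linarith [le_max_left (dist (y n) (y (n + 1))) (dist (y (n + 1)) (y (n + 2))),
    le_max_right (dist (y n) (y (n + 1))) (dist (y (n + 1)) (y (n + 2)))]

theorem contractiveBound_le_dist_add {m n : ℕ} {δ : ℝ} (hm : dist (y m) (y (m + 1)) ≤ δ)
    (hn : dist (y n) (y (n + 1)) ≤ δ) :
    contractiveBound y m n ≤ dist (y (m + 1)) (y (n + 1)) + 2 * δ := by
  have h₁ := dist_triangle4 (y m) (y (m + 1)) (y (n + 1)) (y n)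
  have h₂ := dist_triangle (y (m + 1)) (y (n + 1)) (y n)
  have h₃ := dist_triangle (y (n + 1)) (y (m + 1)) (y m)
  rw [dist_comm (y (n + 1)) (y n)] at h₁ h₂
  rw [dist_comm (y (m + 1)) (y m), dist_comm (y (n + 1)) (y (m + 1))] at h₃
  have hD := dist_nonneg (x := y (m + 1)) (y := y (n + 1))
  have hδ : 0 ≤ δ := dist_nonneg.trans hm
  simp only [contractiveBound, dist_comm (y (m + 1)) (y m), dist_comm (y (n + 1)) (y n)]
  refine max_le (max_le ?_ ?_) (max_le ?_ ?_) <;> linarith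

theorem exists_dist_mem_Icc_of_le_dist {s t : ℕ} {ε δ : ℝ} (hε : 0 < ε)
    (hstep : ∀ i ≥ s, dist (y i) (y (i + 1)) ≤ δ) (hst : s ≤ t) (ht : ε ≤ dist (y s) (y t)) :
    ∃ p > s, ε ≤ dist (y s) (y p) ∧ dist (y s) (y p) ≤ ε + δ := by
  classical
  have hex : ∃ p, s < p ∧ ε ≤ dist (y s) (y p) := by
    refine ⟨t, hst.lt_of_ne ?_, ht⟩
    rintro rfl
    exact (dist_self (y s) ▸ ht).not_gt hε
  obtain ⟨hsp, hεp⟩ := Nat.find_spec hex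
  obtain ⟨q, hq⟩ := Nat.exists_eq_add_one_of_ne_zero (n := Nat.find hex) (by omega)
  have hsq : dist (y s) (y q) ≤ ε := by
    rcases (show s ≤ q by omega).eq_or_lt with rfl | hlt
    · simpa using hε.le
    · exact (not_le.1 fun h => Nat.find_min hex (show q < Nat.find hex by omega) ⟨hlt, h⟩).le
  refine ⟨_, hsp, hεp, ?_⟩
  rw [hq]
  calc dist (y s) (y (q + 1)) ≤ dist (y s) (y q) + dist (y q) (y (q + 1)) := dist_triangle _ _ _
    _ ≤ ε + δ := add_le_add hsq (hstep q (by omega))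

end Sequence

section Contractive

variable {X : Type*} [PseudoMetricSpace X] {ψ : ℝ → ℝ} {y : ℕ → X}

theorem le_apply_add_of_le_contractiveBound (hmono : MonotoneOn ψ (Ici 0))
    (hy : ∀ m n, Odd (m + n) → dist (y (m + 1)) (y (n + 1)) ≤ ψ (contractiveBound y m n))
    {ε δ : ℝ} {N s p : ℕ} (hstep : ∀ i ≥ N, dist (y i) (y (i + 1)) ≤ δ) (hNs : N < s)
    (hsp : s < p) (hlo : ε ≤ dist (y s) (y p)) (hhi : dist (y s) (y p) ≤ ε + δ) :
    ε ≤ ψ (ε + 4 * δ) + δ := by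
  have hδ : 0 ≤ δ := dist_nonneg.trans (hstep N le_rfl)
  obtain ⟨m, rfl⟩ : ∃ m, s = m + 1 := ⟨s - 1, by omega⟩
  obtain ⟨q, rfl⟩ : ∃ q, p = q + 1 := ⟨p - 1, by omega⟩
  obtain ⟨n, hNn, hmn, hqn⟩ : ∃ n ≥ N, Odd (m + n) ∧ dist (y (q + 1)) (y (n + 1)) ≤ δ := by
    rcases Nat.even_or_odd (m + q) with h | h
    · exact ⟨q + 1, by omega, by rw [← add_assoc]; exact h.add_one, hstep (q + 1) (by omega)⟩
    · exact ⟨q, by omega, h, by simpa using hδ⟩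
  have hlo' : ε - δ ≤ dist (y (m + 1)) (y (n + 1)) := by
    linarith [dist_triangle (y (m + 1)) (y (n + 1)) (y (q + 1)), dist_comm (y (q + 1)) (y (n + 1))]
  have hhi' : dist (y (m + 1)) (y (n + 1)) ≤ ε + 2 * δ := by
    linarith [dist_triangle (y (m + 1)) (y (q + 1)) (y (n + 1))]
  have hM : contractiveBound y m n ≤ ε + 4 * δ :=
    (contractiveBound_le_dist_add (hstep m (by omega)) (hstep n hNn)).trans (by linarith)
  have hM₀ := contractiveBound_nonneg (y := y) m n
  linarith [(hy m n hmn).trans (hmono hM₀ (hM₀.trans hM) hM)]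

theorem cauchySeq_of_le_contractiveBound (hmono : MonotoneOn ψ (Ici 0))
    (hcont : ContinuousOn ψ (Ici 0)) (hlt : ∀ t > 0, ψ t < t)
    (hy : ∀ m n, Odd (m + n) → dist (y (m + 1)) (y (n + 1)) ≤ ψ (contractiveBound y m n)) :
    CauchySeq y := by
  have hsucc (n : ℕ) : dist (y (n + 1)) (y (n + 2)) ≤ ψ (dist (y n) (y (n + 1))) :=
    le_apply_of_le_apply_max hlt dist_nonneg <| (hy n (n + 1) ⟨n, by omega⟩).trans <|
      hmono (contractiveBound_nonneg _ _) (dist_nonneg.trans (le_max_left _ _))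
        (contractiveBound_le_max_dist_succ n)
  have hzero := tendsto_zero_of_le_apply_s5 (d := fun n => dist (y n) (y (n + 1))) hmono hcont hlt
    (fun _ => dist_nonneg) hsucc
  by_contra hcauchy
  obtain ⟨ε, hε, hfar⟩ : ∃ ε > 0, ∀ N, ∃ t ≥ N, ε ≤ dist (y t) (y N) := by
    simpa [Metric.cauchySeq_iff'] using hcauchy
  refine (hlt ε hε).not_ge (le_apply_of_forall_le_apply_add hcont hε.le fun δ hδ => ?_)
  obtain ⟨N, hN⟩ := eventually_atTop.1 (hzero.eventually (ge_mem_nhds (by positivity : 0 < δ / 4)))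
  obtain ⟨t, hNt, ht⟩ := hfar (N + 1)
  obtain ⟨p, hsp, hlo, hhi⟩ := exists_dist_mem_Icc_of_le_dist hε (fun i hi => hN i (by omega))
    hNt (dist_comm (y t) _ ▸ ht)
  have := le_apply_add_of_le_contractiveBound hmono hy hN N.lt_succ_self hsp hlo hhi
  rw [mul_div_cancel₀ δ four_ne_zero] at this
  linarith

end Contractive

theorem contractive_sequence_cauchy_general
    {X : Type*} [MetricSpace X] (K : Set X)
    (T f g : X → X)
    (ψ : ℝ → ℝ)
    (hψmono : MonotoneOn ψ (Set.Ici 0))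
    (hψcont : ContinuousOn ψ (Set.Ici 0))
    (hψlt : ∀ t > (0 : ℝ), ψ t < t)
    (hcontr : ∀ x ∈ K, ∀ y ∈ K,
      dist (T x) (T y) ≤ ψ (min
        (max (max (dist (f x) (g y)) (dist (T x) (f x)))
          (max (dist (T y) (g y)) ((dist (T x) (g y) + dist (T y) (f x)) / 2)))
        (max (max (dist (f y) (g x)) (dist (T x) (g x)))
          (max (dist (T y) (f y)) ((dist (T x) (f y) + dist (T y) (g x)) / 2)))))
    (x : ℕ → X) (hx : ∀ n, x n ∈ K)
    (heven : ∀ n, T (x (2 * n)) = f (x (2 * n + 1)))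
    (hodd : ∀ n, T (x (2 * n + 1)) = g (x (2 * n + 2))) :
    CauchySeq (fun n => T (x n)) := by
  refine cauchySeq_of_le_contractiveBound hψmono hψcont hψlt fun m n hmn => ?_
  wlog hm : Even m generalizing m n
  · rw [dist_comm, contractiveBound_comm]
    exact this n m (add_comm m n ▸ hmn) ((Nat.odd_add.1 hmn).1 (Nat.not_even_iff_odd.1 hm))
  obtain ⟨a, rfl⟩ := even_iff_two_dvd.1 hm
  obtain ⟨b, rfl⟩ := (Nat.odd_add'.1 hmn).2 hm
  have h := hcontr (x (2 * a + 1)) (hx _) (x (2 * b + 2)) (hx _)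
  rw [← heven, ← hodd] at h
  exact h.trans (hψmono (mem_Ici.2 (by positivity)) (contractiveBound_nonneg _ _) (min_le_left _ _))

/-- Key auxiliary step: under the `ψ`-contractive condition, any sequence `{x n}` in `K`
with `T x_{2n} = f x_{2n+1}` and `T x_{2n+1} = g x_{2n+2}` gives rise to a Cauchy
sequence `{T x_n}`. -/
theorem contractive_sequence_cauchy
    {X : Type*} [MetricSpace X] (K : Set X) (hK : K.Nonempty)
    (T f g : X → X)
    (hT : Set.MapsTo T K K) (hf : Set.MapsTo f K K) (hg : Set.MapsTo g K K)
    (hsub : T '' K ⊆ f '' K ∩ g '' K)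
    (ψ : ℝ → ℝ)
    (hψmono : MonotoneOn ψ (Set.Ici 0))
    (hψcont : ContinuousOn ψ (Set.Ici 0))
    (hψnonneg : ∀ t ≥ (0 : ℝ), 0 ≤ ψ t)
    (hψlt : ∀ t > (0 : ℝ), ψ t < t)
    (hcontr : ∀ x ∈ K, ∀ y ∈ K,
      dist (T x) (T y) ≤ ψ (min
        (max (max (dist (f x) (g y)) (dist (T x) (f x)))
          (max (dist (T y) (g y)) ((dist (T x) (g y) + dist (T y) (f x)) / 2)))
        (max (max (dist (f y) (g x)) (dist (T x) (g x)))
          (max (dist (T y) (f y)) ((dist (T x) (f y) + dist (T y) (g x)) / 2)))))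
    (x : ℕ → X) (hx : ∀ n, x n ∈ K)
    (heven : ∀ n, T (x (2 * n)) = f (x (2 * n + 1)))
    (hodd : ∀ n, T (x (2 * n + 1)) = g (x (2 * n + 2))) :
    CauchySeq (fun n => T (x n)) :=
  contractive_sequence_cauchy_general K T f g ψ hψmono hψcont hψlt hcontr x hx heven hodd
end

section
/- Let K be a nonempty subset of a metric space (X,d) and let T, f, g : K → K be self-maps with T(K) ⊆ f(K) ∩ g(K). Suppose there is a monotonically increasing continuous function ψ : [0,∞) → [0,∞) with ψ(t) < t for all t > 0 such that for all x, y ∈ K, d(Tx,Ty) ≤ ψ( min{ max{ d(fx,gy), d(Tx,fx), d(Ty,gy), (1/2)[d(Tx,gy) + d(Ty,fx)] }, max{ d(fy,gx), d(Tx,gx), d(Ty,fy), (1/2)[d(Tx,fy) + d(Ty,gx)] } } ). If {x_n} is any sequence in K satisfying Tx_{2n} = f x_{2n+1} and T x_{2n+1} = g x_{2n+2} for all n ≥ 0, then d(T x_n, T x_{n+1}) → 0 as n → ∞. -/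
/-- Intermediate claim: under the `ψ`-contractive condition, any sequence `{x n}` in `K`
with `T x_{2n} = f x_{2n+1}` and `T x_{2n+1} = g x_{2n+2}` satisfies
`d(T x_n, T x_{n+1}) → 0`. -/
theorem contractive_sequence_dist_tendsto_zero
    {X : Type*} [MetricSpace X] (K : Set X) (hK : K.Nonempty)
    (T f g : X → X)
    (hT : Set.MapsTo T K K) (hf : Set.MapsTo f K K) (hg : Set.MapsTo g K K)
    (hsub : T '' K ⊆ f '' K ∩ g '' K)
    (ψ : ℝ → ℝ)
    (hψmono : MonotoneOn ψ (Set.Ici 0))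
    (hψcont : ContinuousOn ψ (Set.Ici 0))
    (hψnonneg : ∀ t ≥ (0 : ℝ), 0 ≤ ψ t)
    (hψlt : ∀ t > (0 : ℝ), ψ t < t)
    (hcontr : ∀ x ∈ K, ∀ y ∈ K,
      dist (T x) (T y) ≤ ψ (min
        (max (max (dist (f x) (g y)) (dist (T x) (f x)))
          (max (dist (T y) (g y)) ((dist (T x) (g y) + dist (T y) (f x)) / 2)))
        (max (max (dist (f y) (g x)) (dist (T x) (g x)))
          (max (dist (T y) (f y)) ((dist (T x) (f y) + dist (T y) (g x)) / 2)))))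
    (x : ℕ → X) (hx : ∀ n, x n ∈ K)
    (heven : ∀ n, T (x (2 * n)) = f (x (2 * n + 1)))
    (hodd : ∀ n, T (x (2 * n + 1)) = g (x (2 * n + 2))) :
    Filter.Tendsto (fun n => dist (T (x n)) (T (x (n + 1)))) Filter.atTop (nhds 0) := by
  set D : ℕ → ℝ := fun n => dist (T (x n)) (T (x (n + 1))) with hD
  have hD0 : ∀ n, 0 ≤ D n := fun n => dist_nonneg
  -- key': D (n+1) ≤ ψ (max (D n) (D (n+1)))
  have key' : ∀ n, D (n + 1) ≤ ψ (max (D n) (D (n + 1))) := by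
    intro n
    rcases Nat.even_or_odd n with ⟨m, hm⟩ | ⟨m, hm⟩
    · have hn : n = 2 * m := by omega
      subst hn
      have h := hcontr (x (2 * m + 1)) (hx _) (x (2 * m + 2)) (hx _)
      rw [← heven m, ← hodd m] at h
      have htri : dist (T (x (2 * m + 2))) (T (x (2 * m))) ≤
          D (2 * m + 1) + D (2 * m) := by
        have := dist_triangle (T (x (2 * m + 2))) (T (x (2 * m + 1))) (T (x (2 * m)))
        simpa [hD, dist_comm] using this
      have ha : 0 ≤ D (2 * m) := hD0 _
      have hb : 0 ≤ D (2 * m + 1) := hD0 _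
      refine h.trans (hψmono ?_ ?_ ?_)
      · exact le_min (le_max_of_le_left (le_max_of_le_left dist_nonneg))
          (le_max_of_le_left (le_max_of_le_left dist_nonneg))
      · exact le_max_of_le_left ha
      · refine (min_le_left _ _).trans ?_
        apply max_le (max_le ?_ ?_) (max_le ?_ ?_)
        · exact le_max_left _ _
        · rw [dist_comm]; exact le_max_left _ _
        · rw [dist_comm]; exact le_max_right _ _
        · rw [dist_self]
          have : (0 + dist (T (x (2 * m + 2))) (T (x (2 * m)))) / 2 ≤
              (D (2 * m + 1) + D (2 * m)) / 2 := by linarith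
          refine this.trans ?_
          rcases le_total (D (2 * m)) (D (2 * m + 1)) with hle | hle
          · rw [max_eq_right hle]; linarith
          · rw [max_eq_left hle]; linarith
    · have hn : n = 2 * m + 1 := by omega
      subst hn
      have he : T (x (2 * m + 2)) = f (x (2 * m + 3)) := by
        have h := heven (m + 1)
        rw [show 2 * (m + 1) = 2 * m + 2 by ring] at h
        exact h
      have h := hcontr (x (2 * m + 3)) (hx _) (x (2 * m + 2)) (hx _)
      rw [← he, ← hodd m] at h
      have htri : dist (T (x (2 * m + 3))) (T (x (2 * m + 1))) ≤
          D (2 * m + 2) + D (2 * m + 1) := by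
        have := dist_triangle (T (x (2 * m + 3))) (T (x (2 * m + 2))) (T (x (2 * m + 1)))
        simpa [hD, dist_comm] using this
      have ha : 0 ≤ D (2 * m + 1) := hD0 _
      have hb : 0 ≤ D (2 * m + 2) := hD0 _
      have h' : D (2 * m + 2) ≤ ψ (min
          (max (max (dist (T (x (2 * m + 2))) (T (x (2 * m + 1))))
            (dist (T (x (2 * m + 3))) (T (x (2 * m + 2)))))
            (max (dist (T (x (2 * m + 2))) (T (x (2 * m + 1))))
              ((dist (T (x (2 * m + 3))) (T (x (2 * m + 1))) +
                dist (T (x (2 * m + 2))) (T (x (2 * m + 2)))) / 2)))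
          (max (max (dist (f (x (2 * m + 2))) (g (x (2 * m + 3))))
            (dist (T (x (2 * m + 3))) (g (x (2 * m + 3)))))
            (max (dist (T (x (2 * m + 2))) (f (x (2 * m + 2))))
              ((dist (T (x (2 * m + 3))) (f (x (2 * m + 2))) +
                dist (T (x (2 * m + 2))) (g (x (2 * m + 3)))) / 2)))) := by
        rw [hD]
        calc dist (T (x (2 * m + 2))) (T (x (2 * m + 2 + 1)))
            = dist (T (x (2 * m + 3))) (T (x (2 * m + 2))) := by rw [dist_comm]
          _ ≤ _ := h
      refine h'.trans (hψmono ?_ ?_ ?_)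
      · exact le_min (le_max_of_le_left (le_max_of_le_left dist_nonneg))
          (le_max_of_le_left (le_max_of_le_left dist_nonneg))
      · exact le_max_of_le_left ha
      · refine (min_le_left _ _).trans ?_
        apply max_le (max_le ?_ ?_) (max_le ?_ ?_)
        · rw [dist_comm]; exact le_max_left _ _
        · rw [dist_comm]; exact le_max_right _ _
        · rw [dist_comm]; exact le_max_left _ _
        · rw [dist_self]
          have : (dist (T (x (2 * m + 3))) (T (x (2 * m + 1))) + 0) / 2 ≤
              (D (2 * m + 2) + D (2 * m + 1)) / 2 := by linarith
          refine this.trans ?_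
          rcases le_total (D (2 * m + 1)) (D (2 * m + 2)) with hle | hle
          · rw [max_eq_right hle]; linarith
          · rw [max_eq_left hle]; linarith
  -- ψ 0 ≤ 0
  have hψ0 : ψ 0 ≤ 0 := by
    by_contra hcon
    push_neg at hcon
    have h1 : ψ 0 ≤ ψ (ψ 0) := hψmono (Set.mem_Ici.mpr le_rfl) hcon.le hcon.le
    have h2 : ψ (ψ 0) < ψ 0 := hψlt _ hcon
    linarith
  have hψle : ∀ t ≥ (0 : ℝ), ψ t ≤ t := by
    intro t ht
    rcases eq_or_lt_of_le ht with h | h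
    · rw [← h]; exact hψ0
    · exact (hψlt t h).le
  -- key: D (n+1) ≤ ψ (D n)
  have key : ∀ n, D (n + 1) ≤ ψ (D n) := by
    intro n
    rcases le_total (D (n + 1)) (D n) with h | h
    · have := key' n; rwa [max_eq_left h] at this
    · have hk := key' n; rw [max_eq_right h] at hk
      rcases eq_or_lt_of_le (hD0 (n + 1)) with h0 | h0
      · rw [← h0]; exact hψnonneg _ (hD0 n)
      · exact absurd hk (not_le.mpr (hψlt _ h0))
  have hanti : Antitone D :=
    antitone_nat_of_succ_le fun n => (key n).trans (hψle _ (hD0 n))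
  have hbdd : BddBelow (Set.range D) :=
    ⟨0, by rintro y ⟨n, rfl⟩; exact hD0 n⟩
  have htend : Filter.Tendsto D Filter.atTop (nhds (⨅ n, D n)) :=
    tendsto_atTop_ciInf hanti hbdd
  set r := ⨅ n, D n with hr
  have hr0 : 0 ≤ r := le_ciInf hD0
  have h1 : Filter.Tendsto (fun n => D (n + 1)) Filter.atTop (nhds r) :=
    htend.comp (Filter.tendsto_add_atTop_nat 1)
  have h2 : Filter.Tendsto (fun n => ψ (D n)) Filter.atTop (nhds (ψ r)) := by
    have hc : ContinuousWithinAt ψ (Set.Ici 0) r := hψcont r hr0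
    exact hc.tendsto.comp (tendsto_nhdsWithin_of_tendsto_nhds_of_eventually_within _
      htend (Filter.Eventually.of_forall fun n => hD0 n))
  have hrψ : r ≤ ψ r := le_of_tendsto_of_tendsto' h1 h2 key
  have hr00 : r = 0 := by
    rcases eq_or_lt_of_le hr0 with h | h
    · exact h.symm
    · exact absurd hrψ (not_le.mpr (hψlt _ h))
  rw [← hr00]
  exact htend
end

section
/- Let φ : [0,∞) → [0,∞) be an upper semicontinuous function with φ(0) = 0 and φ(t) < t for all t > 0. Then there exists a monotonically increasing continuous function ψ : [0,∞) → [0,∞) such that φ(t) ≤ ψ(t) for all t ≥ 0 and ψ(t) < t for all t > 0. -/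
/-!
The function `g t = t - φ t` is lower semicontinuous, nonnegative on `[0,∞)` and positive
for `t > 0`. Its largest `1`-Lipschitz minorant `e t = inf_{s ≥ 0} (g s + |t - s|)` is still
positive for `t > 0`, since near `t` lower semicontinuity keeps `g` away from `0` and far from
`t` the distance term does. Then `ψ t = t - e t` works: it is continuous, dominates `φ` because
`e ≤ g`, and is monotone because `e` is `1`-Lipschitz.
-/

open Set

section LipschitzMinorant

variable {α : Type*} [PseudoMetricSpace α]

noncomputable def lipschitzMinorant (g : α → ℝ) (s : Set α) (x : α) : ℝ :=
  ⨅ y : s, g y + dist x y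

variable {g : α → ℝ} {s : Set α}

theorem bddBelow_range_add_dist (hg : ∀ y ∈ s, 0 ≤ g y) (x : α) :
    BddBelow (range fun y : s => g y + dist x y) :=
  ⟨0, by rintro _ ⟨y, rfl⟩; exact add_nonneg (hg y y.2) dist_nonneg⟩

theorem lipschitzMinorant_le_add_dist (hg : ∀ y ∈ s, 0 ≤ g y) (x : α) {y : α} (hy : y ∈ s) :
    lipschitzMinorant g s x ≤ g y + dist x y :=
  ciInf_le (bddBelow_range_add_dist hg x) ⟨y, hy⟩

theorem lipschitzMinorant_le (hg : ∀ y ∈ s, 0 ≤ g y) {x : α} (hx : x ∈ s) :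
    lipschitzMinorant g s x ≤ g x := by
  simpa using lipschitzMinorant_le_add_dist hg x hx

theorem lipschitzWith_lipschitzMinorant (hg : ∀ y ∈ s, 0 ≤ g y) (hs : s.Nonempty) :
    LipschitzWith 1 (lipschitzMinorant g s) := by
  have := hs.to_subtype
  refine LipschitzWith.of_le_add fun x y => sub_le_iff_le_add.1 <| le_ciInf fun z => ?_
  have := lipschitzMinorant_le_add_dist hg x z.2
  linarith [dist_triangle x y z]

theorem lipschitzMinorant_pos (hg : ∀ y ∈ s, 0 ≤ g y) {x : α} (hx : x ∈ s) (hgx : 0 < g x)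
    (hlsc : LowerSemicontinuousWithinAt g s x) : 0 < lipschitzMinorant g s x := by
  obtain ⟨δ, hδ, hball⟩ := Metric.mem_nhdsWithin_iff.1 (hlsc (g x / 2) (by linarith))
  have := Nonempty.intro (⟨x, hx⟩ : s)
  refine (lt_min hδ (half_pos hgx)).trans_le <| le_ciInf fun ⟨y, hy⟩ => ?_
  by_cases hxy : dist y x < δ
  · have : g x / 2 < g y := hball ⟨hxy, hy⟩
    linarith [min_le_right δ (g x / 2), dist_nonneg (x := x) (y := y)]
  · linarith [min_le_left δ (g x / 2), hg y hy, dist_comm x y]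

end LipschitzMinorant

theorem monotone_id_sub_of_lipschitzWith_one {f : ℝ → ℝ} (hf : LipschitzWith 1 f) :
    Monotone fun t => t - f t := fun a b hab => by
  show a - f a ≤ b - f b
  have := hf.le_add_mul b a
  rw [NNReal.coe_one, one_mul, Real.dist_eq, abs_of_nonneg (sub_nonneg.2 hab)] at this
  linarith

theorem UpperSemicontinuousOn.lowerSemicontinuousOn_id_sub {φ : ℝ → ℝ} {s : Set ℝ}
    (h : UpperSemicontinuousOn φ s) : LowerSemicontinuousOn (fun t => t - φ t) s :=
  fun x hx => continuousWithinAt_id.lowerSemicontinuousWithinAt.add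
    (continuous_neg.continuousAt.comp_upperSemicontinuousWithinAt_antitone (h x hx)
      fun _ _ => neg_le_neg)

/-- Lemma (Krishna Murthy): an upper semicontinuous `φ : [0,∞) → [0,∞)` with `φ 0 = 0`
and `φ t < t` for `t > 0` is dominated by a monotonically increasing continuous
`ψ : [0,∞) → [0,∞)` with `ψ t < t` for `t > 0`. -/
theorem usc_dominated_by_monotone_continuous
    (φ : ℝ → ℝ)
    (hφusc : UpperSemicontinuousOn φ (Set.Ici 0))
    (hφnonneg : ∀ t ≥ (0 : ℝ), 0 ≤ φ t)
    (hφ0 : φ 0 = 0)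
    (hφlt : ∀ t > (0 : ℝ), φ t < t) :
    ∃ ψ : ℝ → ℝ, MonotoneOn ψ (Set.Ici 0) ∧ ContinuousOn ψ (Set.Ici 0) ∧
      (∀ t ≥ (0 : ℝ), 0 ≤ ψ t) ∧ (∀ t ≥ (0 : ℝ), φ t ≤ ψ t) ∧ (∀ t > (0 : ℝ), ψ t < t) := by
  set e := lipschitzMinorant (fun t => t - φ t) (Ici 0)
  have hg : ∀ t ∈ Ici (0 : ℝ), 0 ≤ t - φ t := fun t ht => by
    rcases (mem_Ici.1 ht).eq_or_lt with rfl | ht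
    · simp [hφ0]
    · linarith [hφlt t ht]
  have he_le : ∀ t ≥ (0 : ℝ), e t ≤ t - φ t := fun t ht => lipschitzMinorant_le hg ht
  have he_lip := lipschitzWith_lipschitzMinorant hg nonempty_Ici
  refine ⟨fun t => t - e t, (monotone_id_sub_of_lipschitzWith_one he_lip).monotoneOn _,
    (continuous_id.sub he_lip.continuous).continuousOn, fun t ht => ?_, fun t ht => ?_,
    fun t ht => ?_⟩
  · linarith [he_le t ht, hφnonneg t ht]
  · linarith [he_le t ht]
  · have := lipschitzMinorant_pos hg ht.le (by linarith [hφlt t ht])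
      (hφusc.lowerSemicontinuousOn_id_sub t ht.le)
    linarith
end

section
/- Let φ : [0,∞) → [0,∞) be a continuous function with φ(t) < t for all t > 0. Then there exists a monotonically increasing continuous function ψ : [0,∞) → [0,∞) such that φ(t) ≤ ψ(t) for all t ≥ 0 and ψ(t) < t for all t > 0. -/
/-- Lemma (Sastry et al.): a continuous `φ : [0,∞) → [0,∞)` with `φ t < t` for `t > 0`
is dominated by a monotonically increasing continuous `ψ : [0,∞) → [0,∞)` with
`ψ t < t` for `t > 0`. -/
theorem continuous_dominated_by_monotone_continuous
    (φ : ℝ → ℝ)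
    (hφcont : ContinuousOn φ (Set.Ici 0))
    (hφnonneg : ∀ t ≥ (0 : ℝ), 0 ≤ φ t)
    (hφlt : ∀ t > (0 : ℝ), φ t < t) :
    ∃ ψ : ℝ → ℝ, MonotoneOn ψ (Set.Ici 0) ∧ ContinuousOn ψ (Set.Ici 0) ∧
      (∀ t ≥ (0 : ℝ), 0 ≤ ψ t) ∧ (∀ t ≥ (0 : ℝ), φ t ≤ ψ t) ∧ (∀ t > (0 : ℝ), ψ t < t) := by
  -- `φ 0 = 0`, forced by continuity and `φ t < t`
  have hφ0 : φ 0 = 0 := by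
    have h1 : Filter.Tendsto φ (nhdsWithin 0 (Set.Ioi 0)) (nhds (φ 0)) :=
      (hφcont 0 Set.self_mem_Ici).mono_left (nhdsWithin_mono _ Set.Ioi_subset_Ici_self)
    have h2 : Filter.Tendsto id (nhdsWithin (0:ℝ) (Set.Ioi 0)) (nhds 0) :=
      Filter.tendsto_id.mono_left nhdsWithin_le_nhds
    have hle : φ 0 ≤ 0 :=
      le_of_tendsto_of_tendsto h1 h2
        (eventually_nhdsWithin_of_forall fun x hx => (hφlt x hx).le)
    linarith [hφnonneg 0 le_rfl]
  set ψ : ℝ → ℝ := fun t => sSup (φ '' Set.Icc 0 t) with hψdef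
  have hK : ∀ t : ℝ, 0 ≤ t → IsCompact (φ '' Set.Icc 0 t) := fun t ht =>
    isCompact_Icc.image_of_continuousOn (hφcont.mono (fun x hx => hx.1))
  have hne : ∀ t : ℝ, 0 ≤ t → (φ '' Set.Icc 0 t).Nonempty := fun t ht =>
    ⟨φ 0, ⟨0, ⟨le_rfl, ht⟩, rfl⟩⟩
  have hbdd : ∀ t : ℝ, 0 ≤ t → BddAbove (φ '' Set.Icc 0 t) := fun t ht => (hK t ht).bddAbove
  have hmem : ∀ t : ℝ, 0 ≤ t → ψ t ∈ φ '' Set.Icc 0 t := fun t ht =>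
    (hK t ht).sSup_mem (hne t ht)
  have hmono : MonotoneOn ψ (Set.Ici 0) := fun a ha b hb hab =>
    csSup_le_csSup (hbdd b hb) (hne a ha)
      (Set.image_mono (Set.Icc_subset_Icc_right hab))
  have hge : ∀ t ≥ (0:ℝ), φ t ≤ ψ t := fun t ht =>
    le_csSup (hbdd t ht) ⟨t, ⟨ht, le_rfl⟩, rfl⟩
  have hnn : ∀ t ≥ (0:ℝ), 0 ≤ ψ t := fun t ht => by
    have := le_csSup (hbdd t ht) ⟨0, ⟨le_rfl, ht⟩, rfl⟩
    rw [hφ0] at this; exact this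
  have hlt : ∀ t > (0:ℝ), ψ t < t := by
    intro t ht
    obtain ⟨s, hs, hsψ⟩ := hmem t ht.le
    rcases eq_or_lt_of_le hs.1 with h0 | h0
    · rw [← hsψ, ← h0, hφ0]; exact ht
    · rw [← hsψ]; exact lt_of_lt_of_le (hφlt s h0) hs.2
  -- continuity of the running maximum
  have hcont : ContinuousOn ψ (Set.Ici 0) := by
    intro t0 ht0
    rw [Metric.continuousWithinAt_iff]
    intro ε hε
    have hIC : IsCompact (Set.Icc (0:ℝ) (t0 + 1)) := isCompact_Icc
    have hUC : UniformContinuousOn φ (Set.Icc 0 (t0 + 1)) :=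
      hIC.uniformContinuousOn_of_continuous (hφcont.mono (fun x hx => hx.1))
    rw [Metric.uniformContinuousOn_iff] at hUC
    obtain ⟨δ, hδ, hδ'⟩ := hUC ε hε
    -- key estimate: if 0 ≤ a ≤ b ≤ t0+1 and b - a < δ then ψ b ≤ ψ a + ε
    have key : ∀ a b : ℝ, 0 ≤ a → a ≤ b → b ≤ t0 + 1 → b - a < δ → ψ b < ψ a + ε := by
      intro a b ha hab hb hd
      obtain ⟨s, hs, hsψ⟩ := hmem b (ha.trans hab)
      rcases le_or_gt s a with hsa | hsa
      · have : ψ b ≤ ψ a := by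
          rw [← hsψ]; exact le_csSup (hbdd a ha) ⟨s, ⟨hs.1, hsa⟩, rfl⟩
        linarith
      · have hsmem : s ∈ Set.Icc (0:ℝ) (t0 + 1) := ⟨hs.1, hs.2.trans hb⟩
        have hamem : a ∈ Set.Icc (0:ℝ) (t0 + 1) := ⟨ha, (hab.trans hb)⟩
        have hdist : dist s a < δ := by
          rw [Real.dist_eq, abs_of_nonneg (by linarith [hsa.le])]
          linarith [hs.2]
        have := hδ' s hsmem a hamem hdist
        rw [Real.dist_eq] at this
        have h1 : φ s - φ a < ε := lt_of_le_of_lt (le_abs_self _) this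
        have h2 : φ a ≤ ψ a := hge a ha
        rw [← hsψ]; linarith
    refine ⟨min δ 1, lt_min hδ one_pos, ?_⟩
    intro t ht hdist
    rw [Real.dist_eq] at hdist ⊢
    have hd1 : |t - t0| < δ := lt_of_lt_of_le hdist (min_le_left _ _)
    have hd2 : |t - t0| < 1 := lt_of_lt_of_le hdist (min_le_right _ _)
    rcases le_total t t0 with hle | hle
    · have h1 : ψ t ≤ ψ t0 := hmono ht ht0 hle
      have h2 : ψ t0 < ψ t + ε := by
        apply key t t0 ht hle (by linarith)
        rw [abs_of_nonpos (by linarith)] at hd1; linarith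
      rw [abs_of_nonpos (by linarith)]; linarith
    · have h1 : ψ t0 ≤ ψ t := hmono ht0 ht hle
      have h2 : ψ t < ψ t0 + ε := by
        apply key t0 t ht0 hle
        · rw [abs_of_nonneg (by linarith)] at hd2; linarith
        · rw [abs_of_nonneg (by linarith)] at hd1; linarith
      rw [abs_of_nonneg (by linarith)]; linarith
  exact ⟨ψ, hmono, hcont, hnn, hge, hlt⟩
end

section
/- Let f be a continuous self-map of a complete metric space (X,d). Then f has a fixed point in X if and only if there exist r ∈ [0,1) and a self-map T : X → X which commutes with f (fT = Tf), satisfies T(X) ⊆ f(X), and satisfies d(Tx,Ty) ≤ r·d(fx,fy) for all x, y ∈ X. Moreover, when such r and T exist, f and T have a unique common fixed point in X. -/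
/-!
Jungck's argument: choose `xₙ₊₁` with `f xₙ₊₁ = T xₙ`, which `T(X) ⊆ f(X)` allows. The
contraction condition makes `f xₙ` a geometric Cauchy sequence, with limit `z`. Since `T` is
continuous along with `f`, commutation gives `T z = lim T (f xₙ) = lim f (f xₙ₊₁) = f z`. The
contraction condition forces all points of coincidence `T a = f a` to share the same value, and
commutation shows that `f z` is again a point of coincidence, hence a common fixed point.
-/

open Filter Topology

theorem exists_seq_apply_succ_eq_s10 {α : Type*} [Nonempty α] {f T : α → α}
    (hrange : Set.range T ⊆ Set.range f) : ∃ x : ℕ → α, ∀ n, f (x (n + 1)) = T (x n) := by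
  choose g hg using fun a => hrange (Set.mem_range_self a)
  refine ⟨fun n => g^[n] (Classical.arbitrary α), fun n => ?_⟩
  simp only [Function.iterate_succ_apply', hg]

section PseudoMetric

variable {X : Type*} [PseudoMetricSpace X] {f T : X → X} {r : ℝ}

theorem continuous_of_dist_le_mul_dist (hf : Continuous f)
    (hT : ∀ x y, dist (T x) (T y) ≤ r * dist (f x) (f y)) : Continuous T := by
  refine continuous_iff_continuousAt.2 fun x => tendsto_iff_dist_tendsto_zero.2 ?_
  refine squeeze_zero (fun _ => dist_nonneg) (fun y => hT y x) ?_
  simpa using ((hf.tendsto x).dist (tendsto_const_nhds (x := f x))).const_mul r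

theorem cauchySeq_apply_of_apply_succ_eq (hr0 : 0 ≤ r) (hr1 : r < 1)
    (hT : ∀ x y, dist (T x) (T y) ≤ r * dist (f x) (f y)) {x : ℕ → X}
    (hx : ∀ n, f (x (n + 1)) = T (x n)) : CauchySeq fun n => f (x n) := by
  refine cauchySeq_of_le_geometric r (dist (f (x 0)) (f (x 1))) hr1 fun n => ?_
  induction n with
  | zero => simp
  | succ n ih =>
    calc dist (f (x (n + 1))) (f (x (n + 2)))
        = dist (T (x n)) (T (x (n + 1))) := by rw [hx, hx]
      _ ≤ r * dist (f (x n)) (f (x (n + 1))) := hT _ _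
      _ ≤ r * (dist (f (x 0)) (f (x 1)) * r ^ n) := mul_le_mul_of_nonneg_left ih hr0
      _ = dist (f (x 0)) (f (x 1)) * r ^ (n + 1) := by ring

end PseudoMetric

section Metric

variable {X : Type*} [MetricSpace X] {f T : X → X} {r : ℝ}

theorem apply_eq_of_coincidence (hr1 : r < 1)
    (hT : ∀ x y, dist (T x) (T y) ≤ r * dist (f x) (f y)) {a b : X}
    (ha : T a = f a) (hb : T b = f b) : T a = T b := by
  have hle : dist (T a) (T b) ≤ r * dist (T a) (T b) := by
    simpa only [ha, hb] using hT a b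
  have hnonneg := dist_nonneg (x := T a) (y := T b)
  exact dist_le_zero.1 (by nlinarith)

theorem exists_coincidence_of_commute [CompleteSpace X] [Nonempty X] (hf : Continuous f)
    (hcomm : Function.Commute f T) (hr0 : 0 ≤ r) (hr1 : r < 1)
    (hrange : Set.range T ⊆ Set.range f)
    (hT : ∀ x y, dist (T x) (T y) ≤ r * dist (f x) (f y)) : ∃ z, T z = f z := by
  obtain ⟨x, hx⟩ := exists_seq_apply_succ_eq_s10 hrange
  obtain ⟨z, hz⟩ := cauchySeq_tendsto_of_complete (cauchySeq_apply_of_apply_succ_eq hr0 hr1 hT hx)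
  have hTz : Tendsto (fun n => T (f (x n))) atTop (𝓝 (T z)) :=
    ((continuous_of_dist_le_mul_dist hf hT).tendsto z).comp hz
  have hfz : Tendsto (fun n => T (f (x n))) atTop (𝓝 (f z)) := by
    simp_rw [← hcomm _, ← hx]
    exact (hf.tendsto z).comp (hz.comp (tendsto_add_atTop_nat 1))
  exact ⟨z, tendsto_nhds_unique hTz hfz⟩

theorem existsUnique_common_fixedPoint [CompleteSpace X] [Nonempty X] (hf : Continuous f)
    (hcomm : Function.Commute f T) (hr0 : 0 ≤ r) (hr1 : r < 1)
    (hrange : Set.range T ⊆ Set.range f)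
    (hT : ∀ x y, dist (T x) (T y) ≤ r * dist (f x) (f y)) : ∃! w, f w = w ∧ T w = w := by
  obtain ⟨z, hz⟩ := exists_coincidence_of_commute hf hcomm hr0 hr1 hrange hT
  have hfz : T (f z) = f (f z) := by rw [← hcomm z, hz]
  have hTfz : T (f z) = f z := (apply_eq_of_coincidence hr1 hT hfz hz).trans hz
  refine ⟨f z, ⟨hfz ▸ hTfz, hTfz⟩, fun y ⟨hfy, hTy⟩ => ?_⟩
  calc y = T y := hTy.symm
    _ = T (f z) := apply_eq_of_coincidence hr1 hT (hTy.trans hfy.symm) hfz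
    _ = f z := hTfz

end Metric

/-- Jungck's theorem: a continuous self-map `f` of a complete metric space has a fixed
point iff there exist `r ∈ [0,1)` and a self-map `T` commuting with `f`, with
`T(X) ⊆ f(X)` and `d(Tx,Ty) ≤ r·d(fx,fy)`; moreover any such `f` and `T` have a unique
common fixed point. -/
theorem jungck_fixed_point
    {X : Type*} [MetricSpace X] [CompleteSpace X] [Nonempty X]
    (f : X → X) (hf : Continuous f) :
    ((∃ x, f x = x) ↔
      ∃ r : ℝ, 0 ≤ r ∧ r < 1 ∧ ∃ T : X → X,
        (∀ x, f (T x) = T (f x)) ∧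
        Set.range T ⊆ Set.range f ∧
        (∀ x y, dist (T x) (T y) ≤ r * dist (f x) (f y))) ∧
    (∀ r : ℝ, 0 ≤ r → r < 1 → ∀ T : X → X,
      (∀ x, f (T x) = T (f x)) →
      Set.range T ⊆ Set.range f →
      (∀ x y, dist (T x) (T y) ≤ r * dist (f x) (f y)) →
      ∃! z, f z = z ∧ T z = z) := by
  refine ⟨⟨fun ⟨x₀, hx₀⟩ => ?_, fun ⟨r, hr0, hr1, T, hcomm, hrange, hT⟩ => ?_⟩,
    fun r hr0 hr1 T hcomm hrange hT => existsUnique_common_fixedPoint hf hcomm hr0 hr1 hrange hT⟩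
  · refine ⟨0, le_rfl, one_pos, fun _ => x₀, fun _ => hx₀, ?_, fun _ _ => by simp⟩
    rintro _ ⟨_, rfl⟩
    exact ⟨x₀, hx₀⟩
  · obtain ⟨z, ⟨hfz, -⟩, -⟩ := existsUnique_common_fixedPoint hf hcomm hr0 hr1 hrange hT
    exact ⟨z, hfz⟩
end

section
/- Let T and f be continuous commuting self-maps of a complete metric space (X,d) with T(X) ⊆ f(X), and suppose there exist constants a ≥ 0, b ≥ 0, c ≥ 0 with 0 < 2a + 2b + c < 1 such that for all x, y ∈ X, d(Tx,Ty) ≤ a[d(Tx,fx) + d(Ty,fy)] + b[d(Tx,fy) + d(Ty,fx)] + c·d(fx,fy). Then f and T have a unique common fixed point in X. -/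
/-- Singh's theorem: continuous commuting self-maps `T`, `f` of a complete metric space
with `T(X) ⊆ f(X)` satisfying the Hardy–Rogers type condition with
`0 < 2a + 2b + c < 1` have a unique common fixed point. -/
theorem singh_common_fixed_point
    {X : Type*} [MetricSpace X] [CompleteSpace X] [Nonempty X]
    (T f : X → X) (hTc : Continuous T) (hfc : Continuous f)
    (hcomm : ∀ x, f (T x) = T (f x))
    (hsub : Set.range T ⊆ Set.range f)
    (a b c : ℝ) (ha : 0 ≤ a) (hb : 0 ≤ b) (hc : 0 ≤ c)
    (hpos : 0 < 2 * a + 2 * b + c) (hlt : 2 * a + 2 * b + c < 1)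
    (hcontr : ∀ x y,
      dist (T x) (T y) ≤ a * (dist (T x) (f x) + dist (T y) (f y))
        + b * (dist (T x) (f y) + dist (T y) (f x)) + c * dist (f x) (f y)) :
    ∃! z, f z = z ∧ T z = z := by
  classical
  obtain ⟨x0⟩ := (inferInstance : Nonempty X)
  have hg : ∀ p : X, ∃ q, f q = T p := fun p => hsub ⟨p, rfl⟩
  choose g hgf using hg
  set x : ℕ → X := fun n => g^[n] x0 with hx
  have hxs : ∀ n, x (n + 1) = g (x n) := fun n => Function.iterate_succ_apply' g n x0
  set y : ℕ → X := fun n => T (x n) with hy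
  have hfy : ∀ n, f (x (n + 1)) = y n := fun n => by rw [hxs]; exact hgf (x n)
  have hab : a + b < 1 := by linarith
  set k : ℝ := (a + b + c) / (1 - a - b) with hk
  have hden : (0 : ℝ) < 1 - a - b := by linarith
  have hk0 : 0 ≤ k := div_nonneg (by linarith) (by linarith)
  have hk1 : k < 1 := (div_lt_one hden).2 (by linarith)
  have hstep : ∀ n, dist (y (n + 2)) (y (n + 1)) ≤ k * dist (y (n + 1)) (y n) := by
    intro n
    have h := hcontr (x (n + 2)) (x (n + 1))
    rw [hfy, hfy] at h
    have htri : dist (y (n + 2)) (y n) ≤ dist (y (n + 2)) (y (n + 1)) + dist (y (n + 1)) (y n) :=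
      dist_triangle _ _ _
    have hself : dist (y (n + 1)) (y (n + 1)) = 0 := dist_self _
    rw [hk, div_mul_eq_mul_div, le_div_iff₀ hden]
    nlinarith [dist_nonneg (x := y (n + 2)) (y := y (n + 1)),
      dist_nonneg (x := y (n + 1)) (y := y n)]
  have hgeo : ∀ n, dist (y (n + 1)) (y n) ≤ dist (y 1) (y 0) * k ^ n := by
    intro n
    induction n with
    | zero => simp
    | succ m ih =>
      calc dist (y (m + 2)) (y (m + 1)) ≤ k * dist (y (m + 1)) (y m) := hstep m
        _ ≤ k * (dist (y 1) (y 0) * k ^ m) := by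
            exact mul_le_mul_of_nonneg_left ih hk0
        _ = dist (y 1) (y 0) * k ^ (m + 1) := by ring
  have hcauchy : CauchySeq y := by
    apply cauchySeq_of_le_geometric k (dist (y 1) (y 0)) hk1
    intro n
    rw [dist_comm]
    exact hgeo n
  obtain ⟨z, hz⟩ := cauchySeq_tendsto_of_complete hcauchy
  -- f z = T z
  have hfz : f z = T z := by
    have h1 : Filter.Tendsto (fun n => f (y (n + 1))) Filter.atTop (nhds (f z)) :=
      ((hfc.tendsto z).comp (hz.comp (Filter.tendsto_add_atTop_nat 1)))
    have heq : ∀ n, f (y (n + 1)) = T (y n) := by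
      intro n
      show f (T (x (n + 1))) = T (y n)
      rw [hcomm, hfy]
    have h2 : Filter.Tendsto (fun n => T (y n)) Filter.atTop (nhds (T z)) :=
      (hTc.tendsto z).comp hz
    have h1' : Filter.Tendsto (fun n => T (y n)) Filter.atTop (nhds (f z)) := by
      simpa [heq] using h1
    exact tendsto_nhds_unique h1' h2
  set w : X := T z with hw
  have hfw : f w = T w := by rw [hw, hcomm, hfz]
  have hTww : T w = w := by
    have h := hcontr z w
    rw [hfz, hfw] at h
    have hd : dist w (T w) = dist (T z) (T w) := by rw [hw]
    have hdc : dist (T w) (T z) = dist (T z) (T w) := dist_comm _ _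
    have hnn : 0 ≤ dist (T z) (T w) := dist_nonneg
    have : dist (T z) (T w) = 0 := by
      simp only [dist_self] at h
      nlinarith [dist_comm (T w) w, show dist (T z) w = 0 by rw [hw, dist_self]]
    have : dist w (T w) = 0 := by rw [hd, this]
    exact (dist_eq_zero.mp this).symm
  have hfww : f w = w := by rw [hfw, hTww]
  refine ⟨w, ⟨hfww, hTww⟩, ?_⟩
  rintro v ⟨hfv, hTv⟩
  have h := hcontr v w
  rw [hfv, hTv, hfww, hTww] at h
  simp only [dist_self] at h
  have hnn : 0 ≤ dist v w := dist_nonneg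
  have hdc : dist w v = dist v w := dist_comm _ _
  have : dist v w = 0 := by nlinarith
  exact dist_eq_zero.mp this
end

section
/- Let T and f be self-maps of a complete metric space (X,d) with T(X) ⊆ f(X), suppose the pair (T,f) is compatible, and suppose there is r ∈ [0,1) such that for all x, y ∈ X, d(Tx,Ty) ≤ r·max{ d(fx,fy), d(Tx,fx), d(Ty,fy), (1/2)[d(Tx,fy) + d(Ty,fx)] }. If either T or f is continuous, then for each x_0 ∈ X any sequence {x_n} with y_n = Tx_n = f x_{n+1} for n = 0,1,2,... yields a Cauchy sequence {y_n} in X converging to some z ∈ X, and z is the unique common fixed point of T and f. -/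
/-!
The iterates `yₙ = T xₙ` satisfy `d(yₙ₊₁, yₙ₊₂) ≤ r · d(yₙ, yₙ₊₁)`, because in the contractive
maximum the term `d(yₙ, yₙ₊₂)/2` is at most `max (d(yₙ, yₙ₊₁)) (d(yₙ₊₁, yₙ₊₂))`;
so `(yₙ)` is Cauchy with a limit `z`, and `T xₙ₊₁ → z`, `f xₙ₊₁ → z`. Passing to the limit in the
contractive condition shows that two sequences along which `T` and `f` have a common limit have
the same limit. With `T` continuous, compatibility turns `T xₙ₊₁` into such a sequence with limit
`T z`, whence `T z = z`; writing `z = f v` gives `T v = z`, and compatibility at the coincidence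
point `v` gives `f z = z`. With `f` continuous one gets `f z = z` first, then `T z = z`.
Uniqueness is the contractive condition at two common fixed points.
-/

open Filter Topology Function

/-- Two self-maps `T` and `f` of a metric space are *compatible* if
`d(f(T xₙ), T(f xₙ)) → 0` whenever `f xₙ → t` and `T xₙ → t` for some `t`. -/
def CompatiblePair {X : Type*} [MetricSpace X] (T f : X → X) : Prop :=
  ∀ (x : ℕ → X) (t : X),
    Filter.Tendsto (fun n => f (x n)) Filter.atTop (nhds t) →
    Filter.Tendsto (fun n => T (x n)) Filter.atTop (nhds t) →
    Filter.Tendsto (fun n => dist (f (T (x n))) (T (f (x n)))) Filter.atTop (nhds 0)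

theorem CompatiblePair.comm_of_eq {X : Type*} [MetricSpace X] {T f : X → X}
    (h : CompatiblePair T f) {v : X} (hv : f v = T v) : f (T v) = T (f v) := by
  have hlim := h (fun _ => v) (T v) (tendsto_const_nhds_iff.mpr hv) tendsto_const_nhds
  exact dist_eq_zero.mp (tendsto_const_nhds_iff.mp hlim)

section QuasiContraction

variable {X : Type*} [MetricSpace X]

/-- With `a = T x`, `b = T y`, `c = f x`, `d = f y` this is the maximum in the contractive
condition. -/
noncomputable def quasiMax (a b c d : X) : ℝ :=
  max (max (dist c d) (dist a c)) (max (dist b d) ((dist a d + dist b c) / 2))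

def IsQuasiContraction (T f : X → X) (r : ℝ) : Prop :=
  ∀ x y, dist (T x) (T y) ≤ r * quasiMax (T x) (T y) (f x) (f y)

theorem quasiMax_self_self (a b : X) : quasiMax a b a b = dist a b := by
  simp only [quasiMax, dist_self, dist_comm b a, add_self_div_two, max_self,
    max_eq_left (dist_nonneg (x := a) (y := b)), max_eq_right (dist_nonneg (x := a) (y := b))]

theorem quasiMax_left_self (a b : X) : quasiMax a b b b = dist a b := by
  have h : dist a b / 2 ≤ dist a b := half_le_self dist_nonneg
  simp only [quasiMax, dist_self, add_zero, max_eq_right (dist_nonneg (x := a) (y := b)),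
    max_eq_right (div_nonneg (dist_nonneg (x := a) (y := b)) zero_le_two), max_eq_left h]

theorem quasiMax_le_max_dist (a b c : X) : quasiMax b c a b ≤ max (dist a b) (dist b c) := by
  have hca : dist c a ≤ dist a b + dist b c := by
    rw [dist_comm c a]; exact dist_triangle a b c
  simp only [quasiMax, dist_self, dist_comm b a, dist_comm c b, max_self, zero_add]
  refine max_le (le_max_left _ _) (max_le (le_max_right _ _) ?_)
  linarith [le_max_left (dist a b) (dist b c), le_max_right (dist a b) (dist b c)]

theorem eq_of_dist_le_mul_dist {r : ℝ} (hr1 : r < 1) {a b : X} (h : dist a b ≤ r * dist a b) :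
    a = b :=
  dist_le_zero.mp (by nlinarith [dist_nonneg (x := a) (y := b)])

theorem dist_le_mul_of_le_quasiMax {r : ℝ} (hr0 : 0 ≤ r) (hr1 : r < 1) {a b c : X}
    (h : dist b c ≤ r * quasiMax b c a b) : dist b c ≤ r * dist a b := by
  have h' := h.trans (mul_le_mul_of_nonneg_left (quasiMax_le_max_dist a b c) hr0)
  rcases le_total (dist b c) (dist a b) with hle | hle
  · rwa [max_eq_left hle] at h'
  · rw [max_eq_right hle] at h'
    rw [eq_of_dist_le_mul_dist hr1 h', dist_self]
    exact mul_nonneg hr0 dist_nonneg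

namespace IsQuasiContraction

variable {T f : X → X} {r : ℝ}

theorem dist_succ_le (hQ : IsQuasiContraction T f r) (hr0 : 0 ≤ r) (hr1 : r < 1)
    {x : ℕ → X} (hx : ∀ n, T (x n) = f (x (n + 1))) (n : ℕ) :
    dist (T (x (n + 1))) (T (x (n + 2))) ≤ r * dist (T (x n)) (T (x (n + 1))) := by
  have h := hQ (x (n + 1)) (x (n + 1 + 1))
  rw [← hx n, ← hx (n + 1)] at h
  exact dist_le_mul_of_le_quasiMax hr0 hr1 h

theorem cauchySeq (hQ : IsQuasiContraction T f r) (hr0 : 0 ≤ r) (hr1 : r < 1)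
    {x : ℕ → X} (hx : ∀ n, T (x n) = f (x (n + 1))) : CauchySeq (fun n => T (x n)) := by
  refine cauchySeq_of_le_geometric r (dist (T (x 0)) (T (x 1))) hr1 fun n => ?_
  induction n with
  | zero => simp
  | succ k ih =>
    calc dist (T (x (k + 1))) (T (x (k + 2)))
        ≤ r * dist (T (x k)) (T (x (k + 1))) := hQ.dist_succ_le hr0 hr1 hx k
      _ ≤ r * (dist (T (x 0)) (T (x 1)) * r ^ k) := mul_le_mul_of_nonneg_left ih hr0
      _ = dist (T (x 0)) (T (x 1)) * r ^ (k + 1) := by ring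

theorem dist_le_quasiMax_of_tendsto (hQ : IsQuasiContraction T f r) {p q : ℕ → X}
    {a b c d : X} (hTp : Tendsto (fun n => T (p n)) atTop (𝓝 a))
    (hTq : Tendsto (fun n => T (q n)) atTop (𝓝 b)) (hfp : Tendsto (fun n => f (p n)) atTop (𝓝 c))
    (hfq : Tendsto (fun n => f (q n)) atTop (𝓝 d)) :
    dist a b ≤ r * quasiMax a b c d :=
  le_of_tendsto_of_tendsto' (hTp.dist hTq)
    ((((hfp.dist hfq).max (hTp.dist hfp)).max
      ((hTq.dist hfq).max (((hTp.dist hfq).add (hTq.dist hfp)).div_const 2))).const_mul r)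
    fun n => hQ (p n) (q n)

theorem eq_of_tendsto_coincidences (hQ : IsQuasiContraction T f r) (hr1 : r < 1)
    {p q : ℕ → X} {a b : X} (hTp : Tendsto (fun n => T (p n)) atTop (𝓝 a))
    (hfp : Tendsto (fun n => f (p n)) atTop (𝓝 a)) (hTq : Tendsto (fun n => T (q n)) atTop (𝓝 b))
    (hfq : Tendsto (fun n => f (q n)) atTop (𝓝 b)) : a = b := by
  have h := hQ.dist_le_quasiMax_of_tendsto hTp hTq hfp hfq
  rw [quasiMax_self_self] at h
  exact eq_of_dist_le_mul_dist hr1 h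

theorem eq_of_tendsto_of_tendsto_coincidence (hQ : IsQuasiContraction T f r) (hr1 : r < 1)
    {p q : ℕ → X} {a b : X} (hTp : Tendsto (fun n => T (p n)) atTop (𝓝 a))
    (hfp : Tendsto (fun n => f (p n)) atTop (𝓝 b)) (hTq : Tendsto (fun n => T (q n)) atTop (𝓝 b))
    (hfq : Tendsto (fun n => f (q n)) atTop (𝓝 b)) : a = b := by
  have h := hQ.dist_le_quasiMax_of_tendsto hTp hTq hfp hfq
  rw [quasiMax_left_self] at h
  exact eq_of_dist_le_mul_dist hr1 h

theorem isFixedPt_of_continuous_left (hQ : IsQuasiContraction T f r) (hr1 : r < 1)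
    (hsub : Set.range T ⊆ Set.range f) (hcompat : CompatiblePair T f) (hT : Continuous T)
    {u : ℕ → X} {z : X} (hTu : Tendsto (fun n => T (u n)) atTop (𝓝 z))
    (hfu : Tendsto (fun n => f (u n)) atTop (𝓝 z)) : IsFixedPt T z ∧ IsFixedPt f z := by
  have hTfu : Tendsto (fun n => T (f (u n))) atTop (𝓝 (T z)) := (hT.tendsto z).comp hfu
  have hfTu : Tendsto (fun n => f (T (u n))) atTop (𝓝 (T z)) :=
    hTfu.congr_dist (by simpa only [dist_comm] using hcompat u z hfu hTu)
  have hTz : T z = z :=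
    hQ.eq_of_tendsto_coincidences hr1 ((hT.tendsto z).comp hTu) hfTu hTu hfu
  obtain ⟨v, hv⟩ := hsub ⟨z, hTz⟩
  have hTv : T v = z := hQ.eq_of_tendsto_of_tendsto_coincidence hr1 (p := fun _ => v)
    tendsto_const_nhds (tendsto_const_nhds_iff.mpr hv) hTu hfu
  have hcomm := hcompat.comm_of_eq (hv.trans hTv.symm)
  rw [hTv, hv, hTz] at hcomm
  exact ⟨hTz, hcomm⟩

theorem isFixedPt_of_continuous_right (hQ : IsQuasiContraction T f r) (hr1 : r < 1)
    (hcompat : CompatiblePair T f) (hf : Continuous f)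
    {u : ℕ → X} {z : X} (hTu : Tendsto (fun n => T (u n)) atTop (𝓝 z))
    (hfu : Tendsto (fun n => f (u n)) atTop (𝓝 z)) : IsFixedPt T z ∧ IsFixedPt f z := by
  have hfTu : Tendsto (fun n => f (T (u n))) atTop (𝓝 (f z)) := (hf.tendsto z).comp hTu
  have hTfu : Tendsto (fun n => T (f (u n))) atTop (𝓝 (f z)) :=
    hfTu.congr_dist (hcompat u z hfu hTu)
  have hfz : f z = z :=
    hQ.eq_of_tendsto_coincidences hr1 hTfu ((hf.tendsto z).comp hfu) hTu hfu
  have hTz : T z = z := hQ.eq_of_tendsto_of_tendsto_coincidence hr1 (p := fun _ => z)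
    tendsto_const_nhds (tendsto_const_nhds_iff.mpr hfz) hTu hfu
  exact ⟨hTz, hfz⟩

end IsQuasiContraction

end QuasiContraction

theorem babu_corollary_general
    {X : Type*} [MetricSpace X] [CompleteSpace X]
    (T f : X → X)
    (hsub : Set.range T ⊆ Set.range f)
    (hcompat : CompatiblePair T f)
    (r : ℝ) (hr0 : 0 ≤ r) (hr1 : r < 1)
    (hcontr : ∀ x y,
      dist (T x) (T y) ≤ r * max (max (dist (f x) (f y)) (dist (T x) (f x)))
        (max (dist (T y) (f y)) ((dist (T x) (f y) + dist (T y) (f x)) / 2)))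
    (hcont : Continuous T ∨ Continuous f) :
    ∀ x : ℕ → X, (∀ n, T (x n) = f (x (n + 1))) →
      CauchySeq (fun n => T (x n)) ∧
      ∃ z, Filter.Tendsto (fun n => T (x n)) Filter.atTop (nhds z) ∧
        T z = z ∧ f z = z ∧ ∀ w, T w = w → f w = w → w = z := by
  intro x hx
  have hQ : IsQuasiContraction T f r := hcontr
  have hcauchy := hQ.cauchySeq hr0 hr1 hx
  obtain ⟨z, hz⟩ := cauchySeq_tendsto_of_complete hcauchy
  have hTu : Tendsto (fun n => T (x (n + 1))) atTop (𝓝 z) := hz.comp (tendsto_add_atTop_nat 1)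
  have hfu : Tendsto (fun n => f (x (n + 1))) atTop (𝓝 z) := hz.congr hx
  obtain ⟨hTz, hfz⟩ : T z = z ∧ f z = z := hcont.elim
    (fun hT => hQ.isFixedPt_of_continuous_left hr1 hsub hcompat hT hTu hfu)
    (fun hf => hQ.isFixedPt_of_continuous_right hr1 hcompat hf hTu hfu)
  refine ⟨hcauchy, z, hz, hTz, hfz, fun w hTw hfw => ?_⟩
  have h := hQ w z
  rw [hTw, hfw, hTz, hfz, quasiMax_self_self] at h
  exact eq_of_dist_le_mul_dist hr1 h

/-- Babu et al., Corollary 4.2: for a compatible pair `(T,f)` on a complete metric space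
with `T(X) ⊆ f(X)`, the quasi-contraction condition, and `T` or `f` continuous, every
sequence with `y_n = T x_n = f x_{n+1}` is Cauchy and converges to the unique common
fixed point of `T` and `f`. -/
theorem babu_corollary
    {X : Type*} [MetricSpace X] [CompleteSpace X] [Nonempty X]
    (T f : X → X)
    (hsub : Set.range T ⊆ Set.range f)
    (hcompat : CompatiblePair T f)
    (r : ℝ) (hr0 : 0 ≤ r) (hr1 : r < 1)
    (hcontr : ∀ x y,
      dist (T x) (T y) ≤ r * max (max (dist (f x) (f y)) (dist (T x) (f x)))
        (max (dist (T y) (f y)) ((dist (T x) (f y) + dist (T y) (f x)) / 2)))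
    (hcont : Continuous T ∨ Continuous f) :
    ∀ x : ℕ → X, (∀ n, T (x n) = f (x (n + 1))) →
      CauchySeq (fun n => T (x n)) ∧
      ∃ z, Filter.Tendsto (fun n => T (x n)) Filter.atTop (nhds z) ∧
        T z = z ∧ f z = z ∧ ∀ w, T w = w → f w = w → w = z :=
  babu_corollary_general T f hsub hcompat r hr0 hr1 hcontr hcont
end

section
/- Let (X,d) be a complete metric space, let {T_n}_{n≥1} be a family of self-maps of X and let f be a continuous self-map of X such that for each n the pair (T_n, f) is compatible and T_n(X) ⊆ f(X). Suppose there exist constants a_1, a_2, a_3, a_4, a_5 ≥ 0 with a_1 + a_2 + a_3 + a_4 + a_5 < 1 such that for all indices i, j and all x, y ∈ X, d(T_i x, T_j y) ≤ a_1 d(T_i x, fx) + a_2 d(T_j y, fy) + a_3 d(T_i x, fy) + a_4 d(T_j y, fx) + a_5 d(fx, fy). Then there exists a unique point z ∈ X with fz = z and T_n z = z for every n. -/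
open Filter Topology Function

theorem exists_seq_apply_eq_apply_succ {X : Type*} [Nonempty X] {f T : X → X}
    (hsub : Set.range T ⊆ Set.range f) : ∃ x : ℕ → X, ∀ n, T (x n) = f (x (n + 1)) := by
  choose g hg using fun u => hsub ⟨u, rfl⟩
  refine ⟨fun n => g^[n] (Classical.arbitrary X), fun n => ?_⟩
  show T (g^[n] _) = f (g^[n + 1] _)
  rw [iterate_succ_apply', hg]

section

variable {X : Type*} [MetricSpace X]

def FiveConstantContraction (a₁ a₂ a₃ a₄ a₅ : ℝ) (f S T : X → X) : Prop :=
  ∀ x y, dist (S x) (T y) ≤ a₁ * dist (S x) (f x) + a₂ * dist (T y) (f y)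
    + a₃ * dist (S x) (f y) + a₄ * dist (T y) (f x) + a₅ * dist (f x) (f y)

theorem eq_of_dist_le_mul {x y : X} {c : ℝ} (hc : c < 1) (h : dist x y ≤ c * dist x y) :
    x = y :=
  dist_le_zero.1 (by nlinarith [dist_nonneg (x := x) (y := y)])

theorem cauchySeq_of_dist_succ_le_mul {y : ℕ → X} {k : ℝ} (hk₀ : 0 ≤ k) (hk₁ : k < 1)
    (h : ∀ n, dist (y (n + 1)) (y (n + 2)) ≤ k * dist (y n) (y (n + 1))) : CauchySeq y := by
  refine cauchySeq_of_le_geometric k (dist (y 0) (y 1)) hk₁ fun n => ?_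
  rw [mul_comm]
  exact le_geom (u := fun n => dist (y n) (y (n + 1))) hk₀ n fun m _ => h m

theorem CompatiblePair.tendsto_apply_comp {T f : X → X} (hTf : CompatiblePair T f)
    (hf : Continuous f) {x : ℕ → X} {t : X} (hfx : Tendsto (fun n => f (x n)) atTop (𝓝 t))
    (hTx : Tendsto (fun n => T (x n)) atTop (𝓝 t)) :
    Tendsto (fun n => T (f (x n))) atTop (𝓝 (f t)) :=
  ((hf.tendsto t).comp hTx).congr_dist (hTf x t hfx hTx)

namespace FiveConstantContraction

variable {a₁ a₂ a₃ a₄ a₅ : ℝ} {f S T : X → X}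

theorem dist_le_of_tendsto (h : FiveConstantContraction a₁ a₂ a₃ a₄ a₅ f S T)
    {u v : ℕ → X} {s p t q : X} (hSu : Tendsto (fun n => S (u n)) atTop (𝓝 s))
    (hfu : Tendsto (fun n => f (u n)) atTop (𝓝 p)) (hTv : Tendsto (fun n => T (v n)) atTop (𝓝 t))
    (hfv : Tendsto (fun n => f (v n)) atTop (𝓝 q)) :
    dist s t ≤ a₁ * dist s p + a₂ * dist t q + a₃ * dist s q + a₄ * dist t p + a₅ * dist p q :=
  le_of_tendsto_of_tendsto' (hSu.dist hTv)
    ((((((hSu.dist hfu).const_mul a₁).add ((hTv.dist hfv).const_mul a₂)).add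
      ((hSu.dist hfv).const_mul a₃)).add ((hTv.dist hfu).const_mul a₄)).add
      ((hfu.dist hfv).const_mul a₅))
    fun n => h (u n) (v n)

theorem dist_apply_le_of_apply_eq (h : FiveConstantContraction a₁ a₂ a₃ a₄ a₅ f T T)
    (h₃ : 0 ≤ a₃) (h₄ : 0 ≤ a₄) {p q : X} (hpq : T p = f q) :
    (2 - (a₁ + a₂ + a₃ + a₄)) * dist (f q) (T q)
      ≤ (a₁ + a₂ + a₃ + a₄ + 2 * a₅) * dist (f p) (f q) := by
  have hpq' := h p q
  have hqp := h q p
  rw [hpq, dist_self, dist_comm (T q) (f q), dist_comm (f q) (f p)] at hpq' hqp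
  have htri := dist_triangle (T q) (f q) (f p)
  rw [dist_comm (T q) (f q), dist_comm (f q) (f p)] at htri
  linarith [mul_le_mul_of_nonneg_left htri h₃, mul_le_mul_of_nonneg_left htri h₄]

theorem isFixedPt_of_isFixedPt (h : FiveConstantContraction a₁ a₂ a₃ a₄ a₅ f S T)
    (h₁₃ : a₁ + a₃ < 1) {z : X} (hfz : IsFixedPt f z) (hTz : IsFixedPt T z) : IsFixedPt S z := by
  have hzz := h z z
  rw [hfz.eq, hTz.eq, dist_self] at hzz
  exact eq_of_dist_le_mul h₁₃ (by linarith)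

theorem eq_of_isFixedPt (h : FiveConstantContraction a₁ a₂ a₃ a₄ a₅ f S T)
    (h₃₄₅ : a₃ + a₄ + a₅ < 1) {w z : X} (hfw : IsFixedPt f w) (hSw : IsFixedPt S w)
    (hfz : IsFixedPt f z) (hTz : IsFixedPt T z) : w = z := by
  have hwz := h w z
  rw [hfw.eq, hSw.eq, hfz.eq, hTz.eq, dist_self, dist_self, dist_comm z w] at hwz
  exact eq_of_dist_le_mul h₃₄₅ (by linarith)

theorem exists_isFixedPt_of_compatible [CompleteSpace X] [Nonempty X]
    (h : FiveConstantContraction a₁ a₂ a₃ a₄ a₅ f T T) (hf : Continuous f)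
    (hTf : CompatiblePair T f) (hsub : Set.range T ⊆ Set.range f)
    (h₁ : 0 ≤ a₁) (h₂ : 0 ≤ a₂) (h₃ : 0 ≤ a₃) (h₄ : 0 ≤ a₄) (h₅ : 0 ≤ a₅)
    (hsum : a₁ + a₂ + a₃ + a₄ + a₅ < 1) : ∃ z, IsFixedPt f z ∧ IsFixedPt T z := by
  obtain ⟨x, hx⟩ := exists_seq_apply_eq_apply_succ hsub
  set A := a₁ + a₂ + a₃ + a₄
  have hA : 0 < 2 - A := by linarith
  have hk₀ : 0 ≤ (A + 2 * a₅) / (2 - A) := by positivity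
  have hk₁ : (A + 2 * a₅) / (2 - A) < 1 := by rw [div_lt_one hA]; linarith
  have hcauchy : CauchySeq fun n => f (x n) := by
    refine cauchySeq_of_dist_succ_le_mul hk₀ hk₁ fun n => ?_
    rw [div_mul_eq_mul_div, le_div_iff₀ hA, mul_comm, ← hx (n + 1)]
    exact h.dist_apply_le_of_apply_eq h₃ h₄ (hx n)
  obtain ⟨z, hfx⟩ := cauchySeq_tendsto_of_complete hcauchy
  have hTx : Tendsto (fun n => T (x n)) atTop (𝓝 z) := by
    simpa only [hx, comp_def] using hfx.comp (tendsto_add_atTop_nat 1)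
  have hfz : IsFixedPt f z := by
    have hlim := h.dist_le_of_tendsto (hTf.tendsto_apply_comp hf hfx hTx)
      ((hf.tendsto z).comp hfx) hTx hfx
    rw [dist_self, dist_self, dist_comm z (f z)] at hlim
    exact eq_of_dist_le_mul (c := a₃ + a₄ + a₅) (by linarith) (by linarith)
  refine ⟨z, hfz, ?_⟩
  have hlim := h.dist_le_of_tendsto (u := fun _ => z) tendsto_const_nhds tendsto_const_nhds hTx hfx
  rw [hfz.eq, dist_self] at hlim
  exact eq_of_dist_le_mul (c := a₁ + a₃) (by linarith) (by linarith)

end FiveConstantContraction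

end

/-- Som's theorem: a family `{T n}` of self-maps of a complete metric space and a
continuous self-map `f`, each pair `(T n, f)` compatible with `T n (X) ⊆ f(X)`,
satisfying a five-constant contractive condition, have a unique common fixed point. -/
theorem som_common_fixed_point
    {X : Type*} [MetricSpace X] [CompleteSpace X] [Nonempty X]
    (T : ℕ → X → X) (f : X → X) (hfc : Continuous f)
    (hcompat : ∀ n, 1 ≤ n → CompatiblePair (T n) f)
    (hsub : ∀ n, 1 ≤ n → Set.range (T n) ⊆ Set.range f)
    (a₁ a₂ a₃ a₄ a₅ : ℝ)
    (h₁ : 0 ≤ a₁) (h₂ : 0 ≤ a₂) (h₃ : 0 ≤ a₃) (h₄ : 0 ≤ a₄) (h₅ : 0 ≤ a₅)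
    (hsum : a₁ + a₂ + a₃ + a₄ + a₅ < 1)
    (hcontr : ∀ i, 1 ≤ i → ∀ j, 1 ≤ j → ∀ x y,
      dist (T i x) (T j y) ≤ a₁ * dist (T i x) (f x) + a₂ * dist (T j y) (f y)
        + a₃ * dist (T i x) (f y) + a₄ * dist (T j y) (f x) + a₅ * dist (f x) (f y)) :
    ∃! z, f z = z ∧ ∀ n, 1 ≤ n → T n z = z := by
  have h : ∀ i, 1 ≤ i → ∀ j, 1 ≤ j → FiveConstantContraction a₁ a₂ a₃ a₄ a₅ f (T i) (T j) :=
    hcontr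
  obtain ⟨z, hfz, hT₁z⟩ := (h 1 le_rfl 1 le_rfl).exists_isFixedPt_of_compatible hfc
    (hcompat 1 le_rfl) (hsub 1 le_rfl) h₁ h₂ h₃ h₄ h₅ hsum
  have hTz : ∀ n, 1 ≤ n → T n z = z := fun n hn =>
    (h n hn 1 le_rfl).isFixedPt_of_isFixedPt (by linarith) hfz hT₁z
  refine ⟨z, ⟨hfz, hTz⟩, fun w ⟨hfw, hTw⟩ => ?_⟩
  exact (h 1 le_rfl 1 le_rfl).eq_of_isFixedPt (by linarith) hfw (hTw 1 le_rfl) hfz hT₁z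
end

section
/- Let T and f be self-maps of a metric space (X,d) with T(X) ⊆ f(X), and suppose there exists c_1 ∈ [0,1) such that for all x, y ∈ X, d(Tx,Ty) ≤ c_1·max{ d(Tx,fy), d(Ty,fx), d(fx,fy) }. If the pair (T,f) is weakly compatible and either T(X) or f(X) is a complete metric subspace, then T and f have a unique common fixed point in X. -/
/-!
Since `T(X) ⊆ f(X)` one can choose a Jungck sequence `f xₙ₊₁ = T xₙ`. The points `yₙ = f xₙ`
satisfy the quasi-contraction along the orbit. Bounding each distance among `y₀, …, yₙ` by
`d(y₀, y₁) + c · diam {y₀, …, yₙ}` shows that the orbit has diameter at most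
`D = d(y₀, y₁) / (1 - c)`; iterating the contraction, the tail from `n` on has diameter at most
`cⁿ D`, so `(yₙ)` is Cauchy. Its limit lies in `f(X)`, say it is `f u`, and passing to the limit
gives `T u = f u`. Weak compatibility then makes `T u` a common fixed point, and the contraction
at two common fixed points forces them to coincide.
-/

open Filter Topology

theorem IsComplete.exists_tendsto_of_eventually_mem {α β : Type*} [UniformSpace α] [Preorder β]
    {K : Set α} (hK : IsComplete K) {u : β → α} (hu : ∀ᶠ n in atTop, u n ∈ K)
    (hc : CauchySeq u) : ∃ v ∈ K, Tendsto u atTop (𝓝 v) :=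
  hK _ hc (tendsto_principal.mpr hu)

theorem eq_of_dist_le_mul_s14 {X : Type*} [MetricSpace X] {c : ℝ} (hc1 : c < 1) {a b : X}
    (h : dist a b ≤ c * dist a b) : a = b :=
  dist_le_zero.mp (by nlinarith [dist_nonneg (x := a) (y := b)])

theorem exists_seq_forall_apply_succ_eq {X : Type*} {T f : X → X}
    (hsub : Set.range T ⊆ Set.range f) (x₀ : X) : ∃ x : ℕ → X, ∀ n, f (x (n + 1)) = T (x n) := by
  choose g hg using fun a => hsub (Set.mem_range_self a)
  exact ⟨fun n => g^[n] x₀, fun n =>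
    (congrArg f (Function.iterate_succ_apply' g n x₀)).trans (hg _)⟩

/-- The quasi-contraction condition read along a Jungck sequence: `z (i + 1)` stands for `T xᵢ`
and `z i` for `f xᵢ`. -/
def QuasiContractiveSeq {α : Type*} [PseudoMetricSpace α] (c : ℝ) (z : ℕ → α) : Prop :=
  ∀ i j, dist (z (i + 1)) (z (j + 1)) ≤
    c * max (max (dist (z (i + 1)) (z j)) (dist (z (j + 1)) (z i))) (dist (z i) (z j))

namespace QuasiContractiveSeq

variable {α : Type*} [PseudoMetricSpace α] {c : ℝ} {z : ℕ → α}

theorem dist_succ_le (hz : QuasiContractiveSeq c z) (hc0 : 0 ≤ c) {i j : ℕ} {B : ℝ}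
    (h₁ : dist (z (i + 1)) (z j) ≤ B) (h₂ : dist (z (j + 1)) (z i) ≤ B)
    (h₃ : dist (z i) (z j) ≤ B) : dist (z (i + 1)) (z (j + 1)) ≤ c * B :=
  (hz i j).trans (mul_le_mul_of_nonneg_left (max_le (max_le h₁ h₂) h₃) hc0)

theorem dist_le (hz : QuasiContractiveSeq c z) (hc0 : 0 ≤ c) (hc1 : c < 1) (i j : ℕ) :
    dist (z i) (z j) ≤ dist (z 0) (z 1) / (1 - c) := by
  set n := max i j
  set s := Finset.range (n + 1) ×ˢ Finset.range (n + 1)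
  have hs : s.Nonempty := ⟨(0, 0), by simp [s]⟩
  set M := s.sup' hs fun p => dist (z p.1) (z p.2)
  have hM : ∀ a ≤ n, ∀ b ≤ n, dist (z a) (z b) ≤ M := fun a ha b hb =>
    Finset.le_sup' (fun p : ℕ × ℕ => dist (z p.1) (z p.2)) (b := (a, b)) (by simp [s]; omega)
  have hM0 : 0 ≤ M := dist_nonneg.trans (hM 0 (Nat.zero_le n) 0 (Nat.zero_le n))
  have hcM : ∀ a b, a + 1 ≤ n → b + 1 ≤ n → dist (z (a + 1)) (z (b + 1)) ≤ c * M :=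
    fun a b ha hb => hz.dist_succ_le hc0 (hM (a + 1) ha b (by omega)) (hM (b + 1) hb a (by omega))
      (hM a (by omega) b (by omega))
  have hMle : M ≤ dist (z 0) (z 1) + c * M := by
    refine Finset.sup'_le hs _ ?_
    rintro ⟨a, b⟩ hab
    simp only [s, Finset.mem_product, Finset.mem_range] at hab
    rcases a with _ | a <;> rcases b with _ | b
    · rw [dist_self]
      exact add_nonneg dist_nonneg (mul_nonneg hc0 hM0)
    · calc dist (z 0) (z (b + 1)) ≤ dist (z 0) (z 1) + dist (z (0 + 1)) (z (b + 1)) :=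
            dist_triangle _ _ _
        _ ≤ dist (z 0) (z 1) + c * M := by gcongr; exact hcM 0 b (by omega) (by omega)
    · calc dist (z (a + 1)) (z 0) ≤ dist (z (a + 1)) (z (0 + 1)) + dist (z 1) (z 0) :=
            dist_triangle _ _ _
        _ ≤ c * M + dist (z 0) (z 1) := by
            rw [dist_comm (z 1)]; gcongr; exact hcM a 0 (by omega) (by omega)
        _ = dist (z 0) (z 1) + c * M := add_comm _ _
    · exact (hcM a b (by omega) (by omega)).trans (le_add_of_nonneg_left dist_nonneg)
  have hMD : M ≤ dist (z 0) (z 1) / (1 - c) := by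
    rw [le_div_iff₀ (by linarith)]
    linarith
  exact (hM i (le_max_left i j) j (le_max_right i j)).trans hMD

theorem dist_le_pow_mul (hz : QuasiContractiveSeq c z) (hc0 : 0 ≤ c) (hc1 : c < 1)
    {n i j : ℕ} (hi : n ≤ i) (hj : n ≤ j) :
    dist (z i) (z j) ≤ c ^ n * (dist (z 0) (z 1) / (1 - c)) := by
  induction n generalizing i j with
  | zero => simpa using hz.dist_le hc0 hc1 i j
  | succ n ih =>
    obtain ⟨i, rfl⟩ : ∃ k, i = k + 1 := ⟨i - 1, by omega⟩
    obtain ⟨j, rfl⟩ : ∃ k, j = k + 1 := ⟨j - 1, by omega⟩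
    rw [pow_succ', mul_assoc]
    exact hz.dist_succ_le hc0 (ih (by omega) (by omega)) (ih (by omega) (by omega))
      (ih (by omega) (by omega))

theorem cauchySeq (hz : QuasiContractiveSeq c z) (hc0 : 0 ≤ c) (hc1 : c < 1) : CauchySeq z :=
  cauchySeq_of_le_geometric c _ hc1 fun n =>
    (hz.dist_le_pow_mul hc0 hc1 le_rfl n.le_succ).trans_eq (mul_comm _ _)

end QuasiContractiveSeq

def QuasiContractivePair {X : Type*} [MetricSpace X] (c : ℝ) (T f : X → X) : Prop :=
  ∀ x y, dist (T x) (T y) ≤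
    c * max (max (dist (T x) (f y)) (dist (T y) (f x))) (dist (f x) (f y))

namespace QuasiContractivePair

variable {X : Type*} [MetricSpace X] {c : ℝ} {T f : X → X}

theorem quasiContractiveSeq (h : QuasiContractivePair c T f) {x : ℕ → X}
    (hx : ∀ n, f (x (n + 1)) = T (x n)) : QuasiContractiveSeq c fun n => f (x n) := by
  intro i j
  simpa only [hx] using h (x i) (x j)

theorem apply_eq_of_tendsto (h : QuasiContractivePair c T f) (hc1 : c < 1) {x : ℕ → X}
    (hx : ∀ n, f (x (n + 1)) = T (x n)) {u : X}
    (hlim : Tendsto (fun n => f (x n)) atTop (𝓝 (f u))) : T u = f u := by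
  have hlimT : Tendsto (fun n => T (x n)) atTop (𝓝 (f u)) := by
    simpa only [hx] using (tendsto_add_atTop_iff_nat 1).mpr hlim
  have hle := le_of_tendsto_of_tendsto' (tendsto_const_nhds.dist hlimT)
    ((((tendsto_const_nhds.dist hlim).max (hlimT.dist tendsto_const_nhds)).max
      (tendsto_const_nhds.dist hlim)).const_mul c) fun n => h u (x n)
  simp only [dist_self, max_eq_left dist_nonneg] at hle
  exact eq_of_dist_le_mul_s14 hc1 hle

theorem apply_apply_eq_of_apply_eq (h : QuasiContractivePair c T f) (hc1 : c < 1)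
    (hwc : ∀ x, T x = f x → T (f x) = f (T x)) {u : X} (hu : T u = f u) :
    T (T u) = T u ∧ f (T u) = T u := by
  have hcomm : T (T u) = f (T u) := (congrArg T hu).trans (hwc u hu)
  have h' := h (T u) u
  rw [← hu, ← hcomm, dist_comm (T u) (T (T u)), max_self, max_self] at h'
  have hfix := eq_of_dist_le_mul_s14 hc1 h'
  exact ⟨hfix, hcomm ▸ hfix⟩

theorem eq_of_apply_eq_self (h : QuasiContractivePair c T f) (hc1 : c < 1) {z w : X}
    (hTz : T z = z) (hfz : f z = z) (hTw : T w = w) (hfw : f w = w) : z = w := by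
  have h' := h z w
  rw [hTz, hfz, hTw, hfw, dist_comm w z, max_self, max_self] at h'
  exact eq_of_dist_le_mul_s14 hc1 h'

end QuasiContractivePair

/-- Babu et al. (2004): self-maps `T`, `f` of a metric space with `T(X) ⊆ f(X)`,
a quasi-contractive condition with constant `c₁ ∈ [0,1)`, `(T,f)` weakly compatible,
and either `T(X)` or `f(X)` complete, have a unique common fixed point. -/
theorem babu_weakly_compatible
    {X : Type*} [MetricSpace X] [Nonempty X]
    (T f : X → X)
    (hsub : Set.range T ⊆ Set.range f)
    (c₁ : ℝ) (hc0 : 0 ≤ c₁) (hc1 : c₁ < 1)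
    (hcontr : ∀ x y,
      dist (T x) (T y) ≤ c₁ * max (max (dist (T x) (f y)) (dist (T y) (f x)))
        (dist (f x) (f y)))
    (hwc : ∀ x, T x = f x → T (f x) = f (T x))
    (hcomplete : IsComplete (Set.range T) ∨ IsComplete (Set.range f)) :
    ∃! z, T z = z ∧ f z = z := by
  have hTf : QuasiContractivePair c₁ T f := hcontr
  obtain ⟨x, hx⟩ := exists_seq_forall_apply_succ_eq hsub (Classical.arbitrary X)
  have hcauchy := (hTf.quasiContractiveSeq hx).cauchySeq hc0 hc1
  obtain ⟨_, ⟨u, rfl⟩, hlim⟩ : ∃ v ∈ Set.range f, Tendsto (fun n => f (x n)) atTop (𝓝 v) := by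
    rcases hcomplete with hT | hf
    · have hmem : ∀ᶠ n in atTop, f (x n) ∈ Set.range T :=
        (eventually_ge_atTop 1).mono fun n hn => by
          obtain ⟨k, rfl⟩ := Nat.exists_eq_add_of_le' hn
          exact ⟨x k, (hx k).symm⟩
      obtain ⟨v, hv, hlim⟩ := hT.exists_tendsto_of_eventually_mem hmem hcauchy
      exact ⟨v, hsub hv, hlim⟩
    · exact cauchySeq_tendsto_of_isComplete hf (fun n => ⟨x n, rfl⟩) hcauchy
  have hu := hTf.apply_eq_of_tendsto hc1 hx hlim
  obtain ⟨hTfix, hffix⟩ := hTf.apply_apply_eq_of_apply_eq hc1 hwc hu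
  exact ⟨T u, ⟨hTfix, hffix⟩, fun w ⟨hTw, hfw⟩ => hTf.eq_of_apply_eq_self hc1 hTw hfw hTfix hffix⟩
end

section
/- Let K be a nonempty subset of a metric space (X,d), let f and T be self-maps of K with T(K) ⊆ f(K). Suppose f and T are weakly compatible, there exists β ∈ [0,1) such that d(Tx,Ty) ≤ β·d(fx,fy) for all x, y ∈ K, and T(K) is a complete metric subspace. Then F(T) ∩ F(f) is a singleton. -/
/-!
Jungck's reduction to Banach's theorem. Since `T x` depends only on `f x`, the map
`S (f x) := T x` is well defined on `f(K)`; it is a `β`-contraction and maps the complete set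
`T(K) ⊆ f(K)` into itself, so it has a fixed point `w = f u = T u`. Weak compatibility at the
coincidence point `u` gives `T w = f w`, and the contraction inequality for `w, u` then forces
`T w = w`. Uniqueness of common fixed points is the contraction inequality once more.
-/

open Set Function

section

variable {X : Type*}

noncomputable def factorMap [Nonempty X] (T f : X → X) (K : Set X) : X → X :=
  fun y => T (invFunOn f K y)

lemma mapsTo_factorMap [Nonempty X] {K : Set X} {T f : X → X} (hsub : T '' K ⊆ f '' K) :
    MapsTo (factorMap T f K) (T '' K) (T '' K) :=
  fun _ hy => mem_image_of_mem T (invFunOn_mem (hsub hy))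

variable [MetricSpace X]

def WeaklyCompatible (T f : X → X) (K : Set X) : Prop :=
  ∀ x ∈ K, T x = f x → T (f x) = f (T x)

def IsRelContraction (T f : X → X) (K : Set X) (β : ℝ) : Prop :=
  ∀ x ∈ K, ∀ y ∈ K, dist (T x) (T y) ≤ β * dist (f x) (f y)

lemma eq_of_dist_le_mul_self {a b : X} {β : ℝ} (hβ : β < 1) (h : dist a b ≤ β * dist a b) :
    a = b :=
  dist_le_zero.1 (by nlinarith [dist_nonneg (x := a) (y := b)])

namespace IsRelContraction

variable {K : Set X} {T f : X → X} {β : ℝ}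

lemma apply_eq_of_apply_eq (hc : IsRelContraction T f K β) {x y : X} (hx : x ∈ K) (hy : y ∈ K)
    (hxy : f x = f y) : T x = T y :=
  dist_le_zero.1 <| by simpa [hxy] using hc x hx y hy

lemma factorMap_apply [Nonempty X] (hc : IsRelContraction T f K β) {x : X} (hx : x ∈ K) :
    factorMap T f K (f x) = T x :=
  hc.apply_eq_of_apply_eq (invFunOn_mem ⟨x, hx, rfl⟩) hx (invFunOn_eq ⟨x, hx, rfl⟩)

lemma contractingWith_factorMap [Nonempty X] (hc : IsRelContraction T f K β) (hβ0 : 0 ≤ β)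
    (hβ1 : β < 1) (hsub : T '' K ⊆ f '' K) :
    ContractingWith ⟨β, hβ0⟩ ((mapsTo_factorMap hsub).restrict (factorMap T f K) _ _) := by
  refine ⟨hβ1, LipschitzWith.of_dist_le_mul fun ⟨y, hy⟩ ⟨y', hy'⟩ => ?_⟩
  obtain ⟨x, hx, rfl⟩ := hsub hy
  obtain ⟨x', hx', rfl⟩ := hsub hy'
  simp only [Subtype.dist_eq, MapsTo.val_restrict_apply, hc.factorMap_apply hx,
    hc.factorMap_apply hx']
  exact hc x hx x' hx'

lemma exists_coincidence (hc : IsRelContraction T f K β) (hK : K.Nonempty) (hβ0 : 0 ≤ β)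
    (hβ1 : β < 1) (hsub : T '' K ⊆ f '' K) (hcomplete : IsComplete (T '' K)) :
    ∃ u ∈ K, T u = f u := by
  obtain ⟨x, hx⟩ := hK
  have : Nonempty X := ⟨x⟩
  obtain ⟨w, hw, hSw, -⟩ := (hc.contractingWith_factorMap hβ0 hβ1 hsub).exists_fixedPoint'
    hcomplete (mapsTo_factorMap hsub) (mem_image_of_mem T hx) (edist_ne_top _ _)
  exact ⟨invFunOn f K w, invFunOn_mem (hsub hw), hSw.eq.trans (invFunOn_eq (hsub hw)).symm⟩

lemma commonFixedPt_of_coincidence (hc : IsRelContraction T f K β) (hβ1 : β < 1)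
    (hwc : WeaklyCompatible T f K) (hT : MapsTo T K K) {u : X} (hu : u ∈ K) (hcoinc : T u = f u) :
    T (T u) = T u ∧ f (T u) = T u := by
  have hTf : T (T u) = f (T u) := by simpa only [← hcoinc] using hwc u hu hcoinc
  have hfix : T (T u) = T u := by
    refine eq_of_dist_le_mul_self hβ1 ?_
    simpa only [← hTf, ← hcoinc] using hc (T u) (hT hu) u hu
  exact ⟨hfix, hTf ▸ hfix⟩

lemma eq_of_common_fixedPt (hc : IsRelContraction T f K β) (hβ1 : β < 1) {z w : X}
    (hz : z ∈ K) (hw : w ∈ K) (hTz : T z = z) (hfz : f z = z) (hTw : T w = w) (hfw : f w = w) :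
    z = w :=
  eq_of_dist_le_mul_self hβ1 <| by simpa only [hTz, hfz, hTw, hfw] using hc z hz w hw

end IsRelContraction

end

theorem al_thagafi_shahzad_general
    {X : Type*} [MetricSpace X] (K : Set X) (hK : K.Nonempty)
    (T f : X → X)
    (hT : Set.MapsTo T K K)
    (hsub : T '' K ⊆ f '' K)
    (hwc : ∀ x ∈ K, T x = f x → T (f x) = f (T x))
    (β : ℝ) (hβ0 : 0 ≤ β) (hβ1 : β < 1)
    (hcontr : ∀ x ∈ K, ∀ y ∈ K, dist (T x) (T y) ≤ β * dist (f x) (f y))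
    (hcomplete : IsComplete (T '' K)) :
    ∃! z, z ∈ K ∧ T z = z ∧ f z = z := by
  have hc : IsRelContraction T f K β := hcontr
  obtain ⟨u, hu, hcoinc⟩ := hc.exists_coincidence hK hβ0 hβ1 hsub hcomplete
  obtain ⟨hTw, hfw⟩ := hc.commonFixedPt_of_coincidence hβ1 hwc hT hu hcoinc
  exact ⟨T u, ⟨hT hu, hTw, hfw⟩, fun z ⟨hz, hTz, hfz⟩ =>
    hc.eq_of_common_fixedPt hβ1 hz (hT hu) hTz hfz hTw hfw⟩

/-- Al-Thagafi and Shahzad, Theorem 2.1: for self-maps `f`, `T` of a subset `K` of a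
metric space with `T(K) ⊆ f(K)`, `f` and `T` weakly compatible, `T` an `f`-contraction,
and `T(K)` complete, `F(T) ∩ F(f)` is a singleton. -/
theorem al_thagafi_shahzad
    {X : Type*} [MetricSpace X] (K : Set X) (hK : K.Nonempty)
    (T f : X → X)
    (hT : Set.MapsTo T K K) (hf : Set.MapsTo f K K)
    (hsub : T '' K ⊆ f '' K)
    (hwc : ∀ x ∈ K, T x = f x → T (f x) = f (T x))
    (β : ℝ) (hβ0 : 0 ≤ β) (hβ1 : β < 1)
    (hcontr : ∀ x ∈ K, ∀ y ∈ K, dist (T x) (T y) ≤ β * dist (f x) (f y))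
    (hcomplete : IsComplete (T '' K)) :
    ∃! z, z ∈ K ∧ T z = z ∧ f z = z :=
  al_thagafi_shahzad_general K hK T f hT hsub hwc β hβ0 hβ1 hcontr hcomplete
end
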